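/- arXiv:1704.07788 — 12 statements merged into one kernel-verified Lean document; each statement's English description precedes it below -/
import Mathlib

section
/- Let a < b be real numbers and let r : (a,b) → ℝ be twice differentiable with 0 < r(t) < 1 for all t ∈ (a,b), satisfying the catenoid profile equation 4·r(t)·r''(t) − 4·r'(t)² − (1 − r(t)⁴) = 0 on (a,b). Then the function t ↦ (1−r(t)²)²/(4 r(t)²) + (r'(t)/r(t))² is constant on (a,b); moreover, if κ ≥ 0 denotes the nonnegative square root of that constant value, then r(t) ≥ √(1+κ²) − κ for every t ∈ (a,b). -/
/-!
Along any curve, `E = (1 - r²)² / (4 r²) + (r' / r)²` has derivative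
`r' (4 r r'' - 4 r'² - (1 - r⁴)) / (2 r³)`, so on a solution of the profile equation `E` is
constant on the interval; this constant is `κ²`. Dropping `(r' / r)²` gives `1 - r² ≤ 2 κ r`,
i.e. `1 + κ² ≤ (r + κ)²`.
-/

open Set

noncomputable def catenoidEnergy (x v : ℝ) : ℝ := (1 - x ^ 2) ^ 2 / (4 * x ^ 2) + (v / x) ^ 2

lemma catenoidEnergy_nonneg (x v : ℝ) : 0 ≤ catenoidEnergy x v := by
  unfold catenoidEnergy
  positivity

lemma hasDerivAt_catenoidEnergy_zero {r r' : ℝ → ℝ} {r'' t : ℝ}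
    (hr : HasDerivAt r (r' t) t) (hr' : HasDerivAt r' r'' t) (hne : r t ≠ 0)
    (hode : 4 * r t * r'' - 4 * r' t ^ 2 - (1 - r t ^ 4) = 0) :
    HasDerivAt (fun u ↦ catenoidEnergy (r u) (r' u)) 0 t := by
  refine ((((hasDerivAt_const t (1 : ℝ)).sub (hr.pow 2)).pow 2).div
    ((hr.pow 2).const_mul 4) (by simp [hne])).add ((hr'.div hr hne).pow 2) |>.congr_deriv ?_
  simp only [Pi.sub_apply, Pi.pow_apply, Pi.div_apply, Nat.cast_ofNat, Nat.reduceSub, pow_one]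
  field_simp
  linear_combination 2 * r' t * hode

lemma sqrt_one_add_sq_sub_le_of_catenoidEnergy_le {x v κ : ℝ} (hx : 0 < x) (hκ : 0 ≤ κ)
    (h : catenoidEnergy x v ≤ κ ^ 2) : √(1 + κ ^ 2) - κ ≤ x := by
  have hsq : (1 - x ^ 2) ^ 2 ≤ (2 * x * κ) ^ 2 := by
    have : (1 - x ^ 2) ^ 2 / (4 * x ^ 2) ≤ κ ^ 2 :=
      (le_add_of_nonneg_right (sq_nonneg (v / x))).trans h
    rw [div_le_iff₀ (by positivity)] at this
    linarith
  have hlin : 1 - x ^ 2 ≤ 2 * x * κ := (abs_le_of_sq_le_sq' hsq (by positivity)).2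
  rw [sub_le_iff_le_add, Real.sqrt_le_left (by positivity)]
  nlinarith

theorem catenoid_first_integral_general
    (a b : ℝ) (r r' r'' : ℝ → ℝ)
    (hderiv : ∀ t ∈ Set.Ioo a b, HasDerivAt r (r' t) t)
    (hderiv' : ∀ t ∈ Set.Ioo a b, HasDerivAt r' (r'' t) t)
    (hr : ∀ t ∈ Set.Ioo a b, 0 < r t ∧ r t < 1)
    (hode : ∀ t ∈ Set.Ioo a b,
      4 * r t * r'' t - 4 * (r' t) ^ 2 - (1 - (r t) ^ 4) = 0) :
    ∃ C : ℝ,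
      (∀ t ∈ Set.Ioo a b,
        (1 - (r t) ^ 2) ^ 2 / (4 * (r t) ^ 2) + (r' t / r t) ^ 2 = C) ∧
      (∀ t ∈ Set.Ioo a b,
        Real.sqrt (1 + Real.sqrt C ^ 2) - Real.sqrt C ≤ r t) := by
  have hE : ∀ t ∈ Ioo a b, HasDerivAt (fun u ↦ catenoidEnergy (r u) (r' u)) 0 t := fun t ht ↦
    hasDerivAt_catenoidEnergy_zero (hderiv t ht) (hderiv' t ht) (hr t ht).1.ne' (hode t ht)
  obtain ⟨C, hC⟩ := isOpen_Ioo.exists_is_const_of_deriv_eq_zero isPreconnected_Ioo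
    (fun t ht ↦ (hE t ht).differentiableAt.differentiableWithinAt)
    (fun t ht ↦ (hE t ht).deriv)
  refine ⟨C, hC, fun t ht ↦ ?_⟩
  have hC_nonneg : 0 ≤ C := hC t ht ▸ catenoidEnergy_nonneg _ _
  exact sqrt_one_add_sq_sub_le_of_catenoidEnergy_le (hr t ht).1 (Real.sqrt_nonneg C)
    ((hC t ht).trans_le (Real.sq_sqrt hC_nonneg).ge)

/-- First integral of the catenoid profile equation and neck lower bound. -/
theorem catenoid_first_integral
    (a b : ℝ) (hab : a < b) (r r' r'' : ℝ → ℝ)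
    (hderiv : ∀ t ∈ Set.Ioo a b, HasDerivAt r (r' t) t)
    (hderiv' : ∀ t ∈ Set.Ioo a b, HasDerivAt r' (r'' t) t)
    (hr : ∀ t ∈ Set.Ioo a b, 0 < r t ∧ r t < 1)
    (hode : ∀ t ∈ Set.Ioo a b,
      4 * r t * r'' t - 4 * (r' t) ^ 2 - (1 - (r t) ^ 4) = 0) :
    ∃ C : ℝ,
      (∀ t ∈ Set.Ioo a b,
        (1 - (r t) ^ 2) ^ 2 / (4 * (r t) ^ 2) + (r' t / r t) ^ 2 = C) ∧
      (∀ t ∈ Set.Ioo a b,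
        Real.sqrt (1 + Real.sqrt C ^ 2) - Real.sqrt C ≤ r t) :=
  catenoid_first_integral_general a b r r' r'' hderiv hderiv' hr hode
end

section
/- For every κ > 0 there exist h ∈ (0, π/2) and a function r : [−h,h] → ℝ which is twice continuously differentiable on [−h,h], such that: r(−h) = r(h) = 1; 0 < r(t) < 1 for all t ∈ (−h,h); r(−t) = r(t) for all t; r(0) = √(1+κ²) − κ; r satisfies 4·r(t)·r''(t) − 4·r'(t)² − (1 − r(t)⁴) = 0 on (−h,h); and (1−r(t)²)²/(4 r(t)²) + (r'(t)/r(t))² = κ² for all t ∈ (−h,h). -/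
/-!
Writing `r = e^{-w}`, the first integral becomes `sinh² w + w'² = κ²`, and the substitution
`sinh w = κ cos φ` turns it into `φ' = √(1 + κ² cos² φ)`, an equation with a smooth, positive and
bounded right-hand side. Its solution with `φ(0) = 0` is the inverse of
`t(φ) = ∫₀^φ (1 + κ² cos² s)^{-1/2} ds`, and solving `(1 - r²)/(2r) = κ cos φ` for `r > 0` gives
the profile `r = √(1 + κ² cos² φ) - κ cos φ`. It equals `1` exactly when `cos φ = 0`, i.e. at
`t = ±h` with `h = t(π/2)`, and `h < π/2` because the integrand is `< 1` away from `π/2`.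
Along the solution `r' = κ r sin φ`, so the catenoid equation and its first integral reduce to
algebraic identities in `φ`.
-/

open Set Filter Real

theorem surjective_of_pos_le_hasDerivAt {f f' : ℝ → ℝ} {m : ℝ} (hf : ∀ x, HasDerivAt f (f' x) x)
    (hm : 0 < m) (hf' : ∀ x, m ≤ f' x) : Function.Surjective f := by
  have hgrow : ∀ ⦃x y⦄, x ≤ y → m * (y - x) ≤ f y - f x :=
    mul_sub_le_image_sub_of_le_deriv (fun x => (hf x).differentiableAt)
      (fun x => (hf x).deriv ▸ hf' x)
  refine (continuous_iff_continuousAt.2 fun x => (hf x).continuousAt).surjective ?_ ?_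
  · refine tendsto_atTop_mono' _ ((eventually_ge_atTop 0).mono fun x hx => ?_)
      (tendsto_atTop_add_const_left _ (f 0) (tendsto_id.const_mul_atTop hm))
    dsimp only [id]
    linarith [hgrow hx]
  · refine tendsto_atBot_mono' _ ((eventually_le_atBot 0).mono fun x hx => ?_)
      (tendsto_atBot_add_const_left _ (f 0) (tendsto_id.const_mul_atBot hm))
    dsimp only [id]
    linarith [hgrow hx]

namespace Catenoid

noncomputable def speed (κ φ : ℝ) : ℝ := √(1 + (κ * cos φ) ^ 2)

noncomputable def time (κ φ : ℝ) : ℝ := ∫ s in (0)..φ, (speed κ s)⁻¹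

noncomputable def profile (κ φ : ℝ) : ℝ := speed κ φ - κ * cos φ

noncomputable def profileDeriv (κ φ : ℝ) : ℝ := κ * profile κ φ * sin φ

noncomputable def profileDeriv2 (κ φ : ℝ) : ℝ :=
  κ * (κ * sin φ ^ 2 + cos φ * speed κ φ) * profile κ φ

variable (κ : ℝ)

lemma speed_pos (φ : ℝ) : 0 < speed κ φ := Real.sqrt_pos.2 (by positivity)

lemma speed_sq (φ : ℝ) : speed κ φ ^ 2 = 1 + (κ * cos φ) ^ 2 := Real.sq_sqrt (by positivity)

lemma one_le_speed (φ : ℝ) : 1 ≤ speed κ φ := Real.one_le_sqrt.2 (by nlinarith)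

lemma one_lt_speed_zero (hκ : κ ≠ 0) : 1 < speed κ 0 := by
  rw [speed, cos_zero, mul_one, Real.lt_sqrt zero_le_one]
  nlinarith [pow_pos (abs_pos.2 hκ) 2, sq_abs κ]

lemma speed_le (φ : ℝ) : speed κ φ ≤ √(1 + κ ^ 2) := by
  refine Real.sqrt_le_sqrt ?_
  rw [mul_pow]
  nlinarith [cos_sq_le_one φ, sq_nonneg κ]

lemma speed_neg (φ : ℝ) : speed κ (-φ) = speed κ φ := by rw [speed, speed, cos_neg]

lemma continuous_speed : Continuous (speed κ) := by unfold speed; fun_prop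

lemma hasDerivAt_speed (φ : ℝ) :
    HasDerivAt (speed κ) (-(κ ^ 2 * cos φ * sin φ) / speed κ φ) φ := by
  have hinner : HasDerivAt (fun s => 1 + (κ * cos s) ^ 2) (-(2 * κ ^ 2 * cos φ * sin φ)) φ :=
    ((((hasDerivAt_cos φ).const_mul κ).fun_pow 2).const_add 1).congr_deriv (by push_cast; ring)
  refine (hinner.sqrt (by positivity)).congr_deriv ?_
  rw [← speed]
  field_simp

lemma hasDerivAt_time (φ : ℝ) : HasDerivAt (time κ) (speed κ φ)⁻¹ φ :=
  ((continuous_speed κ).inv₀ fun s => (speed_pos κ s).ne').integral_hasStrictDerivAt 0 φ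
    |>.hasDerivAt

lemma time_zero : time κ 0 = 0 := intervalIntegral.integral_same

lemma time_neg (φ : ℝ) : time κ (-φ) = -time κ φ := by
  simp only [time]
  rw [← intervalIntegral.integral_symm, ← neg_zero, ← intervalIntegral.integral_comp_neg]
  simp only [speed_neg, neg_zero]

lemma strictMono_time : StrictMono (time κ) :=
  strictMono_of_hasDerivAt_pos (hasDerivAt_time κ) fun φ => inv_pos.2 (speed_pos κ φ)

lemma surjective_time : Function.Surjective (time κ) :=
  surjective_of_pos_le_hasDerivAt (hasDerivAt_time κ) (by positivity)
    fun φ => inv_anti₀ (speed_pos κ φ) (speed_le κ φ)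

noncomputable def angle : ℝ ≃o ℝ :=
  ((strictMono_time κ).orderIsoOfSurjective _ (surjective_time κ)).symm

lemma time_angle (t : ℝ) : time κ (angle κ t) = t :=
  ((strictMono_time κ).orderIsoOfSurjective _ (surjective_time κ)).apply_symm_apply t

lemma angle_time (φ : ℝ) : angle κ (time κ φ) = φ :=
  ((strictMono_time κ).orderIsoOfSurjective _ (surjective_time κ)).symm_apply_apply φ

lemma angle_zero : angle κ 0 = 0 := by simpa [time_zero] using angle_time κ 0

lemma angle_neg (t : ℝ) : angle κ (-t) = -angle κ t := by
  conv_lhs => rw [← time_angle κ t, ← time_neg, angle_time]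

lemma hasDerivAt_angle (t : ℝ) : HasDerivAt (angle κ) (speed κ (angle κ t)) t := by
  simpa using HasDerivAt.of_local_left_inverse (angle κ).continuous.continuousAt
    (hasDerivAt_time κ (angle κ t)) (inv_ne_zero (speed_pos κ _).ne')
    (Eventually.of_forall (time_angle κ))

lemma hasDerivAt_comp_angle {F F' : ℝ → ℝ} (hF : ∀ φ, HasDerivAt F (F' φ / speed κ φ) φ)
    (t : ℝ) : HasDerivAt (fun t => F (angle κ t)) (F' (angle κ t)) t :=
  ((hF _).comp t (hasDerivAt_angle κ t)).congr_deriv (div_mul_cancel₀ _ (speed_pos κ _).ne')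

noncomputable def halfLength : ℝ := time κ (π / 2)

lemma angle_halfLength : angle κ (halfLength κ) = π / 2 := angle_time κ _

lemma halfLength_pos : 0 < halfLength κ :=
  time_zero κ ▸ strictMono_time κ pi_div_two_pos

lemma halfLength_lt_pi_div_two (hκ : κ ≠ 0) : halfLength κ < π / 2 :=
  calc halfLength κ < ∫ _ in (0)..π / 2, (1 : ℝ) :=
        intervalIntegral.integral_lt_integral_of_continuousOn_of_le_of_exists_lt pi_div_two_pos
          ((continuous_speed κ).inv₀ fun s => (speed_pos κ s).ne').continuousOn
          continuousOn_const (fun φ _ => inv_le_one_of_one_le₀ (one_le_speed κ φ))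
          ⟨0, ⟨le_rfl, pi_div_two_pos.le⟩, inv_lt_one_of_one_lt₀ (one_lt_speed_zero κ hκ)⟩
    _ = π / 2 := by simp

lemma cos_angle_pos {t : ℝ} (ht : t ∈ Ioo (-halfLength κ) (halfLength κ)) :
    0 < cos (angle κ t) := by
  refine cos_pos_of_mem_Ioo ⟨?_, ?_⟩
  · simpa [angle_neg, angle_halfLength] using (angle κ).strictMono ht.1
  · simpa [angle_halfLength] using (angle κ).strictMono ht.2

lemma profile_pos (φ : ℝ) : 0 < profile κ φ := by
  have := speed_sq κ φ
  unfold profile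
  nlinarith [speed_pos κ φ]

lemma one_sub_profile_sq (φ : ℝ) : 1 - profile κ φ ^ 2 = 2 * (κ * cos φ) * profile κ φ := by
  unfold profile
  linear_combination (-1) * speed_sq κ φ

lemma profile_lt_one {φ : ℝ} (h : 0 < κ * cos φ) : profile κ φ < 1 := by
  nlinarith [one_sub_profile_sq κ φ, profile_pos κ φ, mul_pos h (profile_pos κ φ)]

lemma profile_neg (φ : ℝ) : profile κ (-φ) = profile κ φ := by
  rw [profile, profile, speed_neg, cos_neg]

lemma profile_zero : profile κ 0 = √(1 + κ ^ 2) - κ := by simp [profile, speed]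

lemma profile_pi_div_two : profile κ (π / 2) = 1 := by simp [profile, speed]

lemma hasDerivAt_profile (φ : ℝ) :
    HasDerivAt (profile κ) (profileDeriv κ φ / speed κ φ) φ :=
  ((hasDerivAt_speed κ φ).sub ((hasDerivAt_cos φ).const_mul κ)).congr_deriv (by
    have := speed_pos κ φ
    unfold profileDeriv profile
    field_simp
    ring)

lemma hasDerivAt_profileDeriv (φ : ℝ) :
    HasDerivAt (profileDeriv κ) (profileDeriv2 κ φ / speed κ φ) φ :=
  (((hasDerivAt_profile κ φ).const_mul κ).mul (hasDerivAt_sin φ)).congr_deriv (by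
    have := speed_pos κ φ
    unfold profileDeriv2 profileDeriv
    field_simp)

lemma continuous_profileDeriv2 : Continuous (profileDeriv2 κ) := by
  unfold profileDeriv2 profile speed; fun_prop

lemma profile_firstIntegral (φ : ℝ) :
    (1 - profile κ φ ^ 2) ^ 2 / (4 * profile κ φ ^ 2) + (profileDeriv κ φ / profile κ φ) ^ 2
      = κ ^ 2 := by
  have := (profile_pos κ φ).ne'
  rw [one_sub_profile_sq, profileDeriv]
  field_simp
  linear_combination 4 * κ ^ 2 * sin_sq_add_cos_sq φ

lemma profile_ode (φ : ℝ) :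
    4 * profile κ φ * profileDeriv2 κ φ - 4 * profileDeriv κ φ ^ 2 - (1 - profile κ φ ^ 4) = 0 := by
  unfold profileDeriv2 profileDeriv profile
  linear_combination (speed κ φ ^ 2 + 1 - (κ * cos φ) ^ 2) * speed_sq κ φ

end Catenoid

/-- Existence of the vertical catenoid profile with flux parameter κ > 0:
a profile `r` on `[-h,h]` with `h ∈ (0, π/2)`, symmetric, with boundary value 1,
neck radius `√(1+κ²) − κ`, satisfying the catenoid ODE and its first integral. -/
theorem catenoid_profile_exists (κ : ℝ) (hκ : 0 < κ) :
    ∃ h : ℝ, 0 < h ∧ h < Real.pi / 2 ∧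
    ∃ r r' r'' : ℝ → ℝ,
      (∀ t ∈ Set.Icc (-h) h, HasDerivWithinAt r (r' t) (Set.Icc (-h) h) t) ∧
      (∀ t ∈ Set.Icc (-h) h, HasDerivWithinAt r' (r'' t) (Set.Icc (-h) h) t) ∧
      ContinuousOn r'' (Set.Icc (-h) h) ∧
      r (-h) = 1 ∧ r h = 1 ∧
      (∀ t ∈ Set.Ioo (-h) h, 0 < r t ∧ r t < 1) ∧
      (∀ t ∈ Set.Icc (-h) h, r (-t) = r t) ∧
      r 0 = Real.sqrt (1 + κ ^ 2) - κ ∧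
      (∀ t ∈ Set.Ioo (-h) h,
        4 * r t * r'' t - 4 * (r' t) ^ 2 - (1 - (r t) ^ 4) = 0) ∧
      (∀ t ∈ Set.Ioo (-h) h,
        (1 - (r t) ^ 2) ^ 2 / (4 * (r t) ^ 2) + (r' t / r t) ^ 2 = κ ^ 2) := by
  open Catenoid in
  refine ⟨halfLength κ, halfLength_pos κ, halfLength_lt_pi_div_two κ hκ.ne',
    fun t => profile κ (angle κ t), fun t => profileDeriv κ (angle κ t),
    fun t => profileDeriv2 κ (angle κ t),
    fun t _ => (hasDerivAt_comp_angle κ (hasDerivAt_profile κ) t).hasDerivWithinAt,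
    fun t _ => (hasDerivAt_comp_angle κ (hasDerivAt_profileDeriv κ) t).hasDerivWithinAt,
    ((continuous_profileDeriv2 κ).comp (angle κ).continuous).continuousOn,
    by simp only [angle_neg, profile_neg, angle_halfLength, profile_pi_div_two],
    by simp only [angle_halfLength, profile_pi_div_two],
    fun t ht => ⟨profile_pos κ _, profile_lt_one κ (mul_pos hκ (cos_angle_pos κ ht))⟩,
    fun t _ => by simp only [angle_neg, profile_neg],
    by simp only [angle_zero, profile_zero],
    fun t _ => profile_ode κ _, fun t _ => profile_firstIntegral κ _⟩
end

section
/- Let r be a twice differentiable real-valued function on an open interval I with r(t) > 0 for all t ∈ I, satisfying 4·r(t)·r''(t) − 4·r'(t)² − (1 − r(t)⁴) = 0 on I. Then the function w := r'/r is twice differentiable on I and satisfies w''(t) + (1/2)·(1/r(t)² + r(t)²)·w(t) = 0 for all t ∈ I. -/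
/-!
Along a solution of the profile equation, `(r'/r)' = (r''r - r'²)/r² = (1/r² - r²)/4`, a function
of `r` alone; differentiating once more gives `-(1/2)(1/r² + r²) · r'/r`, since both `1/r²` and
`r²` have logarithmic derivative `∓2 r'/r`.
-/

section

variable {𝕜 : Type*} [NontriviallyNormedField 𝕜] [CharZero 𝕜]

theorem quotient_rule_eq_of_catenoid_profile {x x' x'' : 𝕜} (hx : x ≠ 0)
    (hode : 4 * x * x'' - 4 * x' ^ 2 - (1 - x ^ 4) = 0) :
    (x'' * x - x' * x') / x ^ 2 = (1 / x ^ 2 - x ^ 2) / 4 := by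
  have hnum : x'' * x - x' * x' = (1 - x ^ 4) / 4 := by linear_combination hode / 4
  rw [hnum]
  field_simp

theorem HasDerivAt.inv_sq_sub_sq_div_four {f : 𝕜 → 𝕜} {f' t : 𝕜} (hf : HasDerivAt f f' t)
    (ht : f t ≠ 0) :
    HasDerivAt (fun s => (1 / f s ^ 2 - f s ^ 2) / 4)
      (-(1 / 2) * (1 / f t ^ 2 + f t ^ 2) * (f' / f t)) t := by
  have hsq := hf.fun_pow 2
  have hinv := (hasDerivAt_const t (1 : 𝕜)).div hsq (pow_ne_zero 2 ht)
  refine ((hinv.sub hsq).div_const 4).congr_deriv ?_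
  field_simp
  ring

end

/-- The Jacobi field `r'/r` generated by vertical translations solves the
zeroth-mode Jacobi equation `w'' + (1/2)(1/r² + r²) w = 0` along any positive
solution of the catenoid profile equation. -/
theorem jacobi_field_vertical_translation
    (a b : ℝ) (r r' r'' : ℝ → ℝ)
    (hderiv : ∀ t ∈ Set.Ioo a b, HasDerivAt r (r' t) t)
    (hderiv' : ∀ t ∈ Set.Ioo a b, HasDerivAt r' (r'' t) t)
    (hr : ∀ t ∈ Set.Ioo a b, 0 < r t)
    (hode : ∀ t ∈ Set.Ioo a b,
      4 * r t * r'' t - 4 * (r' t) ^ 2 - (1 - (r t) ^ 4) = 0) :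
    ∃ w' w'' : ℝ → ℝ,
      (∀ t ∈ Set.Ioo a b, HasDerivAt (fun s => r' s / r s) (w' t) t) ∧
      (∀ t ∈ Set.Ioo a b, HasDerivAt w' (w'' t) t) ∧
      (∀ t ∈ Set.Ioo a b,
        w'' t + (1 / 2) * (1 / (r t) ^ 2 + (r t) ^ 2) * (r' t / r t) = 0) := by
  refine ⟨fun t => (1 / r t ^ 2 - r t ^ 2) / 4,
    fun t => -(1 / 2) * (1 / r t ^ 2 + r t ^ 2) * (r' t / r t), ?_, ?_, fun t _ => by ring⟩
  · intro t ht
    have hne := (hr t ht).ne'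
    exact ((hderiv' t ht).div (hderiv t ht) hne).congr_deriv
      (quotient_rule_eq_of_catenoid_profile hne (hode t ht))
  · intro t ht
    exact (hderiv t ht).inv_sq_sub_sq_div_four (hr t ht).ne'
end

section
/- Let r be a twice differentiable real-valued function on an open interval I with 0 < r(t) for all t ∈ I, satisfying 4·r(t)·r''(t) − 4·r'(t)² − (1 − r(t)⁴) = 0 on I, and let κ ≥ 0 be a constant such that (1−r(t)²)²/(4 r(t)²) + (r'(t)/r(t))² = κ² on I. Then the function φ := 1/r − r satisfies φ''(t) + ((1/2)·(1/r(t)² + r(t)²) − κ²)·φ(t) = 0 for all t ∈ I. -/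
/-!
Write `φ = 1/r − r`. Differentiating twice gives `φ'' = −r''/r² + 2r'²/r³ − r''`; eliminating `r''`
with the profile equation and `κ²` with the first integral leaves an identity of rational
functions in `r` and `r'`.
-/

section Derivatives

variable {𝕜 : Type*} [NontriviallyNormedField 𝕜]

theorem HasDerivAt.one_div_sub_self {f : 𝕜 → 𝕜} {f' x : 𝕜} (hf : HasDerivAt f f' x)
    (hx : f x ≠ 0) : HasDerivAt (fun s => 1 / f s - f s) (-f' / f x ^ 2 - f') x := by
  simpa only [one_div, neg_div] using (hf.fun_inv hx).fun_sub hf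

theorem HasDerivAt.neg_div_sq_sub_self {f f' : 𝕜 → 𝕜} {f'' x : 𝕜}
    (hf : HasDerivAt f (f' x) x) (hf' : HasDerivAt f' f'' x) (hx : f x ≠ 0) :
    HasDerivAt (fun s => -f' s / f s ^ 2 - f' s)
      (-f'' / f x ^ 2 + 2 * f' x ^ 2 / f x ^ 3 - f'') x := by
  have hsq : HasDerivAt (fun s => f s ^ 2) (2 * f x * f' x) x :=
    (hf.fun_pow 2).congr_deriv (by ring)
  refine ((hf'.fun_neg.div hsq (pow_ne_zero 2 hx)).sub hf').congr_deriv ?_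
  field_simp
  ring

end Derivatives

theorem catenoid_first_mode_jacobi_identity {K : Type*} [Field K] [CharZero K] {r r' r'' κ : K}
    (hr : r ≠ 0) (hode : 4 * r * r'' - 4 * r' ^ 2 - (1 - r ^ 4) = 0)
    (hfirst : (1 - r ^ 2) ^ 2 / (4 * r ^ 2) + (r' / r) ^ 2 = κ ^ 2) :
    (-r'' / r ^ 2 + 2 * r' ^ 2 / r ^ 3 - r'') + ((1 / 2) * (1 / r ^ 2 + r ^ 2) - κ ^ 2)
      * (1 / r - r) = 0 := by
  rw [← hfirst]
  field_simp
  linear_combination (-2 * (1 + r ^ 2)) * hode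

theorem jacobi_field_horizontal_dilation_general
    (a b : ℝ) (r r' r'' : ℝ → ℝ) (κ : ℝ)
    (hderiv : ∀ t ∈ Set.Ioo a b, HasDerivAt r (r' t) t)
    (hderiv' : ∀ t ∈ Set.Ioo a b, HasDerivAt r' (r'' t) t)
    (hr : ∀ t ∈ Set.Ioo a b, 0 < r t)
    (hode : ∀ t ∈ Set.Ioo a b,
      4 * r t * r'' t - 4 * (r' t) ^ 2 - (1 - (r t) ^ 4) = 0)
    (hfirst : ∀ t ∈ Set.Ioo a b,
      (1 - (r t) ^ 2) ^ 2 / (4 * (r t) ^ 2) + (r' t / r t) ^ 2 = κ ^ 2) :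
    ∃ φ' φ'' : ℝ → ℝ,
      (∀ t ∈ Set.Ioo a b, HasDerivAt (fun s => 1 / r s - r s) (φ' t) t) ∧
      (∀ t ∈ Set.Ioo a b, HasDerivAt φ' (φ'' t) t) ∧
      (∀ t ∈ Set.Ioo a b,
        φ'' t + ((1 / 2) * (1 / (r t) ^ 2 + (r t) ^ 2) - κ ^ 2)
          * (1 / r t - r t) = 0) :=
  ⟨fun t => -r' t / r t ^ 2 - r' t,
    fun t => -r'' t / r t ^ 2 + 2 * r' t ^ 2 / r t ^ 3 - r'' t,
    fun t ht => (hderiv t ht).one_div_sub_self (hr t ht).ne',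
    fun t ht => (hderiv t ht).neg_div_sq_sub_self (hderiv' t ht) (hr t ht).ne',
    fun t ht => catenoid_first_mode_jacobi_identity (hr t ht).ne' (hode t ht) (hfirst t ht)⟩

/-- The function `φ = 1/r − r` solves the first-mode Jacobi equation
`φ'' + ((1/2)(1/r² + r²) − κ²) φ = 0` along any positive solution of the
catenoid profile equation with first-integral constant κ². -/
theorem jacobi_field_horizontal_dilation
    (a b : ℝ) (r r' r'' : ℝ → ℝ) (κ : ℝ) (hκ : 0 ≤ κ)
    (hderiv : ∀ t ∈ Set.Ioo a b, HasDerivAt r (r' t) t)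
    (hderiv' : ∀ t ∈ Set.Ioo a b, HasDerivAt r' (r'' t) t)
    (hr : ∀ t ∈ Set.Ioo a b, 0 < r t)
    (hode : ∀ t ∈ Set.Ioo a b,
      4 * r t * r'' t - 4 * (r' t) ^ 2 - (1 - (r t) ^ 4) = 0)
    (hfirst : ∀ t ∈ Set.Ioo a b,
      (1 - (r t) ^ 2) ^ 2 / (4 * (r t) ^ 2) + (r' t / r t) ^ 2 = κ ^ 2) :
    ∃ φ' φ'' : ℝ → ℝ,
      (∀ t ∈ Set.Ioo a b, HasDerivAt (fun s => 1 / r s - r s) (φ' t) t) ∧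
      (∀ t ∈ Set.Ioo a b, HasDerivAt φ' (φ'' t) t) ∧
      (∀ t ∈ Set.Ioo a b,
        φ'' t + ((1 / 2) * (1 / (r t) ^ 2 + (r t) ^ 2) - κ ^ 2)
          * (1 / r t - r t) = 0) :=
  jacobi_field_horizontal_dilation_general a b r r' r'' κ hderiv hderiv' hr hode hfirst
end

section
/- Let h > 0, κ > 0, and let r : [−h,h] → ℝ be twice continuously differentiable with r(−h) = r(h) = 1 and 0 < r(t) < 1 for t ∈ (−h,h), satisfying 4·r·r'' − 4·(r')² − (1 − r⁴) = 0 on (−h,h) and (1−r²)²/(4r²) + (r'/r)² = κ² on (−h,h). Let n ≥ 2 be an integer. If u : [−h,h] → ℝ is continuous on [−h,h], twice differentiable on (−h,h), satisfies u''(t) + ((1/2)(1/r(t)² + r(t)²) − κ²n²)·u(t) = 0 on (−h,h) and u(−h) = u(h) = 0, then u is identically zero. -/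
/-!
The function `φ = 1/r - r` solves the `n = 1` mode equation (by the profile equation and the
first integral), is positive on `(-h, h)` and vanishes at `±h`. Suppose `u` solves the mode `n`
equation with Dirichlet data and is positive somewhere, and let `(a, b)` be a nodal interval of
`u`. The Wronskian `W = φ u' - φ' u` has `W' = κ² (n² - 1) φ u > 0` there, so it is strictly
increasing; but `W ≥ 0` near `a` and `W ≤ 0` near `b`: at an interior endpoint `W = φ u'` and `u'`
has the right sign, and at `±h` both `φ` and `u` vanish while `φ'` and `u'` stay bounded.
Applying this to `±u` gives `u = 0`.
-/

open Set Filter Topology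

def wronskian (f f' g g' : ℝ → ℝ) (t : ℝ) : ℝ := f t * g' t - f' t * g t

section Wronskian

variable {f f' f'' g g' g'' p q : ℝ → ℝ}

theorem hasDerivAt_wronskian {t : ℝ} (hf : HasDerivAt f (f' t) t)
    (hf' : HasDerivAt f' (f'' t) t) (hg : HasDerivAt g (g' t) t)
    (hg' : HasDerivAt g' (g'' t) t) :
    HasDerivAt (wronskian f f' g g') (f t * g'' t - f'' t * g t) t :=
  ((hf.mul hg').sub (hf'.mul hg)).congr_deriv (by ring)

theorem strictMonoOn_wronskian {a b : ℝ} (hpq : ∀ t ∈ Ioo a b, p t < q t)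
    (hfD : ∀ t ∈ Ioo a b, HasDerivAt f (f' t) t) (hfD' : ∀ t ∈ Ioo a b, HasDerivAt f' (f'' t) t)
    (hfeq : ∀ t ∈ Ioo a b, f'' t + q t * f t = 0) (hfpos : ∀ t ∈ Ioo a b, 0 < f t)
    (hgD : ∀ t ∈ Ioo a b, HasDerivAt g (g' t) t) (hgD' : ∀ t ∈ Ioo a b, HasDerivAt g' (g'' t) t)
    (hgeq : ∀ t ∈ Ioo a b, g'' t + p t * g t = 0) (hgpos : ∀ t ∈ Ioo a b, 0 < g t) :
    StrictMonoOn (wronskian f f' g g') (Ioo a b) := by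
  have hW : ∀ t ∈ Ioo a b, HasDerivAt (wronskian f f' g g') ((q t - p t) * (f t * g t)) t := by
    intro t ht
    refine (hasDerivAt_wronskian (hfD t ht) (hfD' t ht) (hgD t ht) (hgD' t ht)).congr_deriv ?_
    linear_combination f t * hgeq t ht - g t * hfeq t ht
  refine strictMonoOn_of_deriv_pos (convex_Ioo a b)
    (fun t ht => (hW t ht).continuousAt.continuousWithinAt) fun t ht => ?_
  rw [interior_Ioo] at ht
  rw [(hW t ht).deriv]
  exact mul_pos (sub_pos.2 (hpq t ht)) (mul_pos (hfpos t ht) (hgpos t ht))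

theorem tendsto_wronskian_zero {s : Set ℝ} {x C : ℝ} {l : Filter ℝ} (hl : l ≤ 𝓝[s] x)
    (hx : x ∈ s) (hf : ContinuousOn f s) (hf' : ContinuousOn f' s) (hfx : f x = 0)
    (hg : ContinuousOn g s) (hgx : g x = 0) (hg' : ∀ᶠ t in l, ‖g' t‖ ≤ C) :
    Tendsto (wronskian f f' g g') l (𝓝 0) := by
  have hf0 : Tendsto f l (𝓝 0) := hfx ▸ (hf x hx).tendsto.mono_left hl
  have hg0 : Tendsto g l (𝓝 0) := hgx ▸ (hg x hx).tendsto.mono_left hl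
  have hW := (hf0.zero_mul_isBoundedUnder_le (isBoundedUnder_of_eventually_le hg')).sub
    (isBoundedUnder_le_mul_tendsto_zero ((hf' x hx).tendsto.mono_left hl).norm.isBoundedUnder_le
      hg0)
  rwa [sub_zero] at hW

end Wronskian

theorem HasDerivAt.nonneg_of_pos_right {u : ℝ → ℝ} {d a b : ℝ} (hd : HasDerivAt u d a)
    (hua : u a = 0) (hab : a < b) (hpos : ∀ s ∈ Ioo a b, 0 < u s) : 0 ≤ d := by
  refine ge_of_tendsto (hd.tendsto_slope.mono_left (nhdsGT_le_nhdsNE a)) ?_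
  filter_upwards [Ioo_mem_nhdsGT hab] with s hs
  rw [slope_def_field, hua, sub_zero]
  exact div_nonneg (hpos s hs).le (sub_pos.2 hs.1).le

theorem HasDerivAt.nonpos_of_pos_left {u : ℝ → ℝ} {d a b : ℝ} (hd : HasDerivAt u d b)
    (hub : u b = 0) (hab : a < b) (hpos : ∀ s ∈ Ioo a b, 0 < u s) : d ≤ 0 := by
  refine le_of_tendsto (hd.tendsto_slope.mono_left (nhdsLT_le_nhdsNE b)) ?_
  filter_upwards [Ioo_mem_nhdsLT hab] with s hs
  rw [slope_def_field, hub, sub_zero]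
  exact div_nonpos_of_nonneg_of_nonpos (hpos s hs).le (sub_neg.2 hs.2).le

theorem MonotoneOn.le_of_tendsto_nhdsGT {f : ℝ → ℝ} {a b L s : ℝ} (hf : MonotoneOn f (Ioo a b))
    (hL : Tendsto f (𝓝[>] a) (𝓝 L)) (hs : s ∈ Ioo a b) : L ≤ f s :=
  le_of_tendsto hL <| by
    filter_upwards [Ioo_mem_nhdsGT hs.1] with x hx
    exact hf ⟨hx.1, hx.2.trans hs.2⟩ hs hx.2.le

theorem MonotoneOn.ge_of_tendsto_nhdsLT {f : ℝ → ℝ} {a b M s : ℝ} (hf : MonotoneOn f (Ioo a b))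
    (hM : Tendsto f (𝓝[<] b) (𝓝 M)) (hs : s ∈ Ioo a b) : f s ≤ M :=
  ge_of_tendsto hM <| by
    filter_upwards [Ioo_mem_nhdsLT hs.2] with x hx
    exact hf hs ⟨hs.1.trans hx.1, hx.2⟩ hx.1.le

theorem exists_nodal_interval {u : ℝ → ℝ} {α β t₀ : ℝ} (hu : ContinuousOn u (Icc α β))
    (huα : u α = 0) (huβ : u β = 0) (ht₀ : t₀ ∈ Icc α β) (hpos : 0 < u t₀) :
    ∃ a b, α ≤ a ∧ a < t₀ ∧ t₀ < b ∧ b ≤ β ∧ u a = 0 ∧ u b = 0 ∧ ∀ s ∈ Ioo a b, 0 < u s := by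
  set Z := Icc α β ∩ u ⁻¹' {0}
  have hZ : IsClosed Z := hu.preimage_isClosed_of_isClosed isClosed_Icc isClosed_singleton
  have hZa : BddAbove (Z ∩ Iic t₀) := ⟨t₀, fun _ hx => hx.2⟩
  have hZb : BddBelow (Z ∩ Ici t₀) := ⟨t₀, fun _ hx => hx.2⟩
  have hαβ : α ≤ β := ht₀.1.trans ht₀.2
  set a := sSup (Z ∩ Iic t₀)
  set b := sInf (Z ∩ Ici t₀)
  obtain ⟨⟨⟨hαa, -⟩, hua : u a = 0⟩, hat₀⟩ : a ∈ Z ∩ Iic t₀ :=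
    (hZ.inter isClosed_Iic).csSup_mem ⟨α, ⟨left_mem_Icc.2 hαβ, huα⟩, ht₀.1⟩ hZa
  obtain ⟨⟨⟨-, hbβ⟩, hub : u b = 0⟩, ht₀b⟩ : b ∈ Z ∩ Ici t₀ :=
    (hZ.inter isClosed_Ici).csInf_mem ⟨β, ⟨right_mem_Icc.2 hαβ, huβ⟩, ht₀.2⟩ hZb
  have hat₀ : a < t₀ := hat₀.lt_of_ne fun h => by rw [h] at hua; linarith
  have ht₀b : t₀ < b := ht₀b.lt_of_ne fun h => by rw [← h] at hub; linarith
  refine ⟨a, b, hαa, hat₀, ht₀b, hbβ, hua, hub, fun s hs => ?_⟩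
  by_contra! hs0
  have hsub : uIcc s t₀ ⊆ Ioo a b :=
    ordConnected_Ioo.uIcc_subset hs ⟨hat₀, ht₀b⟩
  obtain ⟨c, hc, hc0⟩ := intermediate_value_uIcc (hu.mono fun x hx => ⟨hαa.trans (hsub hx).1.le,
    (hsub hx).2.le.trans hbβ⟩) (mem_uIcc.2 (Or.inl ⟨hs0, hpos.le⟩))
  have hcZ : c ∈ Z := ⟨⟨hαa.trans (hsub hc).1.le, (hsub hc).2.le.trans hbβ⟩, hc0⟩
  rcases le_total c t₀ with hct | hct
  · exact (hsub hc).1.not_ge (le_csSup hZa ⟨hcZ, hct⟩)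
  · exact (hsub hc).2.not_ge (csInf_le hZb ⟨hcZ, hct⟩)

theorem exists_norm_le_of_norm_deriv_le {f f' : ℝ → ℝ} {a b M : ℝ}
    (hf : ∀ t ∈ Ioo a b, HasDerivAt f (f' t) t) (hf' : ∀ t ∈ Ioo a b, ‖f' t‖ ≤ M) :
    ∃ C, ∀ t ∈ Ioo a b, ‖f t‖ ≤ C := by
  rcases (Ioo a b).eq_empty_or_nonempty with h | ⟨m, hm⟩
  · exact ⟨0, by simp [h]⟩
  refine ⟨‖f m‖ + M * (b - a), fun t ht => ?_⟩
  have hlip := (convex_Ioo a b).norm_image_sub_le_of_norm_hasDerivWithin_le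
    (fun x hx => (hf x hx).hasDerivWithinAt) hf' hm ht
  have hM : 0 ≤ M := (norm_nonneg _).trans (hf' m hm)
  have hdist : ‖t - m‖ ≤ b - a := by
    rw [Real.norm_eq_abs, abs_le]; constructor <;> linarith [ht.1, ht.2, hm.1, hm.2]
  calc ‖f t‖ ≤ ‖f m‖ + ‖f t - f m‖ := norm_le_norm_add_norm_sub' _ _
    _ ≤ ‖f m‖ + M * (b - a) := by gcongr; exact hlip.trans (by gcongr)

section SturmPicone

variable {α β : ℝ} {p q φ φ' φ'' u u' u'' : ℝ → ℝ}

theorem nonpos_of_sturm_comparison (hpq : ∀ t ∈ Ioo α β, p t < q t)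
    (hp : ContinuousOn p (Icc α β))
    (hφ : ContinuousOn φ (Icc α β)) (hφ' : ContinuousOn φ' (Icc α β))
    (hφD : ∀ t ∈ Ioo α β, HasDerivAt φ (φ' t) t) (hφD' : ∀ t ∈ Ioo α β, HasDerivAt φ' (φ'' t) t)
    (hφeq : ∀ t ∈ Ioo α β, φ'' t + q t * φ t = 0) (hφpos : ∀ t ∈ Ioo α β, 0 < φ t)
    (hφα : φ α = 0) (hφβ : φ β = 0)
    (hu : ContinuousOn u (Icc α β))
    (huD : ∀ t ∈ Ioo α β, HasDerivAt u (u' t) t) (huD' : ∀ t ∈ Ioo α β, HasDerivAt u' (u'' t) t)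
    (hueq : ∀ t ∈ Ioo α β, u'' t + p t * u t = 0) (huα : u α = 0) (huβ : u β = 0) :
    ∀ t ∈ Icc α β, u t ≤ 0 := by
  intro t₀ ht₀
  by_contra! hpos
  obtain ⟨a, b, hαa, hat₀, ht₀b, hbβ, hua, hub, hupos⟩ :=
    exists_nodal_interval hu huα huβ ht₀ hpos
  have hαβ : α < β := by linarith
  have hab : a < b := hat₀.trans ht₀b
  have hsub : Ioo a b ⊆ Ioo α β := Ioo_subset_Ioo hαa hbβ
  set W := wronskian φ φ' u u'
  have hWmono : StrictMonoOn W (Ioo a b) :=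
    strictMonoOn_wronskian (fun t ht => hpq t (hsub ht)) (fun t ht => hφD t (hsub ht))
      (fun t ht => hφD' t (hsub ht)) (fun t ht => hφeq t (hsub ht)) (fun t ht => hφpos t (hsub ht))
      (fun t ht => huD t (hsub ht)) (fun t ht => huD' t (hsub ht)) (fun t ht => hueq t (hsub ht))
      hupos
  have hWcont : ∀ t ∈ Ioo α β, ContinuousAt W t := fun t ht =>
    (hasDerivAt_wronskian (hφD t ht) (hφD' t ht) (huD t ht) (huD' t ht)).continuousAt
  -- `u'' = -p u` is bounded, so `u'` stays bounded up to the endpoints.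
  obtain ⟨C, hC⟩ : ∃ C, ∀ t ∈ Ioo α β, ‖u' t‖ ≤ C := by
    obtain ⟨M, hM⟩ := isCompact_Icc.exists_bound_of_continuousOn (hp.mul hu)
    refine exists_norm_le_of_norm_deriv_le (M := M) huD' fun t ht => ?_
    rw [show u'' t = -(p t * u t) by linarith [hueq t ht], norm_neg]
    exact hM t (Ioo_subset_Icc_self ht)
  obtain ⟨L, hL0, hL⟩ : ∃ L, 0 ≤ L ∧ Tendsto W (𝓝[>] a) (𝓝 L) := by
    rcases hαa.eq_or_lt with rfl | hαa
    · refine ⟨0, le_rfl, tendsto_wronskian_zero ?_ (left_mem_Icc.2 hαβ.le) hφ hφ' hφα hu huα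
        (eventually_of_mem (Ioo_mem_nhdsGT hαβ) hC)⟩
      rw [nhdsWithin_Icc_eq_nhdsGE hαβ]
      exact nhdsWithin_mono _ Ioi_subset_Ici_self
    · have ha : a ∈ Ioo α β := ⟨hαa, hab.trans_le hbβ⟩
      refine ⟨W a, ?_, (hWcont a ha).continuousWithinAt⟩
      simp only [W, wronskian, hua, mul_zero, sub_zero]
      exact mul_nonneg (hφpos a ha).le ((huD a ha).nonneg_of_pos_right hua hab hupos)
  obtain ⟨M, hM0, hM⟩ : ∃ M, M ≤ 0 ∧ Tendsto W (𝓝[<] b) (𝓝 M) := by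
    rcases hbβ.eq_or_lt with rfl | hbβ
    · refine ⟨0, le_rfl, tendsto_wronskian_zero ?_ (right_mem_Icc.2 hαβ.le) hφ hφ' hφβ hu huβ
        (eventually_of_mem (Ioo_mem_nhdsLT hαβ) hC)⟩
      rw [nhdsWithin_Icc_eq_nhdsLE hαβ]
      exact nhdsWithin_mono _ Iio_subset_Iic_self
    · have hb : b ∈ Ioo α β := ⟨hαa.trans_lt hab, hbβ⟩
      refine ⟨W b, ?_, (hWcont b hb).continuousWithinAt⟩
      simp only [W, wronskian, hub, mul_zero, sub_zero]
      exact mul_nonpos_of_nonneg_of_nonpos (hφpos b hb).le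
        ((huD b hb).nonpos_of_pos_left hub hab hupos)
  have hs : (a + t₀) / 2 ∈ Ioo a b := ⟨by linarith, by linarith⟩
  have ht₀ : t₀ ∈ Ioo a b := ⟨hat₀, ht₀b⟩
  linarith [hWmono.monotoneOn.le_of_tendsto_nhdsGT hL hs,
    hWmono.monotoneOn.ge_of_tendsto_nhdsLT hM ht₀, hWmono hs ht₀ (by linarith)]

theorem eqOn_zero_of_sturm_comparison (hpq : ∀ t ∈ Ioo α β, p t < q t)
    (hp : ContinuousOn p (Icc α β))
    (hφ : ContinuousOn φ (Icc α β)) (hφ' : ContinuousOn φ' (Icc α β))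
    (hφD : ∀ t ∈ Ioo α β, HasDerivAt φ (φ' t) t) (hφD' : ∀ t ∈ Ioo α β, HasDerivAt φ' (φ'' t) t)
    (hφeq : ∀ t ∈ Ioo α β, φ'' t + q t * φ t = 0) (hφpos : ∀ t ∈ Ioo α β, 0 < φ t)
    (hφα : φ α = 0) (hφβ : φ β = 0)
    (hu : ContinuousOn u (Icc α β))
    (huD : ∀ t ∈ Ioo α β, HasDerivAt u (u' t) t) (huD' : ∀ t ∈ Ioo α β, HasDerivAt u' (u'' t) t)
    (hueq : ∀ t ∈ Ioo α β, u'' t + p t * u t = 0) (huα : u α = 0) (huβ : u β = 0) :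
    EqOn u 0 (Icc α β) := by
  have hneg := nonpos_of_sturm_comparison (u := fun s => -u s) (u' := fun s => -u' s)
    (u'' := fun s => -u'' s) hpq hp hφ hφ' hφD hφD' hφeq hφpos hφα hφβ hu.neg
    (fun s hs => (huD s hs).neg) (fun s hs => (huD' s hs).neg)
    (fun s hs => by linear_combination -hueq s hs) (by simp [huα]) (by simp [huβ])
  exact fun t ht => le_antisymm
    (nonpos_of_sturm_comparison hpq hp hφ hφ' hφD hφD' hφeq hφpos hφα hφβ hu huD huD' hueq huα huβ
      t ht)
    (neg_nonpos.1 (hneg t ht))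

end SturmPicone

theorem catenoid_comparison_ode {ρ ρ' ρ'' κ : ℝ} (hρ : ρ ≠ 0)
    (hode : 4 * ρ * ρ'' - 4 * ρ' ^ 2 - (1 - ρ ^ 4) = 0)
    (hfirst : (1 - ρ ^ 2) ^ 2 / (4 * ρ ^ 2) + (ρ' / ρ) ^ 2 = κ ^ 2) :
    (-ρ'' / ρ ^ 2 + 2 * ρ' ^ 2 / ρ ^ 3 - ρ'') + ((1 / 2) * (1 / ρ ^ 2 + ρ ^ 2) - κ ^ 2) * (ρ⁻¹ - ρ)
      = 0 := by
  rw [← hfirst]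
  field_simp
  linear_combination -2 * (1 + ρ ^ 2) * hode

theorem hasDerivAt_neg_div_sq_sub {r r' : ℝ → ℝ} {t ρ'' : ℝ} (hr : HasDerivAt r (r' t) t)
    (hr' : HasDerivAt r' ρ'' t) (h0 : r t ≠ 0) :
    HasDerivAt (fun s => -r' s / r s ^ 2 - r' s)
      (-ρ'' / r t ^ 2 + 2 * r' t ^ 2 / r t ^ 3 - ρ'') t := by
  refine ((hr'.neg.div (hr.pow 2) (pow_ne_zero 2 h0)).sub hr').congr_deriv ?_
  simp only [Pi.pow_apply, Pi.neg_apply]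
  field_simp
  ring

theorem jacobi_mode_n_ge_two_trivial_general
    (h κ : ℝ) (hκ : 0 < κ) (n : ℕ) (hn : 2 ≤ n)
    (r r' r'' : ℝ → ℝ)
    (hrderiv : ∀ t ∈ Set.Icc (-h) h, HasDerivWithinAt r (r' t) (Set.Icc (-h) h) t)
    (hrderiv' : ∀ t ∈ Set.Icc (-h) h, HasDerivWithinAt r' (r'' t) (Set.Icc (-h) h) t)
    (hbv₁ : r (-h) = 1) (hbv₂ : r h = 1)
    (hrange : ∀ t ∈ Set.Ioo (-h) h, 0 < r t ∧ r t < 1)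
    (hode : ∀ t ∈ Set.Ioo (-h) h,
      4 * r t * r'' t - 4 * (r' t) ^ 2 - (1 - (r t) ^ 4) = 0)
    (hfirst : ∀ t ∈ Set.Ioo (-h) h,
      (1 - (r t) ^ 2) ^ 2 / (4 * (r t) ^ 2) + (r' t / r t) ^ 2 = κ ^ 2)
    (u u' u'' : ℝ → ℝ)
    (hucont : ContinuousOn u (Set.Icc (-h) h))
    (huderiv : ∀ t ∈ Set.Ioo (-h) h, HasDerivAt u (u' t) t)
    (huderiv' : ∀ t ∈ Set.Ioo (-h) h, HasDerivAt u' (u'' t) t)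
    (hueq : ∀ t ∈ Set.Ioo (-h) h,
      u'' t + ((1 / 2) * (1 / (r t) ^ 2 + (r t) ^ 2) - κ ^ 2 * (n : ℝ) ^ 2) * u t = 0)
    (hu₁ : u (-h) = 0) (hu₂ : u h = 0) :
    ∀ t ∈ Set.Icc (-h) h, u t = 0 := by
  have hr0 : ∀ t ∈ Icc (-h) h, r t ≠ 0 := fun t ht => by
    rcases eq_endpoints_or_mem_Ioo_of_mem_Icc ht with rfl | rfl | ht
    exacts [by simp [hbv₁], by simp [hbv₂], (hrange t ht).1.ne']
  have hr : ContinuousOn r (Icc (-h) h) := fun t ht => (hrderiv t ht).continuousWithinAt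
  have hr' : ContinuousOn r' (Icc (-h) h) := fun t ht => (hrderiv' t ht).continuousWithinAt
  have hrD : ∀ t ∈ Ioo (-h) h, HasDerivAt r (r' t) t := fun t ht =>
    (hrderiv t (Ioo_subset_Icc_self ht)).hasDerivAt (Icc_mem_nhds ht.1 ht.2)
  have hrD' : ∀ t ∈ Ioo (-h) h, HasDerivAt r' (r'' t) t := fun t ht =>
    (hrderiv' t (Ioo_subset_Icc_self ht)).hasDerivAt (Icc_mem_nhds ht.1 ht.2)
  have hκn : κ ^ 2 < κ ^ 2 * (n : ℝ) ^ 2 := by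
    have : (1 : ℝ) < (n : ℝ) ^ 2 := one_lt_pow₀ (by exact_mod_cast hn) two_ne_zero
    simpa using mul_lt_mul_of_pos_left this (pow_pos hκ 2)
  refine eqOn_zero_of_sturm_comparison (q := fun t => (1 / 2) * (1 / r t ^ 2 + r t ^ 2) - κ ^ 2)
    (φ := fun t => (r t)⁻¹ - r t)
    (φ'' := fun t => -r'' t / r t ^ 2 + 2 * r' t ^ 2 / r t ^ 3 - r'' t)
    (fun t _ => by linarith) ?_ ((hr.inv₀ hr0).sub hr)
    ((hr'.neg.div (hr.pow 2) fun t ht => pow_ne_zero 2 (hr0 t ht)).sub hr')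
    (fun t ht => ((hrD t ht).inv (hr0 t (Ioo_subset_Icc_self ht))).sub (hrD t ht))
    (fun t ht => hasDerivAt_neg_div_sq_sub (hrD t ht) (hrD' t ht) (hr0 t (Ioo_subset_Icc_self ht)))
    (fun t ht => catenoid_comparison_ode (hr0 t (Ioo_subset_Icc_self ht)) (hode t ht) (hfirst t ht))
    (fun t ht => sub_pos.2 <|
      (hrange t ht).2.trans ((one_lt_inv₀ (hrange t ht).1).2 (hrange t ht).2))
    (by simp [hbv₁]) (by simp [hbv₂]) hucont huderiv huderiv' hueq hu₁ hu₂
  exact (continuousOn_const.mul ((continuousOn_const.div (hr.pow 2)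
    fun t ht => pow_ne_zero 2 (hr0 t ht)).add (hr.pow 2))).sub continuousOn_const

/-- Sturm comparison step of Proposition 2.2: for Fourier modes `n ≥ 2`, the
Dirichlet problem for the Jacobi equation on the catenoid `C_h` has only the
trivial solution. -/
theorem jacobi_mode_n_ge_two_trivial
    (h κ : ℝ) (hh : 0 < h) (hκ : 0 < κ) (n : ℕ) (hn : 2 ≤ n)
    (r r' r'' : ℝ → ℝ)
    (hrderiv : ∀ t ∈ Set.Icc (-h) h, HasDerivWithinAt r (r' t) (Set.Icc (-h) h) t)
    (hrderiv' : ∀ t ∈ Set.Icc (-h) h, HasDerivWithinAt r' (r'' t) (Set.Icc (-h) h) t)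
    (hrcont : ContinuousOn r'' (Set.Icc (-h) h))
    (hbv₁ : r (-h) = 1) (hbv₂ : r h = 1)
    (hrange : ∀ t ∈ Set.Ioo (-h) h, 0 < r t ∧ r t < 1)
    (hode : ∀ t ∈ Set.Ioo (-h) h,
      4 * r t * r'' t - 4 * (r' t) ^ 2 - (1 - (r t) ^ 4) = 0)
    (hfirst : ∀ t ∈ Set.Ioo (-h) h,
      (1 - (r t) ^ 2) ^ 2 / (4 * (r t) ^ 2) + (r' t / r t) ^ 2 = κ ^ 2)
    (u u' u'' : ℝ → ℝ)
    (hucont : ContinuousOn u (Set.Icc (-h) h))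
    (huderiv : ∀ t ∈ Set.Ioo (-h) h, HasDerivAt u (u' t) t)
    (huderiv' : ∀ t ∈ Set.Ioo (-h) h, HasDerivAt u' (u'' t) t)
    (hueq : ∀ t ∈ Set.Ioo (-h) h,
      u'' t + ((1 / 2) * (1 / (r t) ^ 2 + (r t) ^ 2) - κ ^ 2 * (n : ℝ) ^ 2) * u t = 0)
    (hu₁ : u (-h) = 0) (hu₂ : u h = 0) :
    ∀ t ∈ Set.Icc (-h) h, u t = 0 :=
  jacobi_mode_n_ge_two_trivial_general h κ hκ n hn r r' r'' hrderiv hrderiv' hbv₁ hbv₂ hrange hode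
    hfirst u u' u'' hucont huderiv huderiv' hueq hu₁ hu₂
end

section
/- Let h > 0, κ > 0, and let r : [−h,h] → ℝ be twice continuously differentiable with r(−h) = r(h) = 1 and 0 < r(t) < 1 for t ∈ (−h,h), satisfying 4·r·r'' − 4·(r')² − (1 − r⁴) = 0 on (−h,h) and (1−r²)²/(4r²) + (r'/r)² = κ² on (−h,h). If u : [−h,h] → ℝ is continuous on [−h,h], twice differentiable on (−h,h), satisfies u''(t) + ((1/2)(1/r(t)² + r(t)²) − κ²)·u(t) = 0 on (−h,h) and u(−h) = u(h) = 0, then there exists a constant c ∈ ℝ with u(t) = c·(1/r(t) − r(t)) for all t ∈ [−h,h]. -/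
/-!
The function `φ = 1/r − r` solves the first-mode Jacobi equation `y'' = −q y`: this is where the
profile equation and its first integral enter. For a second solution `u`, the Wronskian
`u φ' − u' φ` is constant on `(−h, h)`. At `t = h` both `u` and `φ` vanish while `u'` and `φ'` stay
bounded (`u''` = `−q u` is bounded), so the constant is `0`. Since `φ > 0` inside,
`(u / φ)' = −W / φ² = 0`, hence `u / φ` is constant.
-/

open Set Filter Topology

theorem forall_mem_Icc_of_forall_mem_Ioo {α : Type*} [PartialOrder α] {a b : α} {p : α → Prop}
    (ha : p a) (hb : p b) (hp : ∀ t ∈ Ioo a b, p t) : ∀ t ∈ Icc a b, p t := by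
  rintro t ⟨ht₁, ht₂⟩
  rcases ht₁.eq_or_lt with rfl | ht₁
  · exact ha
  rcases ht₂.eq_or_lt with rfl | ht₂
  · exact hb
  exact hp t ⟨ht₁, ht₂⟩

section Wronskian

variable {q u u' φ φ' : ℝ → ℝ}

theorem hasDerivAt_wronskian_eq_zero {t : ℝ}
    (hu : HasDerivAt u (u' t) t) (hu' : HasDerivAt u' (-q t * u t) t)
    (hφ : HasDerivAt φ (φ' t) t) (hφ' : HasDerivAt φ' (-q t * φ t) t) :
    HasDerivAt (fun s => u s * φ' s - u' s * φ s) 0 t :=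
  ((hu.mul hφ').sub (hu'.mul hφ)).congr_deriv (by ring)

theorem wronskian_eq_zero_of_tendsto_nhdsLT {a b : ℝ} (hab : a < b)
    (hu : ∀ t ∈ Ioo a b, HasDerivAt u (u' t) t)
    (hu' : ∀ t ∈ Ioo a b, HasDerivAt u' (-q t * u t) t)
    (hφ : ∀ t ∈ Ioo a b, HasDerivAt φ (φ' t) t)
    (hφ' : ∀ t ∈ Ioo a b, HasDerivAt φ' (-q t * φ t) t)
    (hu_lim : Tendsto u (𝓝[<] b) (𝓝 0)) (hφ_lim : Tendsto φ (𝓝[<] b) (𝓝 0))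
    (hu'_bdd : IsBoundedUnder (· ≤ ·) (𝓝[<] b) (norm ∘ u'))
    (hφ'_bdd : IsBoundedUnder (· ≤ ·) (𝓝[<] b) (norm ∘ φ')) :
    ∀ t ∈ Ioo a b, u t * φ' t - u' t * φ t = 0 := by
  have hW := fun t (ht : t ∈ Ioo a b) =>
    hasDerivAt_wronskian_eq_zero (hu t ht) (hu' t ht) (hφ t ht) (hφ' t ht)
  obtain ⟨W₀, hW₀⟩ := isOpen_Ioo.exists_is_const_of_deriv_eq_zero isPreconnected_Ioo
    (fun t ht => (hW t ht).differentiableAt.differentiableWithinAt) (fun t ht => (hW t ht).deriv)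
  have hW_lim : Tendsto (fun s => u s * φ' s - u' s * φ s) (𝓝[<] b) (𝓝 0) := by
    simpa using (hu_lim.zero_mul_isBoundedUnder_le hφ'_bdd).sub
      (isBoundedUnder_le_mul_tendsto_zero hu'_bdd hφ_lim)
  have hW_const : Tendsto (fun s => u s * φ' s - u' s * φ s) (𝓝[<] b) (𝓝 W₀) :=
    tendsto_const_nhds.congr' <|
      eventually_of_mem (Ioo_mem_nhdsLT hab) fun t ht => (hW₀ t ht).symm
  intro t ht
  rw [hW₀ t ht]
  exact tendsto_nhds_unique hW_const hW_lim

theorem exists_eq_const_mul_of_wronskian_eq_zero {s : Set ℝ} (hs : IsOpen s)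
    (hs' : IsPreconnected s) (hu : ∀ t ∈ s, HasDerivAt u (u' t) t)
    (hφ : ∀ t ∈ s, HasDerivAt φ (φ' t) t) (hφ0 : ∀ t ∈ s, φ t ≠ 0)
    (hW : ∀ t ∈ s, u t * φ' t - u' t * φ t = 0) :
    ∃ c, ∀ t ∈ s, u t = c * φ t := by
  have hquot : ∀ t ∈ s, HasDerivAt (fun x => u x / φ x) 0 t := by
    intro t ht
    have := (hu t ht).div (hφ t ht) (hφ0 t ht)
    rwa [show u' t * φ t - u t * φ' t = 0 by linarith [hW t ht], zero_div] at this
  obtain ⟨c, hc⟩ := hs.exists_is_const_of_deriv_eq_zero hs'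
    (fun t ht => (hquot t ht).differentiableAt.differentiableWithinAt)
    (fun t ht => (hquot t ht).deriv)
  exact ⟨c, fun t ht => by rw [← hc t ht, div_mul_cancel₀ _ (hφ0 t ht)]⟩

end Wronskian

theorem isBoundedUnder_nhdsLT_of_norm_deriv_le {a b M : ℝ} (hab : a < b) {f f' : ℝ → ℝ}
    (hf : ∀ t ∈ Ioo a b, HasDerivAt f (f' t) t) (hM : ∀ t ∈ Ioo a b, ‖f' t‖ ≤ M) :
    IsBoundedUnder (· ≤ ·) (𝓝[<] b) (norm ∘ f) := by
  obtain ⟨t₀, ht₀⟩ : (Ioo a b).Nonempty := nonempty_Ioo.2 hab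
  have hM0 : 0 ≤ M := (norm_nonneg _).trans (hM t₀ ht₀)
  refine isBoundedUnder_of_eventually_le (a := ‖f t₀‖ + M * (b - a)) <|
    eventually_of_mem (Ioo_mem_nhdsLT hab) fun t ht => ?_
  have hlip := Convex.norm_image_sub_le_of_norm_hasDerivWithin_le
    (fun x hx => (hf x hx).hasDerivWithinAt) hM (convex_Ioo a b) ht₀ ht
  have hdist : ‖t - t₀‖ ≤ b - a := by
    rw [Real.norm_eq_abs, abs_le]
    constructor <;> linarith [ht.1, ht.2, ht₀.1, ht₀.2]
  calc (norm ∘ f) t = ‖f t‖ := rfl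
    _ ≤ ‖f t₀‖ + ‖f t - f t₀‖ := norm_le_norm_add_norm_sub' _ _
    _ ≤ ‖f t₀‖ + M * (b - a) := by gcongr; exact hlip.trans (by gcongr)

section Catenoid

variable {κ : ℝ} {r r' r'' : ℝ → ℝ}

noncomputable def jacobiProfile (r : ℝ → ℝ) (t : ℝ) : ℝ := 1 / r t - r t

noncomputable def jacobiProfileDeriv (r r' : ℝ → ℝ) (t : ℝ) : ℝ := -r' t * (1 / r t ^ 2 + 1)

noncomputable def modeOnePotential (κ : ℝ) (r : ℝ → ℝ) (t : ℝ) : ℝ :=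
  1 / 2 * (1 / r t ^ 2 + r t ^ 2) - κ ^ 2

theorem jacobiProfile_pos {t : ℝ} (hr₀ : 0 < r t) (hr₁ : r t < 1) : 0 < jacobiProfile r t := by
  rw [jacobiProfile, sub_pos, lt_div_iff₀ hr₀]
  nlinarith

theorem hasDerivAt_jacobiProfile {t : ℝ} (hr : HasDerivAt r (r' t) t) (hr0 : r t ≠ 0) :
    HasDerivAt (jacobiProfile r) (jacobiProfileDeriv r r' t) t :=
  (((hasDerivAt_const t 1).div hr hr0).sub hr).congr_deriv <| by
    simp only [jacobiProfileDeriv]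
    field_simp
    ring

theorem hasDerivAt_jacobiProfileDeriv {t : ℝ} (hr : HasDerivAt r (r' t) t)
    (hr' : HasDerivAt r' (r'' t) t) (hr0 : r t ≠ 0)
    (hode : 4 * r t * r'' t - 4 * r' t ^ 2 - (1 - r t ^ 4) = 0)
    (hfirst : (1 - r t ^ 2) ^ 2 / (4 * r t ^ 2) + (r' t / r t) ^ 2 = κ ^ 2) :
    HasDerivAt (jacobiProfileDeriv r r')
      (-modeOnePotential κ r t * jacobiProfile r t) t := by
  have hκ : (1 - r t ^ 2) ^ 2 + 4 * r' t ^ 2 = 4 * κ ^ 2 * r t ^ 2 := by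
    field_simp at hfirst
    linear_combination hfirst
  have hinv : HasDerivAt (fun s => 1 / r s ^ 2 + 1) (-2 * r' t / r t ^ 3) t :=
    (((hasDerivAt_const t (1 : ℝ)).div (hr.pow 2) (pow_ne_zero 2 hr0)).add_const 1).congr_deriv
      (by simp only [Pi.pow_apply]; field_simp; ring)
  refine (hr'.neg.mul hinv).congr_deriv ?_
  simp only [modeOnePotential, jacobiProfile, Pi.neg_apply]
  field_simp
  linear_combination (1 - r t ^ 2) / 2 * hκ - (1 + r t ^ 2) / 2 * hode

theorem tendsto_jacobiProfile {l : Filter ℝ} (hr : Tendsto r l (𝓝 1)) :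
    Tendsto (jacobiProfile r) l (𝓝 0) := by
  convert (tendsto_const_nhds (x := (1 : ℝ)).div hr one_ne_zero).sub hr using 2 <;>
    simp [jacobiProfile]

theorem tendsto_jacobiProfileDeriv {l : Filter ℝ} {ρ : ℝ} (hr : Tendsto r l (𝓝 1))
    (hr' : Tendsto r' l (𝓝 ρ)) :
    Tendsto (jacobiProfileDeriv r r') l (𝓝 (-2 * ρ)) := by
  convert hr'.neg.mul
    ((tendsto_const_nhds (x := (1 : ℝ)).div (hr.pow 2) (by norm_num)).add_const 1) using 2
  · simp [jacobiProfileDeriv]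
  · ring

theorem continuousOn_modeOnePotential {s : Set ℝ} (hr : ContinuousOn r s)
    (hr0 : ∀ t ∈ s, r t ≠ 0) : ContinuousOn (modeOnePotential κ r) s :=
  ((continuousOn_const.div (hr.pow 2) fun t ht => pow_ne_zero 2 (hr0 t ht)).add
    (hr.pow 2)).const_smul (1 / 2 : ℝ) |>.sub continuousOn_const

end Catenoid

theorem jacobi_mode_one_proportional_general
    (h κ : ℝ) (hh : 0 < h)
    (r r' r'' : ℝ → ℝ)
    (hrderiv : ∀ t ∈ Set.Icc (-h) h, HasDerivWithinAt r (r' t) (Set.Icc (-h) h) t)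
    (hrderiv' : ∀ t ∈ Set.Icc (-h) h, HasDerivWithinAt r' (r'' t) (Set.Icc (-h) h) t)
    (hbv₁ : r (-h) = 1) (hbv₂ : r h = 1)
    (hrange : ∀ t ∈ Set.Ioo (-h) h, 0 < r t ∧ r t < 1)
    (hode : ∀ t ∈ Set.Ioo (-h) h,
      4 * r t * r'' t - 4 * (r' t) ^ 2 - (1 - (r t) ^ 4) = 0)
    (hfirst : ∀ t ∈ Set.Ioo (-h) h,
      (1 - (r t) ^ 2) ^ 2 / (4 * (r t) ^ 2) + (r' t / r t) ^ 2 = κ ^ 2)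
    (u u' u'' : ℝ → ℝ)
    (hucont : ContinuousOn u (Set.Icc (-h) h))
    (huderiv : ∀ t ∈ Set.Ioo (-h) h, HasDerivAt u (u' t) t)
    (huderiv' : ∀ t ∈ Set.Ioo (-h) h, HasDerivAt u' (u'' t) t)
    (hueq : ∀ t ∈ Set.Ioo (-h) h,
      u'' t + ((1 / 2) * (1 / (r t) ^ 2 + (r t) ^ 2) - κ ^ 2) * u t = 0)
    (hu₁ : u (-h) = 0) (hu₂ : u h = 0) :
    ∃ c : ℝ, ∀ t ∈ Set.Icc (-h) h, u t = c * (1 / r t - r t) := by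
  have hab : -h < h := by linarith
  have hb : h ∈ Icc (-h) h := right_mem_Icc.2 hab.le
  have hr0 : ∀ t ∈ Icc (-h) h, r t ≠ 0 := forall_mem_Icc_of_forall_mem_Ioo (by simp [hbv₁])
    (by simp [hbv₂]) fun t ht => (hrange t ht).1.ne'
  have hrD : ∀ t ∈ Ioo (-h) h, HasDerivAt r (r' t) t := fun t ht =>
    (hrderiv t (Ioo_subset_Icc_self ht)).hasDerivAt (Icc_mem_nhds ht.1 ht.2)
  have hφ := fun t (ht : t ∈ Ioo (-h) h) =>
    hasDerivAt_jacobiProfile (hrD t ht) (hr0 t (Ioo_subset_Icc_self ht))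
  have hφ' := fun t (ht : t ∈ Ioo (-h) h) => hasDerivAt_jacobiProfileDeriv (hrD t ht)
    ((hrderiv' t (Ioo_subset_Icc_self ht)).hasDerivAt (Icc_mem_nhds ht.1 ht.2))
    (hr0 t (Ioo_subset_Icc_self ht)) (hode t ht) (hfirst t ht)
  have hu' : ∀ t ∈ Ioo (-h) h, HasDerivAt u' (-modeOnePotential κ r t * u t) t := fun t ht =>
    (huderiv' t ht).congr_deriv (by rw [modeOnePotential]; linear_combination hueq t ht)
  have hlimLT {f : ℝ → ℝ} {y : ℝ} (hf : HasDerivWithinAt f y (Icc (-h) h) h) :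
      Tendsto f (𝓝[<] h) (𝓝 (f h)) :=
    hf.continuousWithinAt.mono_of_mem_nhdsWithin (Icc_mem_nhdsLT hab)
  have hr_lim : Tendsto r (𝓝[<] h) (𝓝 1) := hbv₂ ▸ hlimLT (hrderiv h hb)
  obtain ⟨M, hM⟩ := isCompact_Icc.exists_bound_of_continuousOn <|
    (continuousOn_modeOnePotential (κ := κ) (fun t ht => (hrderiv t ht).continuousWithinAt)
      hr0).neg.mul hucont
  have hW := wronskian_eq_zero_of_tendsto_nhdsLT hab huderiv hu' hφ hφ'
    (hu₂ ▸ (hucont h hb).mono_of_mem_nhdsWithin (Icc_mem_nhdsLT hab))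
    (tendsto_jacobiProfile hr_lim)
    (isBoundedUnder_nhdsLT_of_norm_deriv_le hab hu' fun t ht => hM t (Ioo_subset_Icc_self ht))
    (tendsto_jacobiProfileDeriv hr_lim (hlimLT (hrderiv' h hb))).norm.isBoundedUnder_le
  obtain ⟨c, hc⟩ := exists_eq_const_mul_of_wronskian_eq_zero isOpen_Ioo isPreconnected_Ioo
    huderiv hφ (fun t ht => (jacobiProfile_pos (hrange t ht).1 (hrange t ht).2).ne') hW
  exact ⟨c, forall_mem_Icc_of_forall_mem_Ioo (by simp [hu₁, hbv₁]) (by simp [hu₂, hbv₂]) hc⟩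

/-- First-mode part of Proposition 2.2: every Dirichlet solution of the `n = 1`
Jacobi equation on the catenoid `C_h` is proportional to `φ = 1/r − r`. -/
theorem jacobi_mode_one_proportional
    (h κ : ℝ) (hh : 0 < h) (hκ : 0 < κ)
    (r r' r'' : ℝ → ℝ)
    (hrderiv : ∀ t ∈ Set.Icc (-h) h, HasDerivWithinAt r (r' t) (Set.Icc (-h) h) t)
    (hrderiv' : ∀ t ∈ Set.Icc (-h) h, HasDerivWithinAt r' (r'' t) (Set.Icc (-h) h) t)
    (hrcont : ContinuousOn r'' (Set.Icc (-h) h))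
    (hbv₁ : r (-h) = 1) (hbv₂ : r h = 1)
    (hrange : ∀ t ∈ Set.Ioo (-h) h, 0 < r t ∧ r t < 1)
    (hode : ∀ t ∈ Set.Ioo (-h) h,
      4 * r t * r'' t - 4 * (r' t) ^ 2 - (1 - (r t) ^ 4) = 0)
    (hfirst : ∀ t ∈ Set.Ioo (-h) h,
      (1 - (r t) ^ 2) ^ 2 / (4 * (r t) ^ 2) + (r' t / r t) ^ 2 = κ ^ 2)
    (u u' u'' : ℝ → ℝ)
    (hucont : ContinuousOn u (Set.Icc (-h) h))
    (huderiv : ∀ t ∈ Set.Ioo (-h) h, HasDerivAt u (u' t) t)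
    (huderiv' : ∀ t ∈ Set.Ioo (-h) h, HasDerivAt u' (u'' t) t)
    (hueq : ∀ t ∈ Set.Ioo (-h) h,
      u'' t + ((1 / 2) * (1 / (r t) ^ 2 + (r t) ^ 2) - κ ^ 2) * u t = 0)
    (hu₁ : u (-h) = 0) (hu₂ : u h = 0) :
    ∃ c : ℝ, ∀ t ∈ Set.Icc (-h) h, u t = c * (1 / r t - r t) :=
  jacobi_mode_one_proportional_general h κ hh r r' r'' hrderiv hrderiv' hbv₁ hbv₂ hrange hode hfirst
    u u' u'' hucont huderiv huderiv' hueq hu₁ hu₂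
end

section
/- Let h > 0, κ > 0, and let r : [−h,h] → ℝ be twice continuously differentiable with r(−h) = r(h) = 1 and 0 < r(t) < 1 for t ∈ (−h,h), satisfying 4·r·r'' − 4·(r')² − (1 − r⁴) = 0 on (−h,h) and (1−r²)²/(4r²) + (r'/r)² = κ² on (−h,h). If u : [−h,h] → ℝ is continuous on [−h,h], twice differentiable on (−h,h), satisfies u''(t) + (1/2)(1/r(t)² + r(t)²)·u(t) = 0 on (−h,h) and u(−h) = u(h) = 0, then u is identically zero. -/
open Set

lemma quot_slope (u u' v vd : ℝ → ℝ) (α β c : ℝ) (hαβ : α < β)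
    (hu : ContinuousOn u (Set.Icc α β)) (hv : ContinuousOn v (Set.Icc α β))
    (hvne : ∀ s ∈ Set.Icc α β, v s ≠ 0)
    (hud : ∀ s ∈ Set.Ioo α β, HasDerivAt u (u' s) s)
    (hvd : ∀ s ∈ Set.Ioo α β, HasDerivAt v (vd s) s)
    (hC : ∀ s ∈ Set.Ioo α β, u' s * v s - u s * vd s = c) :
    ∃ ξ ∈ Set.Ioo α β, c / (v ξ) ^ 2 = (u β / v β - u α / v α) / (β - α) := by
  have hcont : ContinuousOn (fun s => u s / v s) (Set.Icc α β) := hu.div hv hvne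
  have hder : ∀ s ∈ Set.Ioo α β,
      HasDerivAt (fun s => u s / v s) (c / (v s) ^ 2) s := by
    intro s hs
    have h1 := (hud s hs).div (hvd s hs) (hvne s (Set.Ioo_subset_Icc_self hs))
    rwa [hC s hs] at h1
  exact exists_hasDerivAt_eq_slope _ _ hαβ hcont hder

lemma aux_false (h κ : ℝ) (hh : 0 < h) (hκ : 0 < κ)
    (u u' v vd p pd : ℝ → ℝ) (t₀ c : ℝ)
    (ht₀ : t₀ ∈ Set.Ioo (-h) h)
    (hucont : ContinuousOn u (Set.Icc (-h) h))
    (hu'cont : ContinuousOn u' (Set.Ioo (-h) h))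
    (hvcont : ContinuousOn v (Set.Icc (-h) h))
    (hvdcont : ContinuousOn vd (Set.Icc (-h) h))
    (hpcont : ContinuousOn p (Set.Icc (-h) h))
    (hpdcont : ContinuousOn pd (Set.Icc (-h) h))
    (huderiv : ∀ t ∈ Set.Ioo (-h) h, HasDerivAt u (u' t) t)
    (hvderiv : ∀ t ∈ Set.Ioo (-h) h, HasDerivAt v (vd t) t)
    (hvt₀ : v t₀ = 0) (hvdt₀ : 0 < vd t₀)
    (hvpos : ∀ t, t₀ < t → t ≤ h → 0 < v t)
    (hvneg : ∀ t, -h ≤ t → t < t₀ → v t < 0)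
    (hppos : ∀ t ∈ Set.Ioo (-h) h, 0 < p t)
    (hpm : p (-h) = 0) (hph : p h = 0)
    (hu₁ : u (-h) = 0) (hu₂ : u h = 0)
    (hC : ∀ t ∈ Set.Ioo (-h) h, u' t * v t - u t * vd t = c)
    (hFder : ∀ t ∈ Set.Ioo (-h) h,
      HasDerivAt (fun s => u' s * p s - u s * pd s) (-(κ ^ 2 * u t * p t)) t)
    (hc : c < 0) : False := by
  obtain ⟨ht₀1, ht₀2⟩ := ht₀
  have hlt : -h < h := by linarith
  have hut₀ : 0 < u t₀ := by
    have := hC t₀ ⟨ht₀1, ht₀2⟩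
    rw [hvt₀] at this
    nlinarith
  have upos : ∀ t ∈ Set.Ioo (-h) h, 0 < u t := by
    intro t ht
    rcases lt_trichotomy t t₀ with hlt' | heq | hgt'
    · -- left side: MVT on [-h, t]
      have hvne : ∀ s ∈ Set.Icc (-h) t, v s ≠ 0 := fun s hs =>
        ne_of_lt (hvneg s hs.1 (lt_of_le_of_lt hs.2 hlt'))
      have hsub : Set.Icc (-h) t ⊆ Set.Icc (-h) h :=
        Set.Icc_subset_Icc le_rfl (le_of_lt ht.2)
      have hsub' : Set.Ioo (-h) t ⊆ Set.Ioo (-h) h :=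
        Set.Ioo_subset_Ioo le_rfl (le_of_lt ht.2)
      obtain ⟨ξ, hξ, hslope⟩ := quot_slope u u' v vd (-h) t c ht.1
        (hucont.mono hsub) (hvcont.mono hsub) hvne
        (fun s hs => huderiv s (hsub' hs)) (fun s hs => hvderiv s (hsub' hs))
        (fun s hs => hC s (hsub' hs))
      have hvξ : v ξ < 0 := hvneg ξ (le_of_lt hξ.1) (lt_trans hξ.2 hlt')
      have hv2 : (0:ℝ) < (v ξ) ^ 2 := pow_pos (neg_pos.mpr hvξ) 2 |>.trans_eq (by ring)
      rw [hu₁, zero_div, sub_zero] at hslope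
      have hden : (0:ℝ) < t - -h := by linarith [ht.1]
      have hq : u t / v t = c / (v ξ) ^ 2 * (t - -h) := by
        rw [hslope, div_mul_cancel₀ _ (ne_of_gt hden)]
      have hqneg : u t / v t < 0 := by
        rw [hq]
        exact mul_neg_of_neg_of_pos (div_neg_of_neg_of_pos hc hv2) hden
      have hvt : v t < 0 := hvneg t (le_of_lt ht.1) hlt'
      rw [(div_mul_cancel₀ (u t) (ne_of_lt hvt)).symm]
      exact mul_pos_of_neg_of_neg hqneg hvt
    · rw [heq]; exact hut₀
    · -- right side: MVT on [t, h]
      have hvne : ∀ s ∈ Set.Icc t h, v s ≠ 0 := fun s hs =>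
        ne_of_gt (hvpos s (lt_of_lt_of_le hgt' hs.1) hs.2)
      have hsub : Set.Icc t h ⊆ Set.Icc (-h) h :=
        Set.Icc_subset_Icc (le_of_lt ht.1) le_rfl
      have hsub' : Set.Ioo t h ⊆ Set.Ioo (-h) h :=
        Set.Ioo_subset_Ioo (le_of_lt ht.1) le_rfl
      obtain ⟨ξ, hξ, hslope⟩ := quot_slope u u' v vd t h c ht.2
        (hucont.mono hsub) (hvcont.mono hsub) hvne
        (fun s hs => huderiv s (hsub' hs)) (fun s hs => hvderiv s (hsub' hs))
        (fun s hs => hC s (hsub' hs))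
      have hvξ : 0 < v ξ := hvpos ξ (lt_trans hgt' hξ.1) (le_of_lt hξ.2)
      have hv2 : (0:ℝ) < (v ξ) ^ 2 := pow_pos hvξ 2
      rw [hu₂, zero_div, zero_sub] at hslope
      have hden : (0:ℝ) < h - t := by linarith [ht.2]
      have hq : -(u t / v t) = c / (v ξ) ^ 2 * (h - t) := by
        rw [hslope, div_mul_cancel₀ _ (ne_of_gt hden)]
      have hqpos : 0 < u t / v t := by
        have := mul_neg_of_neg_of_pos (div_neg_of_neg_of_pos hc hv2) hden
        linarith
      have hvt : 0 < v t := hvpos t hgt' (le_of_lt ht.2)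
      rw [(div_mul_cancel₀ (u t) (ne_of_gt hvt)).symm]
      exact mul_pos hqpos hvt
  -- the function G agrees with F := u'p - u pd wherever v ≠ 0
  have hGF : ∀ s ∈ Set.Ioo (-h) h, v s ≠ 0 →
      (c + u s * vd s) * p s / v s - u s * pd s = u' s * p s - u s * pd s := by
    intro s hs hvs
    have hCs := hC s hs
    have hu' : u' s = (c + u s * vd s) / v s := by
      field_simp
      linarith [hCs]
    rw [hu']
    ring
  have hτ₁1 : -h < (-h + t₀) / 2 := by linarith
  have hτ₁2 : (-h + t₀) / 2 < t₀ := by linarith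
  have hτ₂1 : t₀ < (t₀ + h) / 2 := by linarith
  have hτ₂2 : (t₀ + h) / 2 < h := by linarith
  -- Right mean value estimate : 0 < F τ₂
  have hFτ₂ : 0 < u' ((t₀ + h) / 2) * p ((t₀ + h) / 2) - u ((t₀ + h) / 2) * pd ((t₀ + h) / 2) := by
    have hsub : Set.Icc ((t₀ + h) / 2) h ⊆ Set.Icc (-h) h :=
      Set.Icc_subset_Icc (by linarith) le_rfl
    have hvne : ∀ s ∈ Set.Icc ((t₀ + h) / 2) h, v s ≠ 0 := fun s hs =>
      ne_of_gt (hvpos s (lt_of_lt_of_le hτ₂1 hs.1) hs.2)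
    have contG : ContinuousOn
        (fun s => (c + u s * vd s) * p s / v s - u s * pd s)
        (Set.Icc ((t₀ + h) / 2) h) :=
      (((continuousOn_const.add ((hucont.mono hsub).mul (hvdcont.mono hsub))).mul
        (hpcont.mono hsub)).div (hvcont.mono hsub) hvne).sub
        ((hucont.mono hsub).mul (hpdcont.mono hsub))
    have derG : ∀ x ∈ Set.Ioo ((t₀ + h) / 2) h,
        HasDerivAt (fun s => (c + u s * vd s) * p s / v s - u s * pd s)
          (-(κ ^ 2 * u x * p x)) x := by
      intro x hx
      have hxO : x ∈ Set.Ioo (-h) h := ⟨by linarith [hx.1], hx.2⟩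
      refine (hFder x hxO).congr_of_eventuallyEq ?_
      filter_upwards [isOpen_Ioo.mem_nhds (show x ∈ Set.Ioo t₀ h from
        ⟨lt_trans hτ₂1 hx.1, hx.2⟩)] with s hs
      exact hGF s ⟨by linarith [hs.1], hs.2⟩ (ne_of_gt (hvpos s hs.1 (le_of_lt hs.2)))
    obtain ⟨ξ, hξ, hsl⟩ := exists_hasDerivAt_eq_slope
      (fun s => (c + u s * vd s) * p s / v s - u s * pd s)
      (fun x => -(κ ^ 2 * u x * p x)) hτ₂2 contG derG
    simp only [hu₂, hph, zero_mul, mul_zero, add_zero, zero_div, sub_zero, zero_sub] at hsl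
    have hξO : ξ ∈ Set.Ioo (-h) h := ⟨by linarith [hξ.1], hξ.2⟩
    have hlhs : -(κ ^ 2 * u ξ * p ξ) < 0 := by
      have := upos ξ hξO
      have := hppos ξ hξO
      have : 0 < κ ^ 2 * u ξ * p ξ := by positivity
      linarith
    rw [hsl] at hlhs
    have hden : (0:ℝ) < h - (t₀ + h) / 2 := by linarith
    have hGτ₂ : 0 < (c + u ((t₀ + h) / 2) * vd ((t₀ + h) / 2)) * p ((t₀ + h) / 2) /
        v ((t₀ + h) / 2) - u ((t₀ + h) / 2) * pd ((t₀ + h) / 2) := by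
      by_contra hcon
      push_neg at hcon
      have : 0 ≤ -(((c + u ((t₀+h)/2) * vd ((t₀+h)/2)) * p ((t₀+h)/2) / v ((t₀+h)/2)
          - u ((t₀+h)/2) * pd ((t₀+h)/2))) / (h - (t₀ + h) / 2) :=
        div_nonneg (by linarith) (le_of_lt hden)
      linarith
    rw [hGF ((t₀ + h) / 2) ⟨by linarith, hτ₂2⟩
      (ne_of_gt (hvpos _ hτ₂1 (le_of_lt hτ₂2)))] at hGτ₂
    exact hGτ₂
  -- Left mean value estimate : F τ₁ < 0
  have hFτ₁ : u' ((-h + t₀) / 2) * p ((-h + t₀) / 2) - u ((-h + t₀) / 2) * pd ((-h + t₀) / 2) < 0 := by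
    have hsub : Set.Icc (-h) ((-h + t₀) / 2) ⊆ Set.Icc (-h) h :=
      Set.Icc_subset_Icc le_rfl (by linarith)
    have hvne : ∀ s ∈ Set.Icc (-h) ((-h + t₀) / 2), v s ≠ 0 := fun s hs =>
      ne_of_lt (hvneg s hs.1 (lt_of_le_of_lt hs.2 hτ₁2))
    have contG : ContinuousOn
        (fun s => (c + u s * vd s) * p s / v s - u s * pd s)
        (Set.Icc (-h) ((-h + t₀) / 2)) :=
      (((continuousOn_const.add ((hucont.mono hsub).mul (hvdcont.mono hsub))).mul
        (hpcont.mono hsub)).div (hvcont.mono hsub) hvne).sub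
        ((hucont.mono hsub).mul (hpdcont.mono hsub))
    have derG : ∀ x ∈ Set.Ioo (-h) ((-h + t₀) / 2),
        HasDerivAt (fun s => (c + u s * vd s) * p s / v s - u s * pd s)
          (-(κ ^ 2 * u x * p x)) x := by
      intro x hx
      have hxO : x ∈ Set.Ioo (-h) h := ⟨hx.1, by linarith [hx.2]⟩
      refine (hFder x hxO).congr_of_eventuallyEq ?_
      filter_upwards [isOpen_Ioo.mem_nhds (show x ∈ Set.Ioo (-h) t₀ from
        ⟨hx.1, lt_trans hx.2 hτ₁2⟩)] with s hs
      exact hGF s ⟨hs.1, by linarith [hs.2]⟩ (ne_of_lt (hvneg s (le_of_lt hs.1) hs.2))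
    obtain ⟨ξ, hξ, hsl⟩ := exists_hasDerivAt_eq_slope
      (fun s => (c + u s * vd s) * p s / v s - u s * pd s)
      (fun x => -(κ ^ 2 * u x * p x)) hτ₁1 contG derG
    simp only [hu₁, hpm, zero_mul, mul_zero, add_zero, zero_div, sub_zero, zero_sub] at hsl
    have hξO : ξ ∈ Set.Ioo (-h) h := ⟨hξ.1, by linarith [hξ.2]⟩
    have hlhs : -(κ ^ 2 * u ξ * p ξ) < 0 := by
      have := upos ξ hξO
      have := hppos ξ hξO
      have : 0 < κ ^ 2 * u ξ * p ξ := by positivity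
      linarith
    rw [hsl] at hlhs
    have hden : (0:ℝ) < (-h + t₀) / 2 - -h := by linarith
    have hGτ₁ : (c + u ((-h + t₀) / 2) * vd ((-h + t₀) / 2)) * p ((-h + t₀) / 2) /
        v ((-h + t₀) / 2) - u ((-h + t₀) / 2) * pd ((-h + t₀) / 2) < 0 := by
      by_contra hcon
      push_neg at hcon
      have : 0 ≤ ((c + u ((-h+t₀)/2) * vd ((-h+t₀)/2)) * p ((-h+t₀)/2) / v ((-h+t₀)/2)
          - u ((-h+t₀)/2) * pd ((-h+t₀)/2)) / ((-h + t₀) / 2 - -h) :=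
        div_nonneg hcon (le_of_lt hden)
      linarith
    rw [hGF ((-h + t₀) / 2) ⟨hτ₁1, by linarith⟩
      (ne_of_lt (hvneg _ (le_of_lt hτ₁1) hτ₁2))] at hGτ₁
    exact hGτ₁
  -- Middle mean value estimate : F τ₂ < F τ₁, contradiction
  have hmid : u' ((t₀ + h) / 2) * p ((t₀ + h) / 2) - u ((t₀ + h) / 2) * pd ((t₀ + h) / 2) <
      u' ((-h + t₀) / 2) * p ((-h + t₀) / 2) - u ((-h + t₀) / 2) * pd ((-h + t₀) / 2) := by
    have hττ : (-h + t₀) / 2 < (t₀ + h) / 2 := by linarith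
    have hsub : Set.Icc ((-h + t₀) / 2) ((t₀ + h) / 2) ⊆ Set.Ioo (-h) h := by
      intro s hs
      exact ⟨by linarith [hs.1], by linarith [hs.2]⟩
    have hsub' : Set.Icc ((-h + t₀) / 2) ((t₀ + h) / 2) ⊆ Set.Icc (-h) h :=
      hsub.trans Set.Ioo_subset_Icc_self
    have contF : ContinuousOn (fun s => u' s * p s - u s * pd s)
        (Set.Icc ((-h + t₀) / 2) ((t₀ + h) / 2)) :=
      ((hu'cont.mono hsub).mul (hpcont.mono hsub')).sub
        ((hucont.mono hsub').mul (hpdcont.mono hsub'))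
    have derF : ∀ x ∈ Set.Ioo ((-h + t₀) / 2) ((t₀ + h) / 2),
        HasDerivAt (fun s => u' s * p s - u s * pd s) (-(κ ^ 2 * u x * p x)) x :=
      fun x hx => hFder x (hsub (Set.Ioo_subset_Icc_self hx))
    obtain ⟨ξ, hξ, hsl⟩ := exists_hasDerivAt_eq_slope
      (fun s => u' s * p s - u s * pd s)
      (fun x => -(κ ^ 2 * u x * p x)) hττ contF derF
    have hξO : ξ ∈ Set.Ioo (-h) h := hsub (Set.Ioo_subset_Icc_self hξ)
    have hlhs : -(κ ^ 2 * u ξ * p ξ) < 0 := by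
      have := upos ξ hξO
      have := hppos ξ hξO
      have : 0 < κ ^ 2 * u ξ * p ξ := by positivity
      linarith
    rw [hsl] at hlhs
    have hden : (0:ℝ) < (t₀ + h) / 2 - (-h + t₀) / 2 := by linarith
    by_contra hcon
    push_neg at hcon
    have : 0 ≤ ((u' ((t₀+h)/2) * p ((t₀+h)/2) - u ((t₀+h)/2) * pd ((t₀+h)/2)) -
        (u' ((-h+t₀)/2) * p ((-h+t₀)/2) - u ((-h+t₀)/2) * pd ((-h+t₀)/2))) /
        ((t₀ + h) / 2 - (-h + t₀) / 2) := div_nonneg (by linarith) (le_of_lt hden)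
    linarith
  linarith
set_option maxHeartbeats 4000000 in
/-- Zeroth-mode part of Proposition 2.2: the Dirichlet problem for the
rotationally invariant Jacobi equation on the catenoid `C_h` has only the
trivial solution. -/
theorem jacobi_mode_zero_trivial
    (h κ : ℝ) (hh : 0 < h) (hκ : 0 < κ)
    (r r' r'' : ℝ → ℝ)
    (hrderiv : ∀ t ∈ Set.Icc (-h) h, HasDerivWithinAt r (r' t) (Set.Icc (-h) h) t)
    (hrderiv' : ∀ t ∈ Set.Icc (-h) h, HasDerivWithinAt r' (r'' t) (Set.Icc (-h) h) t)
    (hrcont : ContinuousOn r'' (Set.Icc (-h) h))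
    (hbv₁ : r (-h) = 1) (hbv₂ : r h = 1)
    (hrange : ∀ t ∈ Set.Ioo (-h) h, 0 < r t ∧ r t < 1)
    (hode : ∀ t ∈ Set.Ioo (-h) h,
      4 * r t * r'' t - 4 * (r' t) ^ 2 - (1 - (r t) ^ 4) = 0)
    (hfirst : ∀ t ∈ Set.Ioo (-h) h,
      (1 - (r t) ^ 2) ^ 2 / (4 * (r t) ^ 2) + (r' t / r t) ^ 2 = κ ^ 2)
    (u u' u'' : ℝ → ℝ)
    (hucont : ContinuousOn u (Set.Icc (-h) h))
    (huderiv : ∀ t ∈ Set.Ioo (-h) h, HasDerivAt u (u' t) t)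
    (huderiv' : ∀ t ∈ Set.Ioo (-h) h, HasDerivAt u' (u'' t) t)
    (hueq : ∀ t ∈ Set.Ioo (-h) h,
      u'' t + (1 / 2) * (1 / (r t) ^ 2 + (r t) ^ 2) * u t = 0)
    (hu₁ : u (-h) = 0) (hu₂ : u h = 0) :
    ∀ t ∈ Set.Icc (-h) h, u t = 0 := by
  have hlt : -h < h := by linarith
  have hO : Set.Ioo (-h) h ⊆ Set.Icc (-h) h := Set.Ioo_subset_Icc_self
  have hmhI : -h ∈ Set.Icc (-h) h := Set.left_mem_Icc.mpr (le_of_lt hlt)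
  have hhI : h ∈ Set.Icc (-h) h := Set.right_mem_Icc.mpr (le_of_lt hlt)
  -- positivity of r on the closed interval
  have rpos : ∀ t ∈ Set.Icc (-h) h, 0 < r t := by
    intro t ht
    rcases eq_or_lt_of_le ht.1 with he | h1
    · rw [← he, hbv₁]; norm_num
    · rcases eq_or_lt_of_le ht.2 with he | h2
      · rw [he, hbv₂]; norm_num
      · exact (hrange t ⟨h1, h2⟩).1
  have rne : ∀ t ∈ Set.Icc (-h) h, r t ≠ 0 := fun t ht => ne_of_gt (rpos t ht)
  -- continuity
  have hrcont' : ContinuousOn r (Set.Icc (-h) h) :=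
    fun t ht => (hrderiv t ht).continuousWithinAt
  have hr'cont : ContinuousOn r' (Set.Icc (-h) h) :=
    fun t ht => (hrderiv' t ht).continuousWithinAt
  have hu'contO : ContinuousOn u' (Set.Ioo (-h) h) :=
    fun t ht => (huderiv' t ht).continuousAt.continuousWithinAt
  -- interior derivatives of r, r'
  have hrat : ∀ t ∈ Set.Ioo (-h) h, HasDerivAt r (r' t) t :=
    fun t ht => (hrderiv t (hO ht)).hasDerivAt (Icc_mem_nhds ht.1 ht.2)
  have hr'at : ∀ t ∈ Set.Ioo (-h) h, HasDerivAt r' (r'' t) t :=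
    fun t ht => (hrderiv' t (hO ht)).hasDerivAt (Icc_mem_nhds ht.1 ht.2)
  -- auxiliary functions
  set v : ℝ → ℝ := fun t => r' t / r t with hvdef
  set p : ℝ → ℝ := fun t => (1 - r t ^ 2) / (2 * r t) with hpdef
  set a : ℝ → ℝ := fun t => (1 + r t ^ 2) / (2 * r t) with hadef
  set vd : ℝ → ℝ := fun t => p t * a t with hvddef
  set pd : ℝ → ℝ := fun t => -(v t * a t) with hpddef
  set ad : ℝ → ℝ := fun t => -(v t * p t) with haddef
  have h2rne : ∀ t ∈ Set.Icc (-h) h, 2 * r t ≠ 0 :=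
    fun t ht => mul_ne_zero two_ne_zero (rne t ht)
  have hvcont : ContinuousOn v (Set.Icc (-h) h) := hr'cont.div hrcont' rne
  have hpcont : ContinuousOn p (Set.Icc (-h) h) :=
    (continuousOn_const.sub (hrcont'.pow 2)).div (continuousOn_const.mul hrcont') h2rne
  have hacont : ContinuousOn a (Set.Icc (-h) h) :=
    (continuousOn_const.add (hrcont'.pow 2)).div (continuousOn_const.mul hrcont') h2rne
  have hvdcont : ContinuousOn vd (Set.Icc (-h) h) := hpcont.mul hacont
  have hpdcont : ContinuousOn pd (Set.Icc (-h) h) := (hvcont.mul hacont).neg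
  -- derivatives of the auxiliary functions
  have hvat : ∀ t ∈ Set.Ioo (-h) h, HasDerivAt v (vd t) t := by
    intro t ht
    have hrn := rne t (hO ht)
    have h1 := (hr'at t ht).div (hrat t ht) hrn
    have heq : (r'' t * r t - r' t * r' t) / r t ^ 2 = vd t := by
      have hod := hode t ht
      simp only [hvddef, hpdef, hadef]
      field_simp
      ring_nf
      nlinarith [hod, sq_nonneg (r t)]
    rw [← heq]; exact h1
  have hpat : ∀ t ∈ Set.Ioo (-h) h, HasDerivAt p (pd t) t := by
    intro t ht
    have hrn := rne t (hO ht)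
    have h1 := ((hasDerivAt_const t (1:ℝ)).sub ((hrat t ht).pow 2)).div
      ((hrat t ht).const_mul (2:ℝ)) (h2rne t (hO ht))
    have heq : ((0 - ↑2 * r t ^ (2-1) * r' t) * (2 * r t) - (1 - r t ^ 2) * (2 * r' t)) /
        (2 * r t) ^ 2 = pd t := by
      simp only [hpddef, hvdef, hadef]
      field_simp
      ring
    rw [← heq]; exact h1
  have haat : ∀ t ∈ Set.Ioo (-h) h, HasDerivAt a (ad t) t := by
    intro t ht
    have hrn := rne t (hO ht)
    have h1 := ((hasDerivAt_const t (1:ℝ)).add ((hrat t ht).pow 2)).div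
      ((hrat t ht).const_mul (2:ℝ)) (h2rne t (hO ht))
    have heq : ((0 + ↑2 * r t ^ (2-1) * r' t) * (2 * r t) - (1 + r t ^ 2) * (2 * r' t)) /
        (2 * r t) ^ 2 = ad t := by
      simp only [haddef, hvdef, hpdef]
      field_simp
      ring
    rw [← heq]; exact h1
  have hvdat : ∀ t ∈ Set.Ioo (-h) h,
      HasDerivAt vd (pd t * a t + p t * ad t) t :=
    fun t ht => (hpat t ht).mul (haat t ht)
  have hpdat : ∀ t ∈ Set.Ioo (-h) h,
      HasDerivAt pd (-(vd t * a t + v t * ad t)) t :=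
    fun t ht => ((hvat t ht).mul (haat t ht)).neg
  -- first integral in (p, v) form
  have hk2 : ∀ t ∈ Set.Ioo (-h) h, p t ^ 2 + v t ^ 2 = κ ^ 2 := by
    intro t ht
    have hf := hfirst t ht
    have hrn := rne t (hO ht)
    simp only [hpdef, hvdef]
    field_simp at hf ⊢
    linarith [hf]
  -- rewrite of the second derivative of u
  have hu''eq : ∀ t ∈ Set.Ioo (-h) h,
      u'' t = -(1 / 2 * (1 / r t ^ 2 + r t ^ 2) * u t) := by
    intro t ht; linarith [hueq t ht]
  -- the Wronskian of u and v has vanishing derivative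
  have hCat : ∀ t ∈ Set.Ioo (-h) h,
      HasDerivAt (fun s => u' s * v s - u s * vd s) 0 t := by
    intro t ht
    have hrn := rne t (hO ht)
    have h1 := ((huderiv' t ht).mul (hvat t ht)).sub ((huderiv t ht).mul (hvdat t ht))
    have heq : u'' t * v t + u' t * vd t - (u' t * vd t + u t * (pd t * a t + p t * ad t))
        = 0 := by
      rw [hu''eq t ht]
      simp only [hvdef, hpdef, hadef, hvddef, hpddef, haddef]
      field_simp
      ring
    rw [← heq]; exact h1
  -- the derivative of F = u'p - u pd
  have hFat : ∀ t ∈ Set.Ioo (-h) h,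
      HasDerivAt (fun s => u' s * p s - u s * pd s) (-(κ ^ 2 * u t * p t)) t := by
    intro t ht
    have hrn := rne t (hO ht)
    have h1 := ((huderiv' t ht).mul (hpat t ht)).sub ((huderiv t ht).mul (hpdat t ht))
    have heq : u'' t * p t + u' t * pd t - (u' t * pd t + u t * -(vd t * a t + v t * ad t))
        = -(κ ^ 2 * u t * p t) := by
      rw [hu''eq t ht, ← hk2 t ht]
      simp only [hvdef, hpdef, hadef, hvddef, hpddef, haddef]
      field_simp
      ring
    rw [← heq]; exact h1
  -- constancy of the Wronskian
  have hCeq : ∀ x ∈ Set.Ioo (-h) h, ∀ y ∈ Set.Ioo (-h) h, x < y →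
      u' x * v x - u x * vd x = u' y * v y - u y * vd y := by
    intro x hx y hy hxy
    have hsub : Set.Icc x y ⊆ Set.Ioo (-h) h := Set.Icc_subset_Ioo hx.1 hy.2
    have hsub' : Set.Icc x y ⊆ Set.Icc (-h) h := hsub.trans hO
    have cont : ContinuousOn (fun s => u' s * v s - u s * vd s) (Set.Icc x y) :=
      ((hu'contO.mono hsub).mul (hvcont.mono hsub')).sub
        ((hucont.mono hsub').mul (hvdcont.mono hsub'))
    obtain ⟨ξ, hξ, hsl⟩ := exists_hasDerivAt_eq_slope
      (fun s => u' s * v s - u s * vd s) (fun _ => 0) hxy cont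
      (fun s hs => hCat s (hsub (Set.Ioo_subset_Icc_self hs)))
    have h0 : (u' y * v y - u y * vd y - (u' x * v x - u x * vd x)) / (y - x) = 0 :=
      hsl.symm
    rw [div_eq_zero_iff] at h0
    rcases h0 with h0 | h0
    · linarith
    · linarith [hxy, sub_ne_zero.mpr (ne_of_gt hxy)]
  -- first integral at the endpoints, by continuity
  have hk2e : ∀ x ∈ Set.Icc (-h) h, p x ^ 2 + v x ^ 2 = κ ^ 2 := by
    intro x hx
    have hxcl : x ∈ closure (Set.Ioo (-h) h) := by
      rw [closure_Ioo (ne_of_lt hlt)]; exact hx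
    have hne : (nhdsWithin x (Set.Ioo (-h) h)).NeBot :=
      mem_closure_iff_nhdsWithin_neBot.mp hxcl
    have hcont2 : ContinuousOn (fun t => p t ^ 2 + v t ^ 2) (Set.Icc (-h) h) :=
      (hpcont.pow 2).add (hvcont.pow 2)
    have h1 : Filter.Tendsto (fun t => p t ^ 2 + v t ^ 2)
        (nhdsWithin x (Set.Ioo (-h) h)) (nhds (p x ^ 2 + v x ^ 2)) :=
      (hcont2 x hx).mono_left (nhdsWithin_mono x hO)
    have h2 : Filter.Tendsto (fun t => p t ^ 2 + v t ^ 2)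
        (nhdsWithin x (Set.Ioo (-h) h)) (nhds (κ ^ 2)) := by
      refine Filter.Tendsto.congr' ?_ tendsto_const_nhds
      filter_upwards [self_mem_nhdsWithin] with s hs
      exact (hk2 s hs).symm
    exact tendsto_nhds_unique h1 h2
  -- values of p and v at the endpoints
  have hpm : p (-h) = 0 := by simp [hpdef, hbv₁]
  have hph : p h = 0 := by simp [hpdef, hbv₂]
  have hvmh : v (-h) = r' (-h) := by simp [hvdef, hbv₁]
  have hvh : v h = r' h := by simp [hvdef, hbv₂]
  have hr'h2 : r' h ^ 2 = κ ^ 2 := by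
    have := hk2e h hhI; rw [hph, hvh] at this; nlinarith [this]
  have hr'mh2 : r' (-h) ^ 2 = κ ^ 2 := by
    have := hk2e (-h) hmhI; rw [hpm, hvmh] at this; nlinarith [this]
  -- convexity of the profile
  have hr''pos : ∀ t ∈ Set.Ioo (-h) h, 0 < r'' t := by
    intro t ht
    have hod := hode t ht
    have h1 := (hrange t ht).1
    have h2 := (hrange t ht).2
    have he : r'' t = (4 * r' t ^ 2 + 1 - r t ^ 4) / (4 * r t) := by
      field_simp
      linarith [hod]
    rw [he]
    apply div_pos
    · have h3 : r t ^ 2 < 1 := by nlinarith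
      have h4 : r t ^ 4 < 1 := by nlinarith [pow_pos h1 2]
      nlinarith [sq_nonneg (r' t)]
    · linarith
  have hmono : StrictMonoOn r' (Set.Icc (-h) h) := by
    refine strictMonoOn_of_deriv_pos (convex_Icc _ _) hr'cont ?_
    intro x hx
    rw [interior_Icc] at hx
    rw [(hr'at x hx).deriv]
    exact hr''pos x hx
  -- endpoint values of r'
  have hr'h : r' h = κ := by
    rcases mul_eq_zero.mp (show (r' h - κ) * (r' h + κ) = 0 by nlinarith [hr'h2]) with
      h1 | h1
    · linarith [sub_eq_zero.mp h1]
    · exfalso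
      have hrk : r' h = -κ := by linarith
      have hanti : StrictAntiOn r (Set.Icc (-h) h) := by
        refine strictAntiOn_of_deriv_neg (convex_Icc _ _) hrcont' ?_
        intro x hx
        rw [interior_Icc] at hx
        rw [(hrat x hx).deriv]
        have := hmono (hO hx) hhI hx.2
        rw [hrk] at this
        linarith
      have := hanti hmhI hhI hlt
      rw [hbv₁, hbv₂] at this
      exact lt_irrefl 1 this
  have hr'mh : r' (-h) = -κ := by
    rcases mul_eq_zero.mp (show (r' (-h) - κ) * (r' (-h) + κ) = 0 by nlinarith [hr'mh2])
      with h1 | h1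
    · exfalso
      have hrk : r' (-h) = κ := by linarith [sub_eq_zero.mp h1]
      have hmono' : StrictMonoOn r (Set.Icc (-h) h) := by
        refine strictMonoOn_of_deriv_pos (convex_Icc _ _) hrcont' ?_
        intro x hx
        rw [interior_Icc] at hx
        rw [(hrat x hx).deriv]
        have := hmono hmhI (hO hx) hx.1
        rw [hrk] at this
        linarith
      have := hmono' hmhI hhI hlt
      rw [hbv₁, hbv₂] at this
      exact lt_irrefl 1 this
    · linarith
  -- the zero of r'
  obtain ⟨t₀, ht₀O, ht₀eq⟩ : ∃ t₀ ∈ Set.Ioo (-h) h, r' t₀ = 0 := by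
    have hsub := intermediate_value_Ioo (le_of_lt hlt) hr'cont
    have h0 : (0:ℝ) ∈ Set.Ioo (r' (-h)) (r' h) := by
      rw [hr'mh, hr'h]; exact ⟨neg_lt_zero.mpr hκ, hκ⟩
    obtain ⟨t₀, ht₀, heq⟩ := hsub h0
    exact ⟨t₀, ht₀, heq⟩
  have hvt₀ : v t₀ = 0 := by simp [hvdef, ht₀eq]
  -- sign of v
  have hvpos : ∀ t, t₀ < t → t ≤ h → 0 < v t := by
    intro t h1 h2
    have htI : t ∈ Set.Icc (-h) h := ⟨by linarith [ht₀O.1], h2⟩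
    have := hmono (hO ht₀O) htI h1
    rw [ht₀eq] at this
    exact div_pos this (rpos t htI)
  have hvneg : ∀ t, -h ≤ t → t < t₀ → v t < 0 := by
    intro t h1 h2
    have htI : t ∈ Set.Icc (-h) h := ⟨h1, by linarith [ht₀O.2]⟩
    have := hmono htI (hO ht₀O) h2
    rw [ht₀eq] at this
    exact div_neg_of_neg_of_pos this (rpos t htI)
  have hppos : ∀ t ∈ Set.Ioo (-h) h, 0 < p t := by
    intro t ht
    have h1 := (hrange t ht).1
    have h2 := (hrange t ht).2
    have : (0:ℝ) < 1 - r t ^ 2 := by nlinarith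
    exact div_pos this (by linarith)
  have hvdt₀ : 0 < vd t₀ := by
    have h1 := hppos t₀ ht₀O
    have h2 : 0 < a t₀ := by
      have := rpos t₀ (hO ht₀O)
      have : (0:ℝ) < 1 + r t₀ ^ 2 := by positivity
      exact div_pos this (by have := rpos t₀ (hO ht₀O); linarith)
    exact mul_pos h1 h2
  -- the Wronskian constant
  set c : ℝ := u' t₀ * v t₀ - u t₀ * vd t₀ with hcdef
  have hCconst : ∀ t ∈ Set.Ioo (-h) h, u' t * v t - u t * vd t = c := by
    intro t ht
    rcases lt_trichotomy t t₀ with H | H | H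
    · exact hCeq t ht t₀ ht₀O H
    · rw [H]
    · exact (hCeq t₀ ht₀O t ht H).symm
  rcases lt_trichotomy c 0 with hc | hc | hc
  · exact absurd (aux_false h κ hh hκ u u' v vd p pd t₀ c ht₀O hucont hu'contO hvcont
      hvdcont hpcont hpdcont huderiv hvat hvt₀ hvdt₀ hvpos hvneg hppos hpm hph hu₁ hu₂
      hCconst hFat hc) not_false
  · -- c = 0 : u vanishes identically
    intro t ht
    rcases eq_or_lt_of_le ht.1 with he | h1
    · rw [← he]; exact hu₁
    rcases eq_or_lt_of_le ht.2 with he | h2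
    · rw [he]; exact hu₂
    have htO : t ∈ Set.Ioo (-h) h := ⟨h1, h2⟩
    rcases lt_trichotomy t t₀ with H | H | H
    · -- left of t₀
      have hvne : ∀ s ∈ Set.Icc (-h) t, v s ≠ 0 := fun s hs =>
        ne_of_lt (hvneg s hs.1 (lt_of_le_of_lt hs.2 H))
      have hsub : Set.Icc (-h) t ⊆ Set.Icc (-h) h := Set.Icc_subset_Icc le_rfl (le_of_lt h2)
      have hsub' : Set.Ioo (-h) t ⊆ Set.Ioo (-h) h := Set.Ioo_subset_Ioo le_rfl (le_of_lt h2)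
      obtain ⟨ξ, hξ, hslope⟩ := quot_slope u u' v vd (-h) t c h1
        (hucont.mono hsub) (hvcont.mono hsub) hvne
        (fun s hs => huderiv s (hsub' hs)) (fun s hs => hvat s (hsub' hs))
        (fun s hs => hCconst s (hsub' hs))
      rw [hc, hu₁, zero_div, zero_div, sub_zero] at hslope
      rcases div_eq_zero_iff.mp hslope.symm with h0 | h0
      · rcases div_eq_zero_iff.mp h0 with h0' | h0'
        · exact h0'
        · exact absurd h0' (hvne t ⟨le_of_lt h1, le_rfl⟩)
      · exfalso
        have h9 : (0:ℝ) < t - -h := by linarith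
        linarith
    · -- t = t₀
      rw [H]
      have h0 : u t₀ * vd t₀ = 0 := by
        have e := hcdef
        rw [hvt₀, mul_zero, zero_sub] at e
        linarith [e, hc]
      rcases mul_eq_zero.mp h0 with h0' | h0'
      · exact h0'
      · exact absurd h0' (ne_of_gt hvdt₀)
    · -- right of t₀
      have hvne : ∀ s ∈ Set.Icc t h, v s ≠ 0 := fun s hs =>
        ne_of_gt (hvpos s (lt_of_lt_of_le H hs.1) hs.2)
      have hsub : Set.Icc t h ⊆ Set.Icc (-h) h := Set.Icc_subset_Icc (le_of_lt h1) le_rfl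
      have hsub' : Set.Ioo t h ⊆ Set.Ioo (-h) h := Set.Ioo_subset_Ioo (le_of_lt h1) le_rfl
      obtain ⟨ξ, hξ, hslope⟩ := quot_slope u u' v vd t h c h2
        (hucont.mono hsub) (hvcont.mono hsub) hvne
        (fun s hs => huderiv s (hsub' hs)) (fun s hs => hvat s (hsub' hs))
        (fun s hs => hCconst s (hsub' hs))
      rw [hc, hu₂, zero_div, zero_div, zero_sub] at hslope
      rcases div_eq_zero_iff.mp hslope.symm with h0 | h0
      · have h0'' : u t / v t = 0 := by linarith [neg_eq_zero.mp h0]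
        rcases div_eq_zero_iff.mp h0'' with h0' | h0'
        · exact h0'
        · exact absurd h0' (hvne t ⟨le_rfl, le_of_lt h2⟩)
      · exfalso
        have h9 : (0:ℝ) < h - t := by linarith
        linarith
  · -- c > 0 : apply the auxiliary lemma to -u
    have hCconst' : ∀ t ∈ Set.Ioo (-h) h, (-u' t) * v t - (-u t) * vd t = -c := by
      intro t ht
      have := hCconst t ht
      linarith [this]
    have hFat' : ∀ t ∈ Set.Ioo (-h) h,
        HasDerivAt (fun s => (-u' s) * p s - (-u s) * pd s) (-(κ ^ 2 * (-u t) * p t)) t := by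
      intro t ht
      have h2' := (hFat t ht).neg
      have hfe : (fun s => (-u' s) * p s - (-u s) * pd s) =
          (fun s => -(u' s * p s - u s * pd s)) := by funext s; ring
      rw [hfe]
      have : -(κ ^ 2 * (-u t) * p t) = -(-(κ ^ 2 * u t * p t)) := by ring
      rw [this]
      exact h2'
    exact absurd (aux_false h κ hh hκ (fun s => -u s) (fun s => -u' s) v vd p pd t₀ (-c)
      ht₀O hucont.neg hu'contO.neg hvcont hvdcont hpcont hpdcont
      (fun s hs => (huderiv s hs).neg) hvat hvt₀ hvdt₀ hvpos hvneg hppos hpm hph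
      (by simp [hu₁]) (by simp [hu₂]) hCconst' hFat' (by linarith)) not_false
end

section
/- Let 0 < r₀ < 1 and let u : [r₀, 1) × ℝ → ℝ be twice continuously differentiable and 2π-periodic in its second variable θ. Define W(r,θ) := √(1 + ((1−r²)²/4)·(u_r(r,θ)² + u_θ(r,θ)²/r²)). Assume that u satisfies the divergence-form minimal graph equation ∂_r( r·u_r/W ) + ∂_θ( u_θ/(r·W) ) = 0 at every point of [r₀,1) × ℝ. Then the function r ↦ ∫₀^{2π} r·u_r(r,θ)·u_θ(r,θ)/W(r,θ) dθ is constant on [r₀, 1). If moreover u extends to a continuously differentiable function on [r₀,1] × ℝ, then this constant value equals ∫₀^{2π} u_r(1,θ)·u_θ(1,θ) dθ. -/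
/-!
For a shift `h`, pair the increment of `u` in `θ` with the radial flux density `A = r u_r / W`:
`G_h(r) = ∫ (u(r, θ + h) - u(r, θ)) A(r, θ) dθ`. Differentiating in `r` and integrating the
divergence equation by parts in `θ` turns `G_h'(r)` into the integral of
`⟨(A, B)(θ), (u_r, u_θ)(θ + h) - (u_r, u_θ)(θ)⟩` with `B = u_θ / (r W)`. As `(A, B)` is a positive
multiple of the gradient of the convex function `(u_r, u_θ) ↦ W`, this is at most a multiple of
`∫ (W(θ + h) - W(θ)) dθ = 0`. Hence every `G_h` is antitone in `r`, while the flux is the derivative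
of `G_h(r)` in `h` at `h = 0`: dividing by `h > 0` and by `h < 0` gives both inequalities between
the fluxes at two radii. No second derivatives of `u` are needed. The boundary value follows from
continuity of the flux up to `r = 1`, where `W = 1`.
-/

open Set MeasureTheory intervalIntegral Filter Topology Function

/-- `W = √(1 + |∇u|²)`, the norm taken in the Poincaré metric, at a point of radius `r` where
`(u_r, u_θ) = (p, q)`. -/
noncomputable def areaDensity (r p q : ℝ) : ℝ :=
  Real.sqrt (1 + ((1 - r ^ 2) ^ 2 / 4) * (p ^ 2 + q ^ 2 / r ^ 2))

theorem one_le_areaDensity (r p q : ℝ) : 1 ≤ areaDensity r p q :=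
  Real.one_le_sqrt.2 (le_add_of_nonneg_right (by positivity))

theorem areaDensity_one (p q : ℝ) : areaDensity 1 p q = 1 := by
  simp [areaDensity]

theorem abs_mul_div_areaDensity_le {r : ℝ} (hr₀ : 0 ≤ r) (hr₁ : r ≤ 1) (p q : ℝ) :
    |r * p / areaDensity r p q| ≤ |p| := by
  have hW := one_le_areaDensity r p q
  rw [abs_div, abs_mul, abs_of_nonneg hr₀, abs_of_pos (one_pos.trans_le hW)]
  calc r * |p| / areaDensity r p q ≤ r * |p| := div_le_self (by positivity) hW
    _ ≤ |p| := mul_le_of_le_one_left (abs_nonneg p) hr₁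

theorem ContinuousOn.areaDensity {X : Type*} [TopologicalSpace X] {s : Set X} {r p q : X → ℝ}
    (hr : ContinuousOn r s) (hp : ContinuousOn p s) (hq : ContinuousOn q s)
    (hr₀ : ∀ x ∈ s, r x ≠ 0) : ContinuousOn (fun x => areaDensity (r x) (p x) (q x)) s := by
  unfold _root_.areaDensity
  exact (continuousOn_const.add (((continuousOn_const.sub (hr.pow 2)).pow 2).div_const 4 |>.mul
    ((hp.pow 2).add ((hq.pow 2).div (hr.pow 2) fun x hx => pow_ne_zero 2 (hr₀ x hx))))).sqrt

theorem continuous_mul_div_areaDensity {r : ℝ} (hr : r ≠ 0) {p q : ℝ → ℝ} (hp : Continuous p)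
    (hq : Continuous q) : Continuous fun θ => r * p θ / areaDensity r (p θ) (q θ) :=
  (continuous_const.mul hp).div (continuousOn_univ.1 <|
    continuousOn_const.areaDensity hp.continuousOn hq.continuousOn fun _ _ => hr)
    fun _ => (one_pos.trans_le (one_le_areaDensity _ _ _)).ne'

theorem sqrt_one_add_sq_gradient_ineq {a b : ℝ} (ha : 0 ≤ a) (hb : 0 ≤ b) (x₁ y₁ x₂ y₂ : ℝ) :
    a * x₁ * (x₂ - x₁) + b * y₁ * (y₂ - y₁) ≤
      √(1 + a * x₁ ^ 2 + b * y₁ ^ 2) *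
        (√(1 + a * x₂ ^ 2 + b * y₂ ^ 2) - √(1 + a * x₁ ^ 2 + b * y₁ ^ 2)) := by
  have h₁ : 0 ≤ 1 + a * x₁ ^ 2 + b * y₁ ^ 2 := by positivity
  have cauchySchwarz : 1 + a * x₁ * x₂ + b * y₁ * y₂ ≤
      √(1 + a * x₁ ^ 2 + b * y₁ ^ 2) * √(1 + a * x₂ ^ 2 + b * y₂ ^ 2) := by
    rw [← Real.sqrt_mul h₁]
    refine (le_abs_self _).trans (Real.abs_le_sqrt ?_)
    nlinarith [mul_nonneg ha hb, mul_nonneg (mul_nonneg ha hb) (sq_nonneg (x₁ * y₂ - x₂ * y₁)),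
      mul_nonneg ha (sq_nonneg (x₁ - x₂)), mul_nonneg hb (sq_nonneg (y₁ - y₂))]
  linear_combination cauchySchwarz + Real.mul_self_sqrt h₁

/-- The flux densities `(r p / W, q / (r W))` are `r / a` times the gradient of the convex function
`(p, q) ↦ W`, with `a = (1 - r²)² / 4`; this is its supporting-hyperplane inequality. -/
theorem flux_density_pairing_le {r : ℝ} (hr₀ : 0 < r) (hr₁ : r < 1) (p₁ q₁ p₂ q₂ : ℝ) :
    (p₂ - p₁) * (r * p₁ / areaDensity r p₁ q₁) + (q₂ - q₁) * (q₁ / (r * areaDensity r p₁ q₁)) ≤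
      r / ((1 - r ^ 2) ^ 2 / 4) * (areaDensity r p₂ q₂ - areaDensity r p₁ q₁) := by
  set a := (1 - r ^ 2) ^ 2 / 4
  have ha : 0 < a := by
    have : 0 < 1 - r ^ 2 := by nlinarith
    positivity
  have hW : ∀ p q, areaDensity r p q = √(1 + a * p ^ 2 + a / r ^ 2 * q ^ 2) := fun p q => by
    rw [areaDensity]; congr 1; simp only [a]; field_simp; ring
  have key := sqrt_one_add_sq_gradient_ineq ha.le (by positivity : 0 ≤ a / r ^ 2) p₁ q₁ p₂ q₂
  rw [← hW, ← hW] at key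
  have hW₁ : 0 < areaDensity r p₁ q₁ := one_pos.trans_le (one_le_areaDensity r p₁ q₁)
  calc _ = r / a * ((a * p₁ * (p₂ - p₁) + a / r ^ 2 * q₁ * (q₂ - q₁)) / areaDensity r p₁ q₁) := by
        field_simp
    _ ≤ _ := by
        gcongr
        rw [div_le_iff₀ hW₁]
        linear_combination key

namespace Function.Periodic

variable {f f' g g' : ℝ → ℝ} {T : ℝ}

theorem periodic_of_hasDerivAt (hf : Periodic f T) (hf' : ∀ x, HasDerivAt f (f' x) x) :
    Periodic f' T := fun x => by
  have h := (hf' (x + T)).comp_add_const x T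
  rw [hf.funext] at h
  exact h.unique (hf' x)

theorem intervalIntegral_comp_add_right (hf : Periodic f T) (h : ℝ) :
    ∫ x in 0..T, f (x + h) = ∫ x in 0..T, f x := by
  rw [intervalIntegral.integral_comp_add_right, zero_add, add_comm T h,
    hf.intervalIntegral_add_eq h 0, zero_add]

theorem integral_mul_deriv_eq_neg_integral_deriv_mul (hf : Periodic f T) (hg : Periodic g T)
    (hf' : ∀ x, HasDerivAt f (f' x) x) (hg' : ∀ x, HasDerivAt g (g' x) x)
    (hf'i : IntervalIntegrable f' volume 0 T) (hg'i : IntervalIntegrable g' volume 0 T) :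
    ∫ x in 0..T, f x * g' x = -∫ x in 0..T, f' x * g x := by
  rw [integral_mul_deriv_eq_deriv_mul (fun x _ => hf' x) (fun x _ => hg' x) hf'i hg'i]
  have hfT := hf 0
  have hgT := hg 0
  rw [zero_add] at hfT hgT
  rw [hfT, hgT, sub_self, zero_sub]

end Function.Periodic

theorem periodic_of_hasDerivWithinAt {u : ℝ → ℝ → ℝ} {ur : ℝ → ℝ} {s : Set ℝ} {r T : ℝ}
    (hu : ∀ y, Periodic (u y) T) (hs : UniqueDiffWithinAt ℝ s r)
    (hur : ∀ θ, HasDerivWithinAt (u · θ) (ur θ) s r) : Periodic ur T := fun θ => by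
  have h := hur (θ + T)
  simp only [hu _ θ] at h
  exact hs.eq_deriv s h (hur θ)

theorem exists_bound_of_continuousOn_of_periodic {X E : Type*} [TopologicalSpace X]
    [SeminormedAddCommGroup E] {K : Set X} (hK : IsCompact K) {f : X → ℝ → E} {T : ℝ}
    (hT : 0 < T) (hf : ContinuousOn (fun p : X × ℝ => f p.1 p.2) (K ×ˢ univ))
    (hper : ∀ x ∈ K, Periodic (f x) T) : ∃ C, ∀ x ∈ K, ∀ θ, ‖f x θ‖ ≤ C := by
  obtain ⟨C, hC⟩ := (hK.prod isCompact_Icc).exists_bound_of_continuousOn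
    (hf.mono (prod_mono subset_rfl (subset_univ (Icc 0 T))))
  refine ⟨C, fun x hx θ => ?_⟩
  obtain ⟨φ, hφ, hθφ⟩ := (hper x hx).exists_mem_Ico₀ hT θ
  rw [hθφ]
  exact hC (x, φ) ⟨hx, Ico_subset_Icc_self hφ⟩

theorem ContinuousOn.continuous_prodMk_left {X Y Z : Type*} [TopologicalSpace X]
    [TopologicalSpace Y] [TopologicalSpace Z] {f : X × Y → Z} {s : Set X}
    (hf : ContinuousOn f (s ×ˢ univ)) {x : X} (hx : x ∈ s) : Continuous fun y => f (x, y) :=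
  hf.comp_continuous (continuous_const.prodMk continuous_id) fun _ => ⟨hx, trivial⟩

open scoped Pointwise in
theorem hasDerivAt_intervalIntegral_shift_sub_mul {f f' g : ℝ → ℝ} {a b : ℝ}
    (hf : ∀ x, HasDerivAt f (f' x) x) (hf' : Continuous f') (hg : Continuous g) :
    HasDerivAt (fun h => ∫ x in a..b, (f (x + h) - f x) * g x) (∫ x in a..b, f' x * g x) 0 := by
  have hfc : Continuous f := continuous_iff_continuousAt.2 fun x => (hf x).continuousAt
  have hK : IsCompact (uIcc a b + Metric.closedBall (0 : ℝ) 1) :=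
    isCompact_uIcc.add (isCompact_closedBall 0 1)
  obtain ⟨C, hC⟩ := hK.exists_bound_of_continuousOn hf'.continuousOn
  have hbound : ∀ x ∈ uIoc a b, ∀ h ∈ Metric.ball (0 : ℝ) 1,
      ‖f' (x + h) * g x‖ ≤ C * ‖g x‖ := fun x hx h hh => by
    rw [norm_mul]
    exact mul_le_mul_of_nonneg_right
      (hC _ (add_mem_add (uIoc_subset_uIcc hx) (Metric.ball_subset_closedBall hh)))
      (norm_nonneg _)
  have key := hasDerivAt_integral_of_dominated_loc_of_deriv_le (μ := volume)
    (F' := fun h x => f' (x + h) * g x) (bound := fun x => C * ‖g x‖)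
    (Metric.ball_mem_nhds 0 one_pos)
    (Eventually.of_forall fun h =>
      (((hfc.comp (continuous_add_const h)).sub hfc).mul hg).aestronglyMeasurable)
    ((((hfc.comp (continuous_add_const 0)).sub hfc).mul hg).intervalIntegrable _ _)
    ((hf'.comp (continuous_add_const 0)).mul hg).aestronglyMeasurable (ae_of_all _ hbound)
    ((continuous_const.mul hg.norm).intervalIntegrable _ _)
    (ae_of_all _ fun x _ h _ =>
      ((hf (x + h)).comp_const_add x h).sub_const (f x) |>.mul_const (g x))
  simpa using key.2

section ParametricIntegral

variable {s : Set ℝ} {a b C : ℝ} {F F' : ℝ → ℝ → ℝ}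

theorem continuousOn_intervalIntegral_of_hasDerivWithinAt_le (hs : Convex ℝ s)
    (hF : ∀ y ∈ s, IntervalIntegrable (F y) volume a b)
    (hF' : ∀ θ ∈ uIcc a b, ∀ y ∈ s, HasDerivWithinAt (F · θ) (F' y θ) s y)
    (hC : ∀ θ ∈ uIcc a b, ∀ y ∈ s, ‖F' y θ‖ ≤ C) :
    ContinuousOn (fun y => ∫ θ in a..b, F y θ) s := by
  refine (LipschitzOnWith.of_dist_le_mul (K := Real.toNNReal (C * |b - a|)) fun y hy z hz => ?_)
    |>.continuousOn
  rw [dist_eq_norm, ← integral_sub (hF y hy) (hF z hz), dist_eq_norm]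
  calc ‖∫ θ in a..b, F y θ - F z θ‖ ≤ C * ‖y - z‖ * |b - a| :=
        norm_integral_le_of_norm_le_const fun θ hθ =>
          hs.norm_image_sub_le_of_norm_hasDerivWithin_le (hF' θ (uIoc_subset_uIcc hθ))
            (hC θ (uIoc_subset_uIcc hθ)) hz hy
    _ = C * |b - a| * ‖y - z‖ := by ring
    _ ≤ _ := by gcongr; exact Real.le_coe_toNNReal _

theorem hasDerivAt_intervalIntegral_of_hasDerivWithinAt_le
    (hF : ∀ y ∈ s, IntervalIntegrable (F y) volume a b)
    (hF'i : ∀ y ∈ s, IntervalIntegrable (F' y) volume a b)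
    (hF' : ∀ θ ∈ uIcc a b, ∀ y ∈ s, HasDerivWithinAt (F · θ) (F' y θ) s y)
    (hC : ∀ θ ∈ uIcc a b, ∀ y ∈ s, ‖F' y θ‖ ≤ C) {y : ℝ} (hy : y ∈ interior s) :
    HasDerivAt (fun y => ∫ θ in a..b, F y θ) (∫ θ in a..b, F' y θ) y := by
  have hys := interior_subset hy
  refine (intervalIntegral.hasDerivAt_integral_of_dominated_loc_of_deriv_le (bound := fun _ => C)
    (isOpen_interior.mem_nhds hy) ?_ (hF y hys) (hF'i y hys).def'.aestronglyMeasurable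
    (ae_of_all _ fun θ hθ z hz => hC θ (uIoc_subset_uIcc hθ) z (interior_subset hz))
    intervalIntegrable_const
    (ae_of_all _ fun θ hθ z hz =>
      (hF' θ (uIoc_subset_uIcc hθ) z (interior_subset hz)).hasDerivAt
        (mem_interior_iff_mem_nhds.1 hz))).2
  filter_upwards [mem_interior_iff_mem_nhds.1 hy] with z hz
  exact (hF z hz).def'.aestronglyMeasurable

theorem antitoneOn_intervalIntegral_of_hasDerivWithinAt_le (hs : Convex ℝ s)
    (hF : ∀ y ∈ s, IntervalIntegrable (F y) volume a b)
    (hF'i : ∀ y ∈ s, IntervalIntegrable (F' y) volume a b)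
    (hF' : ∀ θ ∈ uIcc a b, ∀ y ∈ s, HasDerivWithinAt (F · θ) (F' y θ) s y)
    (hC : ∀ θ ∈ uIcc a b, ∀ y ∈ s, ‖F' y θ‖ ≤ C)
    (hneg : ∀ y ∈ interior s, ∫ θ in a..b, F' y θ ≤ 0) :
    AntitoneOn (fun y => ∫ θ in a..b, F y θ) s := by
  have hderiv := fun y (hy : y ∈ interior s) =>
    hasDerivAt_intervalIntegral_of_hasDerivWithinAt_le hF hF'i hF' hC hy
  refine antitoneOn_of_deriv_nonpos hs
    (continuousOn_intervalIntegral_of_hasDerivWithinAt_le hs hF hF' hC)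
    (fun y hy => (hderiv y hy).differentiableAt.differentiableWithinAt) fun y hy => ?_
  rw [(hderiv y hy).deriv]
  exact hneg y hy

theorem continuousOn_intervalIntegral_of_continuousOn_prod {X : Type*} [TopologicalSpace X]
    {s : Set X} {f : X → ℝ → ℝ} (hf : ContinuousOn (fun p : X × ℝ => f p.1 p.2) (s ×ˢ univ))
    (a b : ℝ) : ContinuousOn (fun x => ∫ θ in a..b, f x θ) s := by
  rw [continuousOn_iff_continuous_domRestrict]
  exact continuous_parametric_intervalIntegral_of_continuous' (f := fun (x : s) θ => f x θ)
    (hf.comp_continuous (continuous_subtype_val.prodMap continuous_id) fun p => ⟨p.1.2, trivial⟩)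
    a b

end ParametricIntegral

theorem eq_of_antitoneOn_of_hasDerivAt_zero {G : ℝ → ℝ → ℝ} {F : ℝ → ℝ} {s : Set ℝ}
    (hanti : ∀ h, AntitoneOn (G h) s) (hG₀ : ∀ r ∈ s, G 0 r = 0)
    (hderiv : ∀ r ∈ s, HasDerivAt (G · r) (F r) 0) :
    ∀ r₁ ∈ s, ∀ r₂ ∈ s, F r₁ = F r₂ := by
  have hslope : ∀ r ∈ s, Tendsto (fun h => h⁻¹ * G h r) (𝓝[≠] 0) (𝓝 (F r)) := fun r hr =>
    (hasDerivAt_iff_tendsto_slope.1 (hderiv r hr)).congr fun h => by simp [slope, hG₀ r hr]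
  have hpos : 𝓝[>] (0 : ℝ) ≤ 𝓝[≠] 0 := nhdsWithin_mono _ fun h hh => ne_of_gt hh
  have hneg : 𝓝[<] (0 : ℝ) ≤ 𝓝[≠] 0 := nhdsWithin_mono _ fun h hh => ne_of_lt hh
  have hle : ∀ r₁ ∈ s, ∀ r₂ ∈ s, r₁ ≤ r₂ → F r₂ ≤ F r₁ := fun r₁ h₁ r₂ h₂ h₁₂ =>
    le_of_tendsto_of_tendsto ((hslope r₂ h₂).mono_left hpos) ((hslope r₁ h₁).mono_left hpos)
      (eventually_nhdsWithin_of_forall fun h (hh : 0 < h) =>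
        mul_le_mul_of_nonneg_left (hanti h h₁ h₂ h₁₂) (inv_nonneg.2 hh.le))
  have hge : ∀ r₁ ∈ s, ∀ r₂ ∈ s, r₁ ≤ r₂ → F r₁ ≤ F r₂ := fun r₁ h₁ r₂ h₂ h₁₂ =>
    le_of_tendsto_of_tendsto ((hslope r₁ h₁).mono_left hneg) ((hslope r₂ h₂).mono_left hneg)
      (eventually_nhdsWithin_of_forall fun h (hh : h < 0) =>
        mul_le_mul_of_nonpos_left (hanti h h₁ h₂ h₁₂) (inv_nonpos.2 hh.le))
  intro r₁ h₁ r₂ h₂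
  rcases le_total r₁ r₂ with h₁₂ | h₂₁
  · exact le_antisymm (hge r₁ h₁ r₂ h₂ h₁₂) (hle r₁ h₁ r₂ h₂ h₁₂)
  · exact le_antisymm (hle r₂ h₂ r₁ h₁ h₂₁) (hge r₂ h₂ r₁ h₁ h₂₁)

theorem integral_deriv_shift_pairing_nonpos {r T h : ℝ} (hT : 0 ≤ T) (hr₀ : 0 < r) (hr₁ : r < 1)
    {v p q P : ℝ → ℝ} (hv : ∀ θ, HasDerivAt v (q θ) θ) (hvper : Periodic v T)
    (hp : Continuous p) (hpper : Periodic p T) (hq : Continuous q) (hP : Continuous P)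
    (hdiv : ∀ θ, HasDerivAt (fun φ => q φ / (r * areaDensity r (p φ) (q φ))) (-P θ) θ) :
    ∫ θ in 0..T, ((p (θ + h) - p θ) * (r * p θ / areaDensity r (p θ) (q θ)) +
      (v (θ + h) - v θ) * P θ) ≤ 0 := by
  set W := fun θ => areaDensity r (p θ) (q θ) with hW
  have hqper : Periodic q T := hvper.periodic_of_hasDerivAt hv
  have hWper : Periodic W T := fun θ => by simp only [hW, hpper θ, hqper θ]
  have hWc : Continuous W := continuousOn_univ.1 <|
    continuousOn_const.areaDensity hp.continuousOn hq.continuousOn fun _ _ => hr₀.ne'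
  have hWne : ∀ θ, W θ ≠ 0 := fun θ => (one_pos.trans_le (one_le_areaDensity _ _ _)).ne'
  have hvc : Continuous v := continuous_iff_continuousAt.2 fun θ => (hv θ).continuousAt
  have hA : Continuous fun θ => r * p θ / W θ := (continuous_const.mul hp).div hWc hWne
  have hB : Continuous fun θ => q θ / (r * W θ) :=
    hq.div (continuous_const.mul hWc) fun θ => mul_ne_zero hr₀.ne' (hWne θ)
  have hshift : ∀ {f : ℝ → ℝ}, Continuous f → Continuous fun θ => f (θ + h) - f θ :=
    fun hf => (hf.comp (continuous_add_const h)).sub hf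
  have hparts : ∫ θ in 0..T, (v (θ + h) - v θ) * P θ =
      ∫ θ in 0..T, (q (θ + h) - q θ) * (q θ / (r * W θ)) := by
    have hibp := Periodic.integral_mul_deriv_eq_neg_integral_deriv_mul
      (f := fun θ => v (θ + h) - v θ) (g := fun θ => q θ / (r * W θ))
      (fun θ => by simp only; rw [add_right_comm, hvper, hvper])
      (fun θ => by simp only [hqper θ, hWper θ])
      (fun θ => ((hv (θ + h)).comp_add_const θ h).sub (hv θ)) hdiv
      ((hshift hq).intervalIntegrable _ _) (hP.neg.intervalIntegrable _ _)
    simpa only [mul_neg, intervalIntegral.integral_neg, neg_inj] using hibp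
  have hconvex : ∫ θ in 0..T, ((p (θ + h) - p θ) * (r * p θ / W θ) +
        (q (θ + h) - q θ) * (q θ / (r * W θ))) ≤
      ∫ θ in 0..T, r / ((1 - r ^ 2) ^ 2 / 4) * (W (θ + h) - W θ) :=
    integral_mono_on hT ((((hshift hp).mul hA).add ((hshift hq).mul hB)).intervalIntegrable _ _)
      ((continuous_const.mul (hshift hWc)).intervalIntegrable _ _)
      fun θ _ => flux_density_pairing_le hr₀ hr₁ _ _ _ _
  have hzero : ∫ θ in 0..T, r / ((1 - r ^ 2) ^ 2 / 4) * (W (θ + h) - W θ) = 0 := by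
    rw [intervalIntegral.integral_const_mul, intervalIntegral.integral_sub,
      hWper.intervalIntegral_comp_add_right, sub_self, mul_zero]
    exacts [(hWc.comp (continuous_add_const h)).intervalIntegrable _ _, hWc.intervalIntegrable _ _]
  calc _ = (∫ θ in 0..T, (p (θ + h) - p θ) * (r * p θ / W θ)) +
        ∫ θ in 0..T, (v (θ + h) - v θ) * P θ :=
        integral_add (((hshift hp).mul hA).intervalIntegrable _ _)
          (((hshift hvc).mul hP).intervalIntegrable _ _)
    _ = ∫ θ in 0..T, ((p (θ + h) - p θ) * (r * p θ / W θ) +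
        (q (θ + h) - q θ) * (q θ / (r * W θ))) := by
        rw [hparts, ← intervalIntegral.integral_add]
        exacts [((hshift hp).mul hA).intervalIntegrable _ _,
          ((hshift hq).mul hB).intervalIntegrable _ _]
    _ ≤ 0 := hconvex.trans hzero.le

theorem norm_deriv_shift_pairing_le {r h θ Cp Cq CP : ℝ} {v p q P : ℝ → ℝ} (hr₀ : 0 ≤ r)
    (hr₁ : r ≤ 1) (hv : ∀ x, HasDerivAt v (q x) x) (hp : ∀ x, ‖p x‖ ≤ Cp) (hq : ∀ x, ‖q x‖ ≤ Cq)
    (hP : ‖P θ‖ ≤ CP) :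
    ‖(p (θ + h) - p θ) * (r * p θ / areaDensity r (p θ) (q θ)) + (v (θ + h) - v θ) * P θ‖ ≤
      (Cp + Cp) * Cp + Cq * |h| * CP := by
  have hΔv : ‖v (θ + h) - v θ‖ ≤ Cq * |h| := by
    simpa using convex_univ.norm_image_sub_le_of_norm_hasDerivWithin_le
      (fun x _ => (hv x).hasDerivWithinAt) (fun x _ => hq x) (mem_univ θ) (mem_univ (θ + h))
  have hA : ‖r * p θ / areaDensity r (p θ) (q θ)‖ ≤ Cp :=
    (abs_mul_div_areaDensity_le hr₀ hr₁ _ _).trans (hp θ)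
  have hCp : 0 ≤ Cp := (norm_nonneg _).trans (hp 0)
  have hCq : 0 ≤ Cq := (norm_nonneg _).trans (hq 0)
  calc _ ≤ ‖p (θ + h) - p θ‖ * ‖r * p θ / areaDensity r (p θ) (q θ)‖ +
        ‖v (θ + h) - v θ‖ * ‖P θ‖ := (norm_add_le _ _).trans_eq (by rw [norm_mul, norm_mul])
    _ ≤ (‖p (θ + h)‖ + ‖p θ‖) * Cp + Cq * |h| * CP := by
        gcongr
        exact norm_sub_le _ _
    _ ≤ (Cp + Cp) * Cp + Cq * |h| * CP := by gcongr <;> exact hp _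

theorem antitoneOn_integral_shift_pairing {r₀ T h : ℝ} (hr₀ : 0 < r₀) (hT : 0 < T)
    {u ur uθ P : ℝ → ℝ → ℝ} (hper : ∀ r, Periodic (u r) T)
    (hur : ∀ r ∈ Ico r₀ 1, ∀ θ, HasDerivWithinAt (u · θ) (ur r θ) (Ico r₀ 1) r)
    (huθ : ∀ r ∈ Ico r₀ 1, ∀ θ, HasDerivAt (u r) (uθ r θ) θ)
    (hcont : ContinuousOn (fun p : ℝ × ℝ => (ur p.1 p.2, uθ p.1 p.2)) (Ico r₀ 1 ×ˢ univ))
    (hP : ∀ r ∈ Ico r₀ 1, ∀ θ, HasDerivWithinAt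
      (fun s => s * ur s θ / areaDensity s (ur s θ) (uθ s θ)) (P r θ) (Ico r₀ 1) r)
    (hPcont : ContinuousOn (fun p : ℝ × ℝ => P p.1 p.2) (Ico r₀ 1 ×ˢ univ))
    (hdiv : ∀ r ∈ Ico r₀ 1, ∀ θ, HasDerivAt
      (fun φ => uθ r φ / (r * areaDensity r (ur r φ) (uθ r φ))) (-P r θ) θ) :
    AntitoneOn (fun r => ∫ θ in 0..T,
      (u r (θ + h) - u r θ) * (r * ur r θ / areaDensity r (ur r θ) (uθ r θ))) (Ico r₀ 1) := by
  intro r₁ hr₁ r₂ hr₂ h₁₂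
  set S := Ico r₀ 1
  have hsub : Icc r₁ r₂ ⊆ S := Icc_subset_Ico hr₁.1 hr₂.2
  have hpos : ∀ y ∈ S, 0 < y := fun y hy => hr₀.trans_le hy.1
  have hurc : ∀ y ∈ S, Continuous (ur y) := fun y hy =>
    continuous_fst.comp (hcont.continuous_prodMk_left hy)
  have huθc : ∀ y ∈ S, Continuous (uθ y) := fun y hy =>
    continuous_snd.comp (hcont.continuous_prodMk_left hy)
  have huc : ∀ y ∈ S, Continuous (u y) := fun y hy =>
    continuous_iff_continuousAt.2 fun θ => (huθ y hy θ).continuousAt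
  have hAc : ∀ y ∈ S, Continuous fun θ => y * ur y θ / areaDensity y (ur y θ) (uθ y θ) :=
    fun y hy => continuous_mul_div_areaDensity (hpos y hy).ne' (hurc y hy) (huθc y hy)
  have hshift : ∀ {f : ℝ → ℝ}, Continuous f → Continuous fun θ => f (θ + h) - f θ :=
    fun hf => (hf.comp (continuous_add_const h)).sub hf
  have hurper : ∀ y ∈ S, Periodic (ur y) T := fun y hy =>
    periodic_of_hasDerivWithinAt hper (uniqueDiffOn_Ico r₀ 1 y hy) (hur y hy)
  obtain ⟨Cp, hCp⟩ := exists_bound_of_continuousOn_of_periodic isCompact_Icc hT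
    ((continuous_fst.comp_continuousOn hcont).mono (prod_mono hsub subset_rfl))
    fun y hy => hurper y (hsub hy)
  obtain ⟨Cq, hCq⟩ := exists_bound_of_continuousOn_of_periodic isCompact_Icc hT
    ((continuous_snd.comp_continuousOn hcont).mono (prod_mono hsub subset_rfl))
    fun y hy => (hper y).periodic_of_hasDerivAt (huθ y (hsub hy))
  obtain ⟨CP, hCP⟩ := (isCompact_Icc.prod (isCompact_uIcc (a := 0) (b := T)))
    |>.exists_bound_of_continuousOn (hPcont.mono (prod_mono hsub (subset_univ _)))
  refine antitoneOn_intervalIntegral_of_hasDerivWithinAt_le (convex_Icc r₁ r₂) (a := 0) (b := T)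
    (F := fun y θ => (u y (θ + h) - u y θ) * (y * ur y θ / areaDensity y (ur y θ) (uθ y θ)))
    (F' := fun y θ => (ur y (θ + h) - ur y θ) * (y * ur y θ / areaDensity y (ur y θ) (uθ y θ)) +
      (u y (θ + h) - u y θ) * P y θ) (C := (Cp + Cp) * Cp + Cq * |h| * CP)
    (fun y hy => ?_) (fun y hy => ?_) (fun θ _ y hy => ?_) (fun θ hθ y hy => ?_) (fun y hy => ?_)
    ⟨le_rfl, h₁₂⟩ ⟨h₁₂, le_rfl⟩ h₁₂
  · exact ((hshift (huc y (hsub hy))).mul (hAc y (hsub hy))).intervalIntegrable _ _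
  · exact (((hshift (hurc y (hsub hy))).mul (hAc y (hsub hy))).add
      ((hshift (huc y (hsub hy))).mul (hPcont.continuous_prodMk_left (hsub hy))))
      |>.intervalIntegrable _ _
  · exact (((hur y (hsub hy) (θ + h)).sub (hur y (hsub hy) θ)).mul (hP y (hsub hy) θ)).mono hsub
  · exact norm_deriv_shift_pairing_le (hpos y (hsub hy)).le (hsub hy).2.le (huθ y (hsub hy))
      (hCp y hy) (hCq y hy) (hCP (y, θ) ⟨hy, hθ⟩)
  · have hy' := hsub (interior_subset hy)
    exact integral_deriv_shift_pairing_nonpos hT.le (hpos y hy') hy'.2 (huθ y hy') (hper y)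
      (hurc y hy') (hurper y hy') (huθc y hy') (hPcont.continuous_prodMk_left hy') (hdiv y hy')

theorem hasDerivAt_integral_shift_pairing {r a b : ℝ} (hr : r ≠ 0) {v p q : ℝ → ℝ}
    (hv : ∀ θ, HasDerivAt v (q θ) θ) (hp : Continuous p) (hq : Continuous q) :
    HasDerivAt (fun h => ∫ θ in a..b, (v (θ + h) - v θ) * (r * p θ / areaDensity r (p θ) (q θ)))
      (∫ θ in a..b, r * p θ * q θ / areaDensity r (p θ) (q θ)) 0 := by
  convert hasDerivAt_intervalIntegral_shift_sub_mul hv hq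
    (continuous_mul_div_areaDensity hr hp hq) using 1
  exact integral_congr fun θ _ => by ring

theorem continuousOn_integral_flux {s : Set ℝ} (hs : ∀ r ∈ s, r ≠ 0) {ur uθ : ℝ → ℝ → ℝ}
    (hcont : ContinuousOn (fun p : ℝ × ℝ => (ur p.1 p.2, uθ p.1 p.2)) (s ×ˢ univ)) (a b : ℝ) :
    ContinuousOn
      (fun r => ∫ θ in a..b, r * ur r θ * uθ r θ / areaDensity r (ur r θ) (uθ r θ)) s := by
  have hur : ContinuousOn (fun p : ℝ × ℝ => ur p.1 p.2) (s ×ˢ univ) :=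
    continuous_fst.comp_continuousOn hcont
  have huθ : ContinuousOn (fun p : ℝ × ℝ => uθ p.1 p.2) (s ×ˢ univ) :=
    continuous_snd.comp_continuousOn hcont
  exact continuousOn_intervalIntegral_of_continuousOn_prod
    (f := fun r θ => r * ur r θ * uθ r θ / areaDensity r (ur r θ) (uθ r θ))
    (((continuousOn_fst.mul hur).mul huθ).div
      (continuousOn_fst.areaDensity hur huθ fun p hp => hs _ hp.1)
      fun _ _ => (one_pos.trans_le (one_le_areaDensity _ _ _)).ne') a b

theorem rotational_flux_constant_general
    (r₀ : ℝ) (hr₀ : 0 < r₀)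
    (u ur uθ W P Q : ℝ → ℝ → ℝ)
    (hper : ∀ r θ, u r (θ + 2 * Real.pi) = u r θ)
    (hur : ∀ r ∈ Set.Ico r₀ 1, ∀ θ : ℝ,
      HasDerivWithinAt (fun s => u s θ) (ur r θ) (Set.Ico r₀ 1) r)
    (huθ : ∀ r ∈ Set.Ico r₀ 1, ∀ θ : ℝ, HasDerivAt (fun φ => u r φ) (uθ r θ) θ)
    (hW : ∀ r θ, W r θ =
      Real.sqrt (1 + ((1 - r ^ 2) ^ 2 / 4) * ((ur r θ) ^ 2 + (uθ r θ) ^ 2 / r ^ 2)))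
    (hcont : ContinuousOn (fun p : ℝ × ℝ => (ur p.1 p.2, uθ p.1 p.2))
      (Set.Ico r₀ 1 ×ˢ (Set.univ : Set ℝ)))
    (hP : ∀ r ∈ Set.Ico r₀ 1, ∀ θ : ℝ,
      HasDerivWithinAt (fun s => s * ur s θ / W s θ) (P r θ) (Set.Ico r₀ 1) r)
    (hQ : ∀ r ∈ Set.Ico r₀ 1, ∀ θ : ℝ,
      HasDerivAt (fun φ => uθ r φ / (r * W r φ)) (Q r θ) θ)
    (hPcont : ContinuousOn (fun p : ℝ × ℝ => P p.1 p.2)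
      (Set.Ico r₀ 1 ×ˢ (Set.univ : Set ℝ)))
    (hdiv : ∀ r ∈ Set.Ico r₀ 1, ∀ θ : ℝ, P r θ + Q r θ = 0) :
    (∀ r₁ ∈ Set.Ico r₀ 1, ∀ r₂ ∈ Set.Ico r₀ 1,
      (∫ θ in (0:ℝ)..(2 * Real.pi), r₁ * ur r₁ θ * uθ r₁ θ / W r₁ θ)
        = ∫ θ in (0:ℝ)..(2 * Real.pi), r₂ * ur r₂ θ * uθ r₂ θ / W r₂ θ) ∧
    ((∀ r ∈ Set.Icc r₀ 1, ∀ θ : ℝ,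
        HasDerivWithinAt (fun s => u s θ) (ur r θ) (Set.Icc r₀ 1) r) →
      (∀ r ∈ Set.Icc r₀ 1, ∀ θ : ℝ, HasDerivAt (fun φ => u r φ) (uθ r θ) θ) →
      ContinuousOn (fun p : ℝ × ℝ => (ur p.1 p.2, uθ p.1 p.2))
        (Set.Icc r₀ 1 ×ˢ (Set.univ : Set ℝ)) →
      ∀ r ∈ Set.Ico r₀ 1,
        (∫ θ in (0:ℝ)..(2 * Real.pi), r * ur r θ * uθ r θ / W r θ)
          = ∫ θ in (0:ℝ)..(2 * Real.pi), ur 1 θ * uθ 1 θ) := by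
  obtain rfl : W = fun r θ => areaDensity r (ur r θ) (uθ r θ) := funext fun r => funext (hW r)
  have hQP : ∀ r ∈ Ico r₀ 1, ∀ θ, HasDerivAt
      (fun φ => uθ r φ / (r * areaDensity r (ur r φ) (uθ r φ))) (-P r θ) θ := fun r hr θ => by
    rw [← eq_neg_of_add_eq_zero_right (hdiv r hr θ)]
    exact hQ r hr θ
  have hconst := eq_of_antitoneOn_of_hasDerivAt_zero
    (fun h => antitoneOn_integral_shift_pairing hr₀ Real.two_pi_pos (h := h) hper hur huθ hcont hP
      hPcont hQP) (fun r _ => by simp) fun r hr =>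
    hasDerivAt_integral_shift_pairing (hr₀.trans_le hr.1).ne' (huθ r hr)
      (continuous_fst.comp (hcont.continuous_prodMk_left hr))
      (continuous_snd.comp (hcont.continuous_prodMk_left hr))
  refine ⟨hconst, fun _ _ hcont' r hr => ?_⟩
  have hr₀₁ : r₀ < 1 := hr.1.trans_lt hr.2
  have hEq := EqOn.of_subset_closure (fun y hy => hconst y hy r hr)
    (continuousOn_integral_flux (fun y hy => (hr₀.trans_le hy.1).ne') hcont' 0 (2 * Real.pi))
    continuousOn_const Ico_subset_Icc_self (closure_Ico hr₀₁.ne).ge (right_mem_Icc.2 hr₀₁.le)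
  simpa [areaDensity_one] using hEq.symm

/-- Rotational flux of a horizontal minimal annular end: for a minimal vertical
graph `t = u(r,θ)` over the annulus `r₀ ≤ r < 1` (polar coordinates of the
Poincaré disc), the flux integral `∫₀^{2π} r u_r u_θ / W dθ` is independent of
`r`; if moreover `u` extends C¹ up to `r = 1`, its value equals
`∫₀^{2π} u_r(1,θ) u_θ(1,θ) dθ`. -/
theorem rotational_flux_constant
    (r₀ : ℝ) (hr₀ : 0 < r₀) (hr₀1 : r₀ < 1)
    (u ur uθ W P Q : ℝ → ℝ → ℝ)
    (hper : ∀ r θ, u r (θ + 2 * Real.pi) = u r θ)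
    (hur : ∀ r ∈ Set.Ico r₀ 1, ∀ θ : ℝ,
      HasDerivWithinAt (fun s => u s θ) (ur r θ) (Set.Ico r₀ 1) r)
    (huθ : ∀ r ∈ Set.Ico r₀ 1, ∀ θ : ℝ, HasDerivAt (fun φ => u r φ) (uθ r θ) θ)
    (hW : ∀ r θ, W r θ =
      Real.sqrt (1 + ((1 - r ^ 2) ^ 2 / 4) * ((ur r θ) ^ 2 + (uθ r θ) ^ 2 / r ^ 2)))
    (hcont : ContinuousOn (fun p : ℝ × ℝ => (ur p.1 p.2, uθ p.1 p.2))
      (Set.Ico r₀ 1 ×ˢ (Set.univ : Set ℝ)))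
    (hP : ∀ r ∈ Set.Ico r₀ 1, ∀ θ : ℝ,
      HasDerivWithinAt (fun s => s * ur s θ / W s θ) (P r θ) (Set.Ico r₀ 1) r)
    (hQ : ∀ r ∈ Set.Ico r₀ 1, ∀ θ : ℝ,
      HasDerivAt (fun φ => uθ r φ / (r * W r φ)) (Q r θ) θ)
    (hPcont : ContinuousOn (fun p : ℝ × ℝ => P p.1 p.2)
      (Set.Ico r₀ 1 ×ˢ (Set.univ : Set ℝ)))
    (hdiv : ∀ r ∈ Set.Ico r₀ 1, ∀ θ : ℝ, P r θ + Q r θ = 0) :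
    (∀ r₁ ∈ Set.Ico r₀ 1, ∀ r₂ ∈ Set.Ico r₀ 1,
      (∫ θ in (0:ℝ)..(2 * Real.pi), r₁ * ur r₁ θ * uθ r₁ θ / W r₁ θ)
        = ∫ θ in (0:ℝ)..(2 * Real.pi), r₂ * ur r₂ θ * uθ r₂ θ / W r₂ θ) ∧
    ((∀ r ∈ Set.Icc r₀ 1, ∀ θ : ℝ,
        HasDerivWithinAt (fun s => u s θ) (ur r θ) (Set.Icc r₀ 1) r) →
      (∀ r ∈ Set.Icc r₀ 1, ∀ θ : ℝ, HasDerivAt (fun φ => u r φ) (uθ r θ) θ) →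
      ContinuousOn (fun p : ℝ × ℝ => (ur p.1 p.2, uθ p.1 p.2))
        (Set.Icc r₀ 1 ×ˢ (Set.univ : Set ℝ)) →
      ∀ r ∈ Set.Ico r₀ 1,
        (∫ θ in (0:ℝ)..(2 * Real.pi), r * ur r θ * uθ r θ / W r θ)
          = ∫ θ in (0:ℝ)..(2 * Real.pi), ur 1 θ * uθ 1 θ) :=
  rotational_flux_constant_general r₀ hr₀ u ur uθ W P Q hper hur huθ hW hcont hP hQ hPcont hdiv
end

section
/- Let 0 < r₀ < 1 and let u : [r₀, 1] × ℝ → ℝ be continuously differentiable and 2π-periodic in its second variable θ. Define W(r,θ) := √(1 + ((1−r²)²/4)·(u_r(r,θ)² + u_θ(r,θ)²/r²)). Then sup_{θ ∈ [0,2π]} | (1/(2W(r,θ)))·( 4r/(r²−1) + (r²−1)·u_θ(r,θ)²/r ) − 1/(r−1) − 1/2 | tends to 0 as r → 1⁻. -/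
open Set

private lemma aux_sq_lt_one {r : ℝ} (h0 : 0 < r) (h1 : r < 1) : r ^ 2 < 1 := by nlinarith

private lemma aux_one_plus_sq {r : ℝ} (h0 : 0 < r) (h1 : r < 1) : (1 + r) ^ 2 ≤ 4 := by
  nlinarith

private lemma aux_quarter {r : ℝ} (h0 : 0 < r) (h1 : r < 1) :
    (1 - r ^ 2) ^ 2 / 4 ≤ (1 - r) ^ 2 := by
  have h6 : (0:ℝ) ≤ (1 - r) ^ 2 * (4 - (1 + r) ^ 2) :=
    mul_nonneg (sq_nonneg _) (by linarith [aux_one_plus_sq h0 h1])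
  nlinarith [h6]

private lemma aux_sqrt_lb {x : ℝ} (hx : 0 ≤ x) : 1 ≤ Real.sqrt (1 + x) := by
  have h := Real.sqrt_le_sqrt (show (1:ℝ) ≤ 1 + x by linarith)
  simpa using h

private lemma aux_sqrt_ub {x : ℝ} (hx : 0 ≤ x) : Real.sqrt (1 + x) ≤ 1 + x / 2 := by
  rw [show (1:ℝ) + x / 2 = Real.sqrt ((1 + x / 2) ^ 2) from (Real.sqrt_sq (by linarith)).symm]
  exact Real.sqrt_le_sqrt (by nlinarith [sq_nonneg x])

private lemma auxP (r a w B D : ℝ) (hr0 : 0 < r) (hr1 : r < 1) (hw1 : 1 ≤ w)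
    (hwle : w - 1 ≤ (1 - r) ^ 2 * B / 2) (hB0 : 0 ≤ B)
    (hA : (1 + r) ^ 2 * a ^ 2 ≤ D) :
    |4 * r ^ 2 + (r ^ 2 - 1) ^ 2 * a ^ 2 - w * r * (r + 1) ^ 2|
      ≤ (1 - r) ^ 2 * (1 + D + 2 * B) := by
  have hD0 : 0 ≤ D := le_trans (by positivity) hA
  have h4 : (1 + r) ^ 2 ≤ 4 := aux_one_plus_sq hr0 hr1
  have hr4 : r * (1 + r) ^ 2 ≤ 4 := by nlinarith [sq_nonneg (1 + r)]
  have hmid : (r ^ 2 - 1) ^ 2 * a ^ 2 ≤ (1 - r) ^ 2 * D := by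
    have h : (r ^ 2 - 1) ^ 2 * a ^ 2 = (1 - r) ^ 2 * ((1 + r) ^ 2 * a ^ 2) := by ring
    rw [h]
    exact mul_le_mul_of_nonneg_left hA (sq_nonneg _)
  have hmid0 : 0 ≤ (r ^ 2 - 1) ^ 2 * a ^ 2 := mul_nonneg (sq_nonneg _) (sq_nonneg _)
  have hprod : (w - 1) * (r * (1 + r) ^ 2) ≤ ((1 - r) ^ 2 * B / 2) * 4 :=
    mul_le_mul hwle hr4 (by positivity) (by positivity)
  have hprod0 : 0 ≤ (w - 1) * (r * (1 + r) ^ 2) :=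
    mul_nonneg (by linarith) (by positivity)
  have hcube : 0 ≤ (1 - r) ^ 2 * (1 - r) :=
    mul_nonneg (sq_nonneg _) (by linarith)
  have hBD : 0 ≤ (1 - r) ^ 2 * B := mul_nonneg (sq_nonneg _) hB0
  have hDD : 0 ≤ (1 - r) ^ 2 * D := mul_nonneg (sq_nonneg _) hD0
  rw [abs_le]
  constructor
  · nlinarith [mul_nonneg hr0.le (sq_nonneg (1 - r))]
  · nlinarith [mul_nonneg hr0.le (sq_nonneg (1 - r)), sq_nonneg (1 - r)]

private lemma auxden (r₀ r w : ℝ) (hr₀ : 0 < r₀) (hrl : r₀ ≤ r) (hr1 : r < 1)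
    (hw1 : 1 ≤ w) : 2 * r₀ * (1 - r) ≤ 2 * w * r * (1 - r ^ 2) := by
  have hr0 : 0 < r := lt_of_lt_of_le hr₀ hrl
  have h1 : r₀ ≤ w * r * (1 + r) := by
    nlinarith [mul_nonneg (mul_nonneg (by linarith : (0:ℝ) ≤ w) hr0.le) hr0.le,
      mul_nonneg (by linarith : (0:ℝ) ≤ w - 1) hr0.le]
  nlinarith [mul_le_mul_of_nonneg_right h1 (show (0:ℝ) ≤ 1 - r by linarith)]

/-- The asymptotic expansion
`(1/(2W))·(4r/(r²−1) + (r²−1)u_θ²/r) = 1/(r−1) + 1/2 + O(1−r)`,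
uniformly in θ, for a C¹ vertical graph over the annulus `r₀ ≤ r ≤ 1`. -/
theorem dilation_flux_expansion
    (r₀ : ℝ) (hr₀ : 0 < r₀) (hr₀1 : r₀ < 1)
    (u ur uθ W : ℝ → ℝ → ℝ)
    (hper : ∀ r θ, u r (θ + 2 * Real.pi) = u r θ)
    (hur : ∀ r ∈ Set.Icc r₀ 1, ∀ θ : ℝ,
      HasDerivWithinAt (fun s => u s θ) (ur r θ) (Set.Icc r₀ 1) r)
    (huθ : ∀ r ∈ Set.Icc r₀ 1, ∀ θ : ℝ, HasDerivAt (fun φ => u r φ) (uθ r θ) θ)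
    (hcont : ContinuousOn (fun p : ℝ × ℝ => (ur p.1 p.2, uθ p.1 p.2))
      (Set.Icc r₀ 1 ×ˢ (Set.univ : Set ℝ)))
    (hW : ∀ r θ, W r θ =
      Real.sqrt (1 + ((1 - r ^ 2) ^ 2 / 4) * ((ur r θ) ^ 2 + (uθ r θ) ^ 2 / r ^ 2))) :
    ∀ ε > 0, ∃ δ > 0, ∀ r ∈ Set.Ico r₀ 1, 1 - δ < r →
      ∀ θ ∈ Set.Icc (0 : ℝ) (2 * Real.pi),
        |(1 / (2 * W r θ)) * (4 * r / (r ^ 2 - 1) + (r ^ 2 - 1) * (uθ r θ) ^ 2 / r)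
          - 1 / (r - 1) - 1 / 2| < ε := by
  intro ε hε
  have hcomp : IsCompact (Icc r₀ 1 ×ˢ Icc (0:ℝ) (2*Real.pi)) :=
    isCompact_Icc.prod isCompact_Icc
  obtain ⟨M, hM⟩ := hcomp.exists_bound_of_continuousOn
    (hcont.mono (fun p hp => ⟨hp.1, trivial⟩))
  set M' : ℝ := max M 1 with hM'def
  have hM'1 : (1:ℝ) ≤ M' := le_max_right _ _
  have hM'0 : (0:ℝ) < M' := by linarith
  have hMM' : M ≤ M' := le_max_left _ _
  set B : ℝ := M'^2 + M'^2/r₀^2 with hBdef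
  have hB0 : 0 < B := by positivity
  set C : ℝ := 1 + 4*M'^2 + 2*B with hCdef
  have hC0 : 0 < C := by positivity
  set K : ℝ := C/(2*r₀) with hKdef
  have hK0 : 0 < K := by positivity
  clear_value M' B C K
  refine ⟨ε/K, by positivity, ?_⟩
  intro r hr hrδ θ hθ
  obtain ⟨hrl, hr1⟩ := hr
  have hr0 : 0 < r := lt_of_lt_of_le hr₀ hrl
  have hrIcc : r ∈ Icc r₀ 1 := ⟨hrl, le_of_lt hr1⟩
  have hpair := hM (r, θ) ⟨hrIcc, hθ⟩
  set a := uθ r θ with hadef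
  set b := ur r θ with hbdef
  have hMa : |a| ≤ M' := by
    calc |a| ≤ ‖(b, a)‖ := by simpa using norm_snd_le (b, a)
      _ ≤ M := hpair
      _ ≤ M' := hMM'
  have hMb : |b| ≤ M' := by
    calc |b| ≤ ‖(b, a)‖ := by simpa using norm_fst_le (b, a)
      _ ≤ M := hpair
      _ ≤ M' := hMM'
  have ha2 : a^2 ≤ M'^2 := by
    rw [← sq_abs]; exact pow_le_pow_left₀ (abs_nonneg a) hMa 2
  have hb2 : b^2 ≤ M'^2 := by
    rw [← sq_abs]; exact pow_le_pow_left₀ (abs_nonneg b) hMb 2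
  set x := (1 - r^2)^2/4 * (b^2 + a^2/r^2) with hxdef
  have hx0 : 0 ≤ x := by positivity
  have hQB : b^2 + a^2/r^2 ≤ B := by
    have h1 : a^2/r^2 ≤ M'^2/r₀^2 :=
      div_le_div₀ (by positivity) ha2 (by positivity) (pow_le_pow_left₀ hr₀.le hrl 2)
    linarith
  have hxle : x ≤ (1-r)^2 * B := by
    have hQ0 : 0 ≤ b^2 + a^2/r^2 := by positivity
    calc x ≤ (1-r)^2 * (b^2 + a^2/r^2) :=
          mul_le_mul_of_nonneg_right (aux_quarter hr0 hr1) hQ0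
      _ ≤ (1-r)^2 * B := mul_le_mul_of_nonneg_left hQB (sq_nonneg _)
  set w := W r θ with hwdef
  have hwx : w = Real.sqrt (1 + x) := hW r θ
  clear_value a b x w
  have hw1 : 1 ≤ w := by rw [hwx]; exact aux_sqrt_lb hx0
  have hw0 : 0 < w := lt_of_lt_of_le one_pos hw1
  have hwle : w - 1 ≤ (1-r)^2 * B / 2 := by
    have h := aux_sqrt_ub hx0
    rw [← hwx] at h
    linarith
  have h1r : 0 < 1 - r := by linarith
  have hrne : r ≠ 0 := ne_of_gt hr0
  have hwne : w ≠ 0 := ne_of_gt hw0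
  have hr2 : r^2 < 1 := aux_sq_lt_one hr0 hr1
  have hrm1 : r - 1 ≠ 0 := by intro h; rw [sub_eq_zero] at h; exact absurd h (ne_of_lt hr1)
  have hr21 : r^2 - 1 ≠ 0 := by intro h; rw [sub_eq_zero] at h; exact absurd h (ne_of_lt hr2)
  have hE : (1 / (2 * w)) * (4 * r / (r ^ 2 - 1) + (r ^ 2 - 1) * a ^ 2 / r)
          - 1 / (r - 1) - 1 / 2
      = (4*r^2 + (r^2-1)^2*a^2 - w*r*(r+1)^2) / (2*w*r*(r^2-1)) := by
    field_simp
    ring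
  have hA : (1+r)^2 * a^2 ≤ 4 * M'^2 :=
    mul_le_mul (aux_one_plus_sq hr0 hr1) ha2 (sq_nonneg a) (by norm_num)
  have hPabs : |4*r^2 + (r^2-1)^2*a^2 - w*r*(r+1)^2| ≤ (1-r)^2 * C := by
    have h := auxP r a w B (4*M'^2) hr0 hr1 hw1 hwle hB0.le hA
    calc |4*r^2 + (r^2-1)^2*a^2 - w*r*(r+1)^2| ≤ (1-r)^2 * (1 + 4*M'^2 + 2*B) := h
      _ = (1-r)^2 * C := by rw [hCdef]
  rw [hE, abs_div]
  have hneg : 2*w*r*(r^2-1) < 0 :=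
    mul_neg_of_pos_of_neg (mul_pos (mul_pos two_pos hw0) hr0) (by linarith)
  have hDabs : |2*w*r*(r^2-1)| = 2*w*r*(1-r^2) := by
    rw [abs_of_neg hneg]; ring
  rw [hDabs]
  have hden_lb : 2*r₀*(1-r) ≤ 2*w*r*(1-r^2) := auxden r₀ r w hr₀ hrl hr1 hw1
  have h1rδ : 1 - r < ε / K := by linarith
  calc |4*r^2 + (r^2-1)^2*a^2 - w*r*(r+1)^2| / (2*w*r*(1-r^2))
      ≤ ((1-r)^2*C) / (2*r₀*(1-r)) :=
        div_le_div₀ (by positivity) hPabs (by positivity) hden_lb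
    _ = (1-r) * K := by rw [hKdef]; field_simp
    _ < (ε/K) * K := mul_lt_mul_of_pos_right h1rδ hK0
    _ = ε := div_mul_cancel₀ _ (ne_of_gt hK0)
end

section
/- Let 0 < r₀ < 1, let u : [r₀, 1] × ℝ → ℝ be continuously differentiable and 2π-periodic in its second variable θ, let a ∈ ℝ, and define W(r,θ) := √(1 + ((1−r²)²/4)·(u_r(r,θ)² + u_θ(r,θ)²/r²)). Then the limit as r → 1⁻ of ∫₀^{2π} (1/(2W(r,θ)))·[ ( 4r/(r²−1) + (r²−1)·u_θ(r,θ)²/r )·cos(a−θ) + (r²+1)·u_r(r,θ)·u_θ(r,θ)·sin(a−θ) ] dθ exists and equals ∫₀^{2π} u_r(1,θ)·u_θ(1,θ)·sin(a−θ) dθ. -/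
/-!
Since `W → 1` as `r → 1`, the only divergent part of the flux density is
`2r/(r²−1) · cos(a−θ)`, and it integrates to zero over a period. Subtracting it, and writing
`1/W − 1 = (1 − W²)/(W(1 + W))` to absorb the remaining pole into the factor `(1 − r²)²` of
`W² − 1`, leaves a density that is continuous up to `r = 1`, where it equals
`u_r u_θ sin(a−θ)`. The limit is then continuity of a parametric integral.
-/

open Set Filter MeasureTheory intervalIntegral

theorem continuousOn_parametric_intervalIntegral_of_continuousOn
    {X E : Type*} [TopologicalSpace X] [NormedAddCommGroup E] [NormedSpace ℝ E]
    {μ : Measure ℝ} [IsLocallyFiniteMeasure μ] [NullSingletonClass μ]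
    {f : X → ℝ → E} {s : Set X} (hf : ContinuousOn (Function.uncurry f) (s ×ˢ univ))
    (a b : ℝ) :
    ContinuousOn (fun x => ∫ t in a..b, f x t ∂μ) s := by
  rw [continuousOn_iff_continuous_domRestrict]
  refine continuous_parametric_intervalIntegral_of_continuous' (f := fun x : s => f x) ?_ a b
  exact hf.comp_continuous (continuous_subtype_val.prodMap continuous_id)
    fun p => ⟨p.1.2, mem_univ _⟩

theorem integral_add_mul_cos_sub {f : ℝ → ℝ}
    (hf : IntervalIntegrable f volume 0 (2 * Real.pi)) (a c : ℝ) :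
    ∫ θ in (0:ℝ)..(2 * Real.pi), (f θ + c * Real.cos (a - θ)) =
      ∫ θ in (0:ℝ)..(2 * Real.pi), f θ := by
  have hcos : ∫ θ in (0:ℝ)..(2 * Real.pi), Real.cos (a - θ) = 0 := by
    simp [integral_comp_sub_left (fun x => Real.cos x) a, integral_cos]
  rw [integral_add hf (Continuous.intervalIntegrable (by fun_prop) _ _),
    intervalIntegral.integral_const_mul, hcos, mul_zero, add_zero]

/-- The factor `W` of a vertical graph in `ℍ² × ℝ` over the Poincaré disc, in terms of the
radius `r` and the partial derivatives `A = u_r`, `B = u_θ`. -/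
noncomputable def graphAreaFactor (r A B : ℝ) : ℝ :=
  √(1 + ((1 - r ^ 2) ^ 2 / 4) * (A ^ 2 + B ^ 2 / r ^ 2))

theorem graphAreaFactor_sq (r A B : ℝ) :
    graphAreaFactor r A B ^ 2 = 1 + ((1 - r ^ 2) ^ 2 / 4) * (A ^ 2 + B ^ 2 / r ^ 2) :=
  Real.sq_sqrt (by positivity)

theorem one_le_graphAreaFactor (r A B : ℝ) : 1 ≤ graphAreaFactor r A B :=
  Real.one_le_sqrt.mpr (le_add_of_nonneg_right (by positivity))

theorem graphAreaFactor_pos (r A B : ℝ) : 0 < graphAreaFactor r A B :=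
  one_pos.trans_le (one_le_graphAreaFactor r A B)

@[simp]
theorem graphAreaFactor_one (A B : ℝ) : graphAreaFactor 1 A B = 1 := by
  simp [graphAreaFactor]

theorem ContinuousOn.graphAreaFactor {X : Type*} [TopologicalSpace X] {s : Set X}
    {r A B : X → ℝ} (hr : ContinuousOn r s) (hA : ContinuousOn A s) (hB : ContinuousOn B s)
    (hr₀ : ∀ x ∈ s, r x ≠ 0) :
    ContinuousOn (fun x => graphAreaFactor (r x) (A x) (B x)) s :=
  (continuousOn_const.add ((by fun_prop : ContinuousOn (fun x => (1 - r x ^ 2) ^ 2 / 4) s).mul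
    ((hA.pow 2).add ((hB.pow 2).div (hr.pow 2) fun x hx => pow_ne_zero 2 (hr₀ x hx))))).sqrt

/-- The flux density minus its divergent part `2r/(r²−1) · cos(a−θ)`. -/
noncomputable def regularFluxDensity (a r A B θ : ℝ) : ℝ :=
  -(r * (r ^ 2 - 1) / 2) * (A ^ 2 + B ^ 2 / r ^ 2) * Real.cos (a - θ) /
      (graphAreaFactor r A B * (1 + graphAreaFactor r A B))
    + ((r ^ 2 - 1) * B ^ 2 * Real.cos (a - θ) / r + (r ^ 2 + 1) * A * B * Real.sin (a - θ)) /
      (2 * graphAreaFactor r A B)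

theorem regularFluxDensity_one (a A B θ : ℝ) :
    regularFluxDensity a 1 A B θ = A * B * Real.sin (a - θ) := by
  simp only [regularFluxDensity, graphAreaFactor_one]
  ring

theorem fluxDensity_eq_regularFluxDensity_add {r : ℝ} (a A B θ : ℝ) (hr : r ≠ 0)
    (hr1 : r ^ 2 - 1 ≠ 0) :
    (1 / (2 * graphAreaFactor r A B)) *
        ((4 * r / (r ^ 2 - 1) + (r ^ 2 - 1) * B ^ 2 / r) * Real.cos (a - θ)
          + (r ^ 2 + 1) * A * B * Real.sin (a - θ)) =
      regularFluxDensity a r A B θ + 2 * r / (r ^ 2 - 1) * Real.cos (a - θ) := by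
  unfold regularFluxDensity
  have hw := graphAreaFactor_pos r A B
  have hw2 := graphAreaFactor_sq r A B
  generalize graphAreaFactor r A B = w at *
  generalize A ^ 2 + B ^ 2 / r ^ 2 = t at *
  have hpole : -(r * (r ^ 2 - 1) / 2) * t / (w * (1 + w)) =
      2 * r / (r ^ 2 - 1) * (1 / w - 1) := by
    have : 1 + w ≠ 0 := by positivity
    field_simp
    linear_combination 4 * hw2
  rw [mul_div_right_comm _ (Real.cos _), hpole]
  field_simp
  ring

theorem ContinuousOn.regularFluxDensity {X : Type*} [TopologicalSpace X] {s : Set X} (a : ℝ)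
    {r A B θ : X → ℝ} (hr : ContinuousOn r s) (hA : ContinuousOn A s) (hB : ContinuousOn B s)
    (hθ : ContinuousOn θ s) (hr₀ : ∀ x ∈ s, r x ≠ 0) :
    ContinuousOn (fun x => regularFluxDensity a (r x) (A x) (B x) (θ x)) s := by
  have hW := hr.graphAreaFactor hA hB hr₀
  have hr₀' : ∀ x ∈ s, r x ^ 2 ≠ 0 := fun x hx => pow_ne_zero 2 (hr₀ x hx)
  unfold _root_.regularFluxDensity
  refine ContinuousOn.add ?_ ?_
  · exact ContinuousOn.div (by fun_prop (disch := assumption)) (hW.mul (continuousOn_const.add hW))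
      fun x _ => (mul_pos (graphAreaFactor_pos _ _ _)
        (add_pos one_pos (graphAreaFactor_pos _ _ _))).ne'
  · exact ContinuousOn.div (by fun_prop (disch := assumption)) (continuousOn_const.mul hW)
      fun x _ => (mul_pos two_pos (graphAreaFactor_pos _ _ _)).ne'

theorem dilation_flux_boundary_limit_general
    (r₀ : ℝ) (hr₀ : 0 < r₀) (hr₀1 : r₀ < 1) (a : ℝ)
    (ur uθ W : ℝ → ℝ → ℝ)
    (hcont : ContinuousOn (fun p : ℝ × ℝ => (ur p.1 p.2, uθ p.1 p.2))
      (Set.Icc r₀ 1 ×ˢ (Set.univ : Set ℝ)))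
    (hW : ∀ r θ, W r θ =
      Real.sqrt (1 + ((1 - r ^ 2) ^ 2 / 4) * ((ur r θ) ^ 2 + (uθ r θ) ^ 2 / r ^ 2))) :
    Tendsto (fun r => ∫ θ in (0:ℝ)..(2 * Real.pi),
        (1 / (2 * W r θ)) *
          ((4 * r / (r ^ 2 - 1) + (r ^ 2 - 1) * (uθ r θ) ^ 2 / r) * Real.cos (a - θ)
            + (r ^ 2 + 1) * ur r θ * uθ r θ * Real.sin (a - θ)))
      (nhdsWithin 1 (Set.Ico r₀ 1))
      (nhds (∫ θ in (0:ℝ)..(2 * Real.pi),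
        ur 1 θ * uθ 1 θ * Real.sin (a - θ))) := by
  obtain rfl : W = fun r θ => graphAreaFactor r (ur r θ) (uθ r θ) := funext₂ hW
  have hG : ContinuousOn
      (Function.uncurry fun r θ => regularFluxDensity a r (ur r θ) (uθ r θ) θ)
      (Icc r₀ 1 ×ˢ univ) :=
    continuousOn_fst.regularFluxDensity a (continuous_fst.comp_continuousOn hcont)
      (continuous_snd.comp_continuousOn hcont) continuousOn_snd
      fun p hp => (hr₀.trans_le hp.1.1).ne'
  have hlim := (continuousOn_parametric_intervalIntegral_of_continuousOn
    (μ := volume) hG 0 (2 * Real.pi) 1 ⟨hr₀1.le, le_rfl⟩).tendsto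
  simp only [regularFluxDensity_one] at hlim
  refine (hlim.mono_left (nhdsWithin_mono _ Ico_subset_Icc_self)).congr' ?_
  filter_upwards [self_mem_nhdsWithin] with r hr
  have hr0 : 0 < r := hr₀.trans_le hr.1
  have hr1 : r ^ 2 - 1 ≠ 0 := sub_ne_zero.mpr (pow_lt_one₀ hr0.le hr.2 two_ne_zero).ne
  have hslice : Continuous fun θ => regularFluxDensity a r (ur r θ) (uθ r θ) θ :=
    hG.comp_continuous (Continuous.prodMk_right r) fun _ => ⟨Ico_subset_Icc_self hr, trivial⟩
  rw [← integral_add_mul_cos_sub (hslice.intervalIntegrable _ _) a (2 * r / (r ^ 2 - 1))]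
  exact integral_congr fun θ _ => (fluxDensity_eq_regularFluxDensity_add a _ _ θ hr0.ne' hr1).symm

/-- Boundary limit of the horizontal-dilation flux integral: as `r → 1⁻`, the
flux of the Killing field `H_a` across the circle `|z| = r` converges to
`∫₀^{2π} u_r(1,θ) u_θ(1,θ) sin(a−θ) dθ`. -/
theorem dilation_flux_boundary_limit
    (r₀ : ℝ) (hr₀ : 0 < r₀) (hr₀1 : r₀ < 1) (a : ℝ)
    (u ur uθ W : ℝ → ℝ → ℝ)
    (hper : ∀ r θ, u r (θ + 2 * Real.pi) = u r θ)
    (hur : ∀ r ∈ Set.Icc r₀ 1, ∀ θ : ℝ,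
      HasDerivWithinAt (fun s => u s θ) (ur r θ) (Set.Icc r₀ 1) r)
    (huθ : ∀ r ∈ Set.Icc r₀ 1, ∀ θ : ℝ, HasDerivAt (fun φ => u r φ) (uθ r θ) θ)
    (hcont : ContinuousOn (fun p : ℝ × ℝ => (ur p.1 p.2, uθ p.1 p.2))
      (Set.Icc r₀ 1 ×ˢ (Set.univ : Set ℝ)))
    (hW : ∀ r θ, W r θ =
      Real.sqrt (1 + ((1 - r ^ 2) ^ 2 / 4) * ((ur r θ) ^ 2 + (uθ r θ) ^ 2 / r ^ 2))) :
    Tendsto (fun r => ∫ θ in (0:ℝ)..(2 * Real.pi),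
        (1 / (2 * W r θ)) *
          ((4 * r / (r ^ 2 - 1) + (r ^ 2 - 1) * (uθ r θ) ^ 2 / r) * Real.cos (a - θ)
            + (r ^ 2 + 1) * ur r θ * uθ r θ * Real.sin (a - θ)))
      (nhdsWithin 1 (Set.Ico r₀ 1))
      (nhds (∫ θ in (0:ℝ)..(2 * Real.pi),
        ur 1 θ * uθ 1 θ * Real.sin (a - θ))) :=
  dilation_flux_boundary_limit_general r₀ hr₀ hr₀1 a ur uθ W hcont hW
end

section
/- For every real number d > 1, the improper integral ∫₀^{arcsin(1/d)} d / √(1 − d²·sin² t) dt converges and is strictly greater than π/2. -/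
/-!
The integrand `d / √(1 - d² sin² t)` equals `g t / cos t`, where
`g t = d cos t / √(1 - d² sin² t)` is the derivative of `arcsin (d sin t)`; the latter rises
from `0` to `arcsin 1 = π / 2` on `[0, θ]`, `θ = arcsin (1 / d)`, so `∫ g = π / 2`.
On `(0, θ)` we have `0 < cos θ ≤ cos t < 1`, hence `g < g / cos t ≤ g / cos θ`: the upper bound
gives convergence and the strict lower bound gives the integral `> π / 2`.
-/

open Real Set MeasureTheory

theorem setIntegral_lt_setIntegral_of_forall_lt {X : Type*} [MeasurableSpace X] {μ : Measure X}
    {s : Set X} {f g : X → ℝ} (hs : MeasurableSet s) (hμ : μ s ≠ 0)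
    (hf : IntegrableOn f s μ) (hg : IntegrableOn g s μ) (hlt : ∀ x ∈ s, f x < g x) :
    ∫ x in s, f x ∂μ < ∫ x in s, g x ∂μ := by
  have hpos : 0 < ∫ x in s, (g x - f x) ∂μ := by
    rw [setIntegral_pos_iff_support_of_nonneg_ae (f := fun x => g x - f x) _ (hg.sub hf)]
    · have hsupp : Function.support (fun x => g x - f x) ∩ s = s :=
        inter_eq_self_of_subset_right fun x hx => (sub_pos.2 (hlt x hx)).ne'
      rw [hsupp]
      exact pos_iff_ne_zero.2 hμ
    · exact (ae_restrict_iff' hs).2 (ae_of_all _ fun x hx => (sub_pos.2 (hlt x hx)).le)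
  rwa [integral_sub hg hf, sub_pos] at hpos

section

variable {d t : ℝ}

theorem hasDerivAt_arcsin_mul_sin (h₀ : -1 < d * sin t) (h₁ : d * sin t < 1) :
    HasDerivAt (fun t => arcsin (d * sin t)) (d * cos t / √(1 - d ^ 2 * sin t ^ 2)) t := by
  have h := (hasDerivAt_arcsin h₀.ne' h₁.ne).comp t ((hasDerivAt_sin t).const_mul d)
  rw [mul_pow, ← mul_div_right_comm, one_mul] at h
  exact h

theorem mul_sin_lt_one_of_lt_arcsin_inv (hd : 0 < d) (ht₀ : -(π / 2) ≤ t)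
    (ht : t < arcsin (1 / d)) : d * sin t < 1 := by
  have hsin : sin t < 1 / d :=
    (lt_arcsin_iff_sin_lt' ⟨ht₀, ht.trans_le (arcsin_le_pi_div_two _)⟩).1 ht
  rwa [lt_div_iff₀ hd, mul_comm] at hsin

theorem sin_pos_of_mem_Ioo_arcsin {x : ℝ} (ht : t ∈ Ioo 0 (arcsin x)) : 0 < sin t :=
  sin_pos_of_pos_of_lt_pi ht.1 (by linarith [ht.2, arcsin_le_pi_div_two x, pi_pos])

theorem cos_pos_of_mem_Ioo_arcsin {x : ℝ} (ht : t ∈ Ioo 0 (arcsin x)) : 0 < cos t :=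
  cos_pos_of_mem_Ioo ⟨by linarith [ht.1, pi_pos], ht.2.trans_le (arcsin_le_pi_div_two x)⟩

theorem hasDerivAt_arcsin_mul_sin_of_mem_Ioo (hd : 0 < d)
    (ht : t ∈ Ioo 0 (arcsin (1 / d))) :
    HasDerivAt (fun t => arcsin (d * sin t)) (d * cos t / √(1 - d ^ 2 * sin t ^ 2)) t :=
  hasDerivAt_arcsin_mul_sin (by nlinarith [sin_pos_of_mem_Ioo_arcsin ht])
    (mul_sin_lt_one_of_lt_arcsin_inv hd (by linarith [ht.1, pi_pos]) ht.2)

theorem mul_cos_div_sqrt_pos_of_mem_Ioo (hd : 0 < d) (ht : t ∈ Ioo 0 (arcsin (1 / d))) :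
    0 < d * cos t / √(1 - d ^ 2 * sin t ^ 2) := by
  have hsin := sin_pos_of_mem_Ioo_arcsin ht
  have hlt := mul_sin_lt_one_of_lt_arcsin_inv hd (by linarith [ht.1, pi_pos]) ht.2
  have hcos := cos_pos_of_mem_Ioo_arcsin ht
  have : 0 < 1 - d ^ 2 * sin t ^ 2 := by nlinarith [mul_pos hd hsin]
  positivity

theorem integrableOn_mul_cos_div_sqrt (hd : 0 < d) :
    IntegrableOn (fun t => d * cos t / √(1 - d ^ 2 * sin t ^ 2)) (Ioo 0 (arcsin (1 / d))) := by
  refine (intervalIntegral.integrableOn_deriv_of_nonneg (g := fun t => arcsin (d * sin t))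
    (by fun_prop) (fun t ht => hasDerivAt_arcsin_mul_sin_of_mem_Ioo hd ht)
    (fun t ht => (mul_cos_div_sqrt_pos_of_mem_Ioo hd ht).le)).mono_set Ioo_subset_Ioc_self

theorem integral_mul_cos_div_sqrt (hd : 1 ≤ d) :
    ∫ t in Ioo 0 (arcsin (1 / d)), d * cos t / √(1 - d ^ 2 * sin t ^ 2) = π / 2 := by
  have hd₀ : 0 < d := by linarith
  have hθ : 0 ≤ arcsin (1 / d) := arcsin_nonneg.2 (by positivity)
  rw [← integral_Ioc_eq_integral_Ioo, ← intervalIntegral.integral_of_le hθ,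
    intervalIntegral.integral_eq_sub_of_hasDerivAt_of_le hθ (by fun_prop)
      (fun t ht => hasDerivAt_arcsin_mul_sin_of_mem_Ioo hd₀ ht)
      ((intervalIntegrable_iff_integrableOn_Ioo_of_le hθ).2 (integrableOn_mul_cos_div_sqrt hd₀)),
    sin_arcsin (by linarith [one_div_pos.2 hd₀]) ((div_le_one hd₀).2 hd)]
  simp [hd₀.ne']

theorem div_sqrt_eq_mul_cos_div_sqrt_div_cos (h : cos t ≠ 0) :
    d / √(1 - d ^ 2 * sin t ^ 2) = d * cos t / √(1 - d ^ 2 * sin t ^ 2) / cos t := by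
  field_simp

theorem mul_cos_div_sqrt_lt_div_sqrt (hd : 0 < d) (ht : t ∈ Ioo 0 (arcsin (1 / d))) :
    d * cos t / √(1 - d ^ 2 * sin t ^ 2) < d / √(1 - d ^ 2 * sin t ^ 2) := by
  have hcos₀ := cos_pos_of_mem_Ioo_arcsin ht
  have hcos₁ : cos t < 1 := by
    simpa using cos_lt_cos_of_nonneg_of_le_pi le_rfl
      (by linarith [ht.2, arcsin_le_pi_div_two (1 / d), pi_pos]) ht.1
  rw [div_sqrt_eq_mul_cos_div_sqrt_div_cos hcos₀.ne', lt_div_iff₀ hcos₀]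
  exact mul_lt_of_lt_one_right (mul_cos_div_sqrt_pos_of_mem_Ioo hd ht) hcos₁

theorem integrableOn_div_sqrt (hd : 1 < d) :
    IntegrableOn (fun t => d / √(1 - d ^ 2 * sin t ^ 2)) (Ioo 0 (arcsin (1 / d))) := by
  have hd₀ : 0 < d := by linarith
  have hcosθ : 0 < cos (arcsin (1 / d)) :=
    cos_pos_of_mem_Ioo ⟨by linarith [arcsin_pos.2 (one_div_pos.2 hd₀), pi_pos],
      arcsin_lt_pi_div_two.2 ((div_lt_one hd₀).2 hd)⟩
  refine ((integrableOn_mul_cos_div_sqrt hd₀).div_const (cos (arcsin (1 / d)))).mono'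
    (by fun_prop : Measurable _).aestronglyMeasurable
    ((ae_restrict_iff' measurableSet_Ioo).2 (ae_of_all _ fun t ht => ?_))
  rw [norm_of_nonneg (by positivity),
    div_sqrt_eq_mul_cos_div_sqrt_div_cos (cos_pos_of_mem_Ioo_arcsin ht).ne']
  exact div_le_div_of_nonneg_left (mul_cos_div_sqrt_pos_of_mem_Ioo hd₀ ht).le hcosθ
    (cos_le_cos_of_nonneg_of_le_pi ht.1.le (by linarith [arcsin_le_pi_div_two (1 / d), pi_pos])
      ht.2.le)

end

/-- The height of the tall rectangle exceeds π: for every `d > 1`, the improper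
integral `∫₀^{arcsin(1/d)} d/√(1 − d² sin² t) dt` converges and is `> π/2`. -/
theorem tall_rectangle_half_height_gt_pi_div_two (d : ℝ) (hd : 1 < d) :
    IntegrableOn (fun t => d / Real.sqrt (1 - d ^ 2 * Real.sin t ^ 2))
      (Set.Ioo 0 (Real.arcsin (1 / d))) volume ∧
    Real.pi / 2 < ∫ t in Set.Ioo 0 (Real.arcsin (1 / d)),
      d / Real.sqrt (1 - d ^ 2 * Real.sin t ^ 2) := by
  have hd₀ : 0 < d := by linarith
  have hθ : 0 < arcsin (1 / d) := arcsin_pos.2 (one_div_pos.2 hd₀)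
  refine ⟨integrableOn_div_sqrt hd, ?_⟩
  calc π / 2 = ∫ t in Ioo 0 (arcsin (1 / d)), d * cos t / √(1 - d ^ 2 * sin t ^ 2) :=
        (integral_mul_cos_div_sqrt hd.le).symm
    _ < ∫ t in Ioo 0 (arcsin (1 / d)), d / √(1 - d ^ 2 * sin t ^ 2) :=
        setIntegral_lt_setIntegral_of_forall_lt measurableSet_Ioo (by simpa using hθ)
          (integrableOn_mul_cos_div_sqrt hd₀) (integrableOn_div_sqrt hd)
          fun t ht => mul_cos_div_sqrt_lt_div_sqrt hd₀ ht
end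

section
/- Let d > 1 and set θ₀ := arcsin(1/d) ∈ (0, π/2). Define, for m ≥ 0 and Φ ∈ [0, θ₀], E(Φ|m) := ∫₀^Φ √(1 − m sin² s) ds and F(Φ|m) := ∫₀^Φ ds/√(1 − m sin² s), and set λ₀ := ∫₀^{θ₀} d/√(1 − d² sin² t) dt. For r ∈ (0,1) and θ ∈ (0, θ₀) define A₁(r,θ) := −2·log r · ( 2 cot θ·√(1 − d² sin² θ) + 2E(θ|d²) − 2F(θ|d²) + 2F(θ₀|d²) − 2E(θ₀|d²) ), A₂(r,θ) := −4·log r·cot θ, and A₃(θ) := 2λ₀·log( cot²(θ/2) ). Then there exist a natural number n ≥ 1 and an angle θ ∈ (0, θ₀) such that, with r := tanⁿ(θ/2) ∈ (0,1), one has A₁(r,θ) > A₂(r,θ) + A₃(θ). -/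
open Set intervalIntegral Real MeasureTheory Filter Topology

/-! Put `t = tan (θ / 2)` and `q s = 1 - d² sin² s`. Since `log r = n log t` and
`log cot² (θ / 2) = -2 log t`, we get `A₁ - A₂ - A₃ = -4 log t · (n B(θ) - λ₀)` with
`B(θ) = cot θ (√(q θ) - 1) + E(θ) - F(θ) + F(θ₀) - E(θ₀)`.
As `θ → 0⁺`, `B(θ) → F(θ₀) - E(θ₀) = ∫₀^θ₀ (1/√q - √q) > 0`; here `F(θ₀)` is a genuine
(improper) integral because `q s ≥ d cos θ₀ (θ₀ - s)`, so the integrand is `O((θ₀ - s)^(-1/2))`.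
Fix `θ` with `B(θ) > 0` and take `n > λ₀ / B(θ)`. -/

theorem mul_sub_le_sin_sq_sub_sin_sq {s θ : ℝ} (hs : 0 ≤ s) (hsθ : s ≤ θ) (hθ : θ ≤ π / 2) :
    sin θ * cos θ * (θ - s) ≤ sin θ ^ 2 - sin s ^ 2 := by
  have hslope : cos θ * (θ - s) ≤ sin θ - sin s := by
    refine (convex_Icc s θ).mul_sub_le_image_sub_of_le_deriv continuous_sin.continuousOn
      differentiable_sin.differentiableOn (fun x hx => ?_) s (left_mem_Icc.2 hsθ) θ
      (right_mem_Icc.2 hsθ) hsθ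
    rw [interior_Icc] at hx
    rw [Real.deriv_sin]
    exact cos_le_cos_of_nonneg_of_le_pi (hs.trans hx.1.le) (by linarith [pi_pos]) hx.2.le
  have hsin_s : 0 ≤ sin s := sin_nonneg_of_nonneg_of_le_pi hs (by linarith [pi_pos])
  have hcos : 0 ≤ cos θ * (θ - s) :=
    mul_nonneg (cos_nonneg_of_mem_Icc ⟨by linarith [pi_pos], hθ⟩) (sub_nonneg.2 hsθ)
  nlinarith

theorem intervalIntegrable_one_div_sqrt_of_mul_sub_le {g : ℝ → ℝ} {a b c : ℝ} (hab : a ≤ b)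
    (hc : 0 < c) (hg : Measurable g) (hlow : ∀ s ∈ Ioo a b, c * (b - s) ≤ g s) :
    IntervalIntegrable (fun s => 1 / √(g s)) volume a b := by
  have hdom : IntervalIntegrable (fun s => c ^ (-(1 / 2) : ℝ) * (b - s) ^ (-(1 / 2) : ℝ))
      volume a b := by
    have h := (intervalIntegrable_rpow' (r := -(1 / 2)) (a := b - a) (b := 0)
      (by norm_num)).comp_sub_left b
    simp only [sub_sub_cancel, sub_zero] at h
    exact h.const_mul _
  rw [intervalIntegrable_iff_integrableOn_Ioo_of_le hab] at hdom ⊢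
  refine hdom.mono' (measurable_const.div hg.sqrt).aestronglyMeasurable ?_
  filter_upwards [ae_restrict_mem measurableSet_Ioo] with s hs
  have hbs : 0 < b - s := sub_pos.2 hs.2
  rw [Real.norm_of_nonneg (by positivity), ← mul_rpow hc.le hbs.le, rpow_neg (by positivity),
    ← sqrt_eq_rpow, ← one_div]
  exact one_div_le_one_div_of_le (by positivity) (sqrt_le_sqrt (hlow s hs))

theorem tendsto_integral_nhdsGT {f : ℝ → ℝ} {a b : ℝ} (hab : a < b)
    (hf : IntervalIntegrable f volume a b) :
    Tendsto (fun x => ∫ t in a..x, f t) (𝓝[>] a) (𝓝 0) := by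
  have h := continuousOn_primitive_interval' hf left_mem_uIcc a left_mem_uIcc
  rw [ContinuousWithinAt, integral_same] at h
  refine h.mono_left (nhdsWithin_le_of_mem (mem_of_superset (Ioo_mem_nhdsGT hab) ?_))
  rw [uIcc_of_le hab.le]
  exact Ioo_subset_Icc_self

theorem tendsto_cot_mul_sqrt_one_sub_mul_sin_sq_sub_one (m : ℝ) :
    Tendsto (fun θ => cot θ * (√(1 - m * sin θ ^ 2) - 1)) (𝓝 0) (𝓝 0) := by
  have hq : ∀ᶠ θ in 𝓝 0, 0 ≤ 1 - m * sin θ ^ 2 :=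
    (continuous_const.sub (continuous_const.mul (continuous_sin.pow 2))).continuousAt.eventually
      (le_mem_nhds (by simp))
  have hcont : Continuous fun θ => -(m * sin θ * cos θ) / (√(1 - m * sin θ ^ 2) + 1) :=
    (by fun_prop : Continuous _).div (by fun_prop) (fun θ => by positivity)
  -- `cot θ (√q - 1) = -m sin θ cos θ / (√q + 1)`, even where `sin θ = 0` and `cot θ = 0`
  refine (hcont.tendsto' 0 0 (by simp)).congr' ?_
  filter_upwards [hq] with θ hθ
  rw [div_eq_iff (by positivity), cot_eq_cos_div_sin]
  rcases eq_or_ne (sin θ) 0 with h0 | h0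
  · simp [h0]
  · field_simp
    linear_combination -cos θ * sq_sqrt hθ

section arcsin

variable {d : ℝ}

theorem mul_cos_arcsin_one_div_mul_sub_le (hd : 1 ≤ d) {s : ℝ} (hs : 0 ≤ s)
    (hsθ : s ≤ arcsin (1 / d)) :
    d * cos (arcsin (1 / d)) * (arcsin (1 / d) - s) ≤ 1 - d ^ 2 * sin s ^ 2 := by
  set θ₀ := arcsin (1 / d)
  have hsin : d * sin θ₀ = 1 := by
    rw [sin_arcsin (by linarith [one_div_pos.2 (zero_lt_one.trans_le hd)])
      ((div_le_one (by linarith)).2 hd)]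
    field_simp
  have h := mul_le_mul_of_nonneg_left
    (mul_sub_le_sin_sq_sub_sin_sq hs hsθ (arcsin_le_pi_div_two _)) (sq_nonneg d)
  linear_combination h + (d * sin θ₀ + 1 - d * cos θ₀ * (θ₀ - s)) * hsin

theorem arcsin_one_div_mem_Ioo (hd : 1 < d) : arcsin (1 / d) ∈ Ioo 0 (π / 2) :=
  ⟨arcsin_pos.2 (one_div_pos.2 (by linarith)),
    arcsin_lt_pi_div_two.2 ((div_lt_one (by linarith)).2 hd)⟩

theorem one_sub_sq_mul_sin_sq_pos (hd : 1 < d) {s : ℝ} (hs : 0 ≤ s) (hsθ : s < arcsin (1 / d)) :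
    0 < 1 - d ^ 2 * sin s ^ 2 := by
  have hcos : 0 < cos (arcsin (1 / d)) :=
    cos_pos_of_mem_Ioo ⟨by linarith [pi_pos], (arcsin_one_div_mem_Ioo hd).2⟩
  have hpos : 0 < d * cos (arcsin (1 / d)) * (arcsin (1 / d) - s) :=
    mul_pos (mul_pos (by linarith) hcos) (sub_pos.2 hsθ)
  exact hpos.trans_le (mul_cos_arcsin_one_div_mul_sub_le hd.le hs hsθ.le)

theorem intervalIntegrable_one_div_sqrt_one_sub_sq_mul_sin_sq (hd : 1 < d) :
    IntervalIntegrable (fun s => 1 / √(1 - d ^ 2 * sin s ^ 2)) volume 0 (arcsin (1 / d)) := by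
  obtain ⟨h0, hπ⟩ := arcsin_one_div_mem_Ioo hd
  exact intervalIntegrable_one_div_sqrt_of_mul_sub_le h0.le
    (mul_pos (by linarith) (cos_pos_of_mem_Ioo ⟨by linarith, hπ⟩)) (by fun_prop)
    fun s hs => mul_cos_arcsin_one_div_mul_sub_le hd.le hs.1.le hs.2.le

theorem integral_sqrt_lt_integral_one_div_sqrt (hd : 1 < d) :
    ∫ s in (0 : ℝ)..arcsin (1 / d), √(1 - d ^ 2 * sin s ^ 2) <
      ∫ s in (0 : ℝ)..arcsin (1 / d), 1 / √(1 - d ^ 2 * sin s ^ 2) := by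
  have hE : IntervalIntegrable (fun s => √(1 - d ^ 2 * sin s ^ 2)) volume 0 (arcsin (1 / d)) :=
    (by fun_prop : Continuous _).intervalIntegrable _ _
  rw [← sub_pos, ← integral_sub (intervalIntegrable_one_div_sqrt_one_sub_sq_mul_sin_sq hd) hE]
  refine intervalIntegral_pos_of_pos_on
    ((intervalIntegrable_one_div_sqrt_one_sub_sq_mul_sin_sq hd).sub hE) (fun s hs => ?_)
    (arcsin_one_div_mem_Ioo hd).1
  have hq := one_sub_sq_mul_sin_sq_pos hd hs.1.le hs.2
  have hq1 : 1 - d ^ 2 * sin s ^ 2 < 1 := by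
    have : 0 < sin s := sin_pos_of_pos_of_lt_pi hs.1
      (hs.2.trans ((arcsin_one_div_mem_Ioo hd).2.trans (by linarith [pi_pos])))
    nlinarith [mul_pos (by positivity : (0 : ℝ) < d ^ 2) (pow_pos this 2)]
  rw [sub_pos, lt_div_iff₀ (sqrt_pos.2 hq), mul_self_sqrt hq.le]
  exact hq1

end arcsin

theorem tan_mem_Ioo_zero_one {x : ℝ} (h0 : 0 < x) (h1 : x < π / 4) : tan x ∈ Ioo 0 1 :=
  ⟨tan_pos_of_pos_of_lt_pi_div_two h0 (by linarith [pi_pos]),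
    tan_pi_div_four ▸ tan_lt_tan_of_nonneg_of_lt_pi_div_two h0.le (by linarith [pi_pos]) h1⟩

theorem cot_eq_inv_tan (x : ℝ) : cot x = (tan x)⁻¹ := by
  rw [cot_eq_cos_div_sin, tan_eq_sin_div_cos, inv_div]

/-- The decisive area comparison in the proof of Lemma A.1: for suitable `n` and
small `θ`, with `r = tanⁿ(θ/2)`, the piece `Σ₁` of the tall rectangle has
strictly larger area than the comparison surface `D₁ ∪ B₁`, so the pair of tall
rectangles is not area-minimizing. -/
theorem tall_rectangles_not_area_minimizing (d : ℝ) (hd : 1 < d) :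
    let θ₀ : ℝ := Real.arcsin (1 / d)
    let E : ℝ → ℝ → ℝ := fun Φ m => ∫ s in (0:ℝ)..Φ, Real.sqrt (1 - m * Real.sin s ^ 2)
    let F : ℝ → ℝ → ℝ := fun Φ m => ∫ s in (0:ℝ)..Φ, 1 / Real.sqrt (1 - m * Real.sin s ^ 2)
    let lam₀ : ℝ := ∫ t in (0:ℝ)..θ₀, d / Real.sqrt (1 - d ^ 2 * Real.sin t ^ 2)
    let A₁ : ℝ → ℝ → ℝ := fun r θ => -2 * Real.log r *
      (2 * Real.cot θ * Real.sqrt (1 - d ^ 2 * Real.sin θ ^ 2)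
        + 2 * E θ (d ^ 2) - 2 * F θ (d ^ 2)
        + 2 * F θ₀ (d ^ 2) - 2 * E θ₀ (d ^ 2))
    let A₂ : ℝ → ℝ → ℝ := fun r θ => -4 * Real.log r * Real.cot θ
    let A₃ : ℝ → ℝ := fun θ => 2 * lam₀ * Real.log (Real.cot (θ / 2) ^ 2)
    ∃ n : ℕ, 1 ≤ n ∧ ∃ θ ∈ Set.Ioo 0 θ₀,
      Real.tan (θ / 2) ^ n ∈ Set.Ioo (0:ℝ) 1 ∧
      A₂ (Real.tan (θ / 2) ^ n) θ + A₃ θ < A₁ (Real.tan (θ / 2) ^ n) θ := by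
  intro θ₀ E F lam₀ A₁ A₂ A₃
  obtain ⟨hθ₀, hθ₀π⟩ := arcsin_one_div_mem_Ioo hd
  set K := F θ₀ (d ^ 2) - E θ₀ (d ^ 2)
  have hK : 0 < K := sub_pos.2 (integral_sqrt_lt_integral_one_div_sqrt hd)
  set B : ℝ → ℝ := fun θ =>
    cot θ * (√(1 - d ^ 2 * sin θ ^ 2) - 1) + (E θ (d ^ 2) - F θ (d ^ 2)) + K
  have hB : Tendsto B (𝓝[>] 0) (𝓝 K) := by
    have hE := tendsto_integral_nhdsGT hθ₀
      ((by fun_prop : Continuous fun s => √(1 - d ^ 2 * sin s ^ 2)).intervalIntegrable 0 θ₀)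
    have hF :=
      tendsto_integral_nhdsGT hθ₀ (intervalIntegrable_one_div_sqrt_one_sub_sq_mul_sin_sq hd)
    have h := (((tendsto_cot_mul_sqrt_one_sub_mul_sin_sq_sub_one (d ^ 2)).mono_left
      nhdsWithin_le_nhds).add (hE.sub hF)).add_const K
    rwa [sub_self, zero_add, zero_add] at h
  obtain ⟨θ, hBθ, hθ⟩ := ((hB.eventually (lt_mem_nhds hK)).and (Ioo_mem_nhdsGT hθ₀)).exists
  obtain ⟨n, hn⟩ := exists_nat_gt (lam₀ / B θ)
  obtain ⟨ht0, ht1⟩ := tan_mem_Ioo_zero_one (half_pos hθ.1) (by linarith [hθ.2])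
  refine ⟨n + 1, by omega, θ, hθ, ⟨pow_pos ht0 _, pow_lt_one₀ ht0.le ht1 (by omega)⟩, ?_⟩
  have hnB : lam₀ < (n + 1) * B θ := by
    rw [div_lt_iff₀ hBθ] at hn
    linarith
  have hlog : log (tan (θ / 2)) < 0 := log_neg ht0 ht1
  simp only [A₁, A₂, A₃]
  rw [cot_eq_inv_tan (θ / 2), inv_pow, log_inv, log_pow, log_pow]
  push_cast
  linear_combination 4 * mul_pos (neg_pos.2 hlog) (sub_pos.2 hnB)
end
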